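/- arXiv:1901.02398 — 9 statements merged into one kernel-verified Lean document; each statement's English description precedes it below -/
import Mathlib

section
/- Let R_1,...,R_m : ℝ → ℝ be functions such that for all 1 ≤ a ≤ b ≤ m, the sum R_{ab} := Σ_{j=a}^b R_j attains its minimum exactly on a compact interval [L_{ab}, U_{ab}], is strictly decreasing on (-∞, L_{ab}] and strictly increasing on [U_{ab}, ∞). If {a,...,b} is partitioned into consecutive index intervals {a_1,...,b_1},...,{a_k,...,b_k} with k ≥ 2, then min_{1≤i≤k} L_{a_i b_i} ≤ L_{ab} ≤ max_{1≤i≤k} L_{a_i b_i}, and min_{1≤i≤k} U_{a_i b_i} ≤ U_{ab} ≤ max_{1≤i≤k} U_{a_i b_i}. -/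
/-!
If every summand is strictly decreasing left of its minimizing interval, the sum is strictly
decreasing left of the smallest left endpoint, so no minimizer of the sum lies there. Each summand
is monotone right of its left endpoint, so the sum is monotone right of the largest left endpoint,
whereas it is strictly decreasing up to its own left endpoint. The right endpoints are symmetric,
and splitting `{a, …, b}` into consecutive blocks writes `R_{ab}` as the sum of the `R_{aᵢbᵢ}`.
-/

open Set Finset

/-- That `f` is minimal nowhere outside `[l, u]` follows from the strict monotonicity fields. -/
structure IsMinimizingInterval {α β : Type*} [LinearOrder α] [Preorder β] (f : α → β) (l u : α) :
    Prop where
  le : l ≤ u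
  isMinOn : ∀ q ∈ Set.Icc l u, IsMinOn f univ q
  strictAntiOn : StrictAntiOn f (Iic l)
  strictMonoOn : StrictMonoOn f (Ici u)

section Order

variable {α β : Type*} [LinearOrder α] [Preorder β] {f : α → β} {x y : α}

theorem le_of_isMinOn_of_strictAntiOn_Iic (hx : IsMinOn f univ x) (hy : StrictAntiOn f (Iic y)) :
    y ≤ x := by
  by_contra! hxy
  exact (hy hxy.le Set.self_mem_Iic hxy).not_ge (hx (mem_univ y))

theorem le_of_isMinOn_of_strictMonoOn_Ici (hx : IsMinOn f univ x) (hy : StrictMonoOn f (Ici y)) :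
    x ≤ y := by
  by_contra! hxy
  exact (hy Set.self_mem_Ici hxy.le hxy).not_ge (hx (mem_univ y))

theorem le_of_strictAntiOn_Iic_of_monotoneOn_Ici (hx : StrictAntiOn f (Iic x))
    (hy : MonotoneOn f (Ici y)) : x ≤ y := by
  by_contra! hxy
  exact (hx hxy.le Set.self_mem_Iic hxy).not_ge (hy Set.self_mem_Ici hxy.le hxy.le)

theorem le_of_antitoneOn_Iic_of_strictMonoOn_Ici (hx : AntitoneOn f (Iic x))
    (hy : StrictMonoOn f (Ici y)) : x ≤ y := by
  by_contra! hxy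
  exact (hy Set.self_mem_Ici hxy.le hxy).not_ge (hx hxy.le Set.self_mem_Iic hxy.le)

end Order

namespace IsMinimizingInterval

variable {α β : Type*} [LinearOrder α] [Preorder β] {f : α → β} {l u : α}

theorem isMinOn_left (h : IsMinimizingInterval f l u) : IsMinOn f univ l :=
  h.isMinOn l ⟨le_rfl, h.le⟩

theorem isMinOn_right (h : IsMinimizingInterval f l u) : IsMinOn f univ u :=
  h.isMinOn u ⟨h.le, le_rfl⟩

theorem monotoneOn_Ici (h : IsMinimizingInterval f l u) : MonotoneOn f (Ici l) := by
  intro x hx y _ hxy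
  rcases le_or_gt x u with hxu | hux
  · exact h.isMinOn x ⟨hx, hxu⟩ (mem_univ y)
  · exact h.strictMonoOn.monotoneOn hux.le (hux.le.trans hxy) hxy

theorem antitoneOn_Iic (h : IsMinimizingInterval f l u) : AntitoneOn f (Iic u) := by
  intro x _ y hy hxy
  rcases le_or_gt l y with hly | hyl
  · exact h.isMinOn y ⟨hly, hy⟩ (mem_univ x)
  · exact h.strictAntiOn.antitoneOn (hxy.trans hyl.le) hyl.le hxy

end IsMinimizingInterval

section Sum

variable {ι α β : Type*} [Preorder α] [AddCommMonoid β] {s : Finset ι} {f : ι → α → β}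
  {t : Set α}

theorem Finset.strictMonoOn_sum [PartialOrder β] [IsOrderedCancelAddMonoid β] (hs : s.Nonempty)
    (hf : ∀ i ∈ s, StrictMonoOn (f i) t) : StrictMonoOn (fun x => ∑ i ∈ s, f i x) t :=
  fun _ hx _ hy hxy => sum_lt_sum_of_nonempty hs fun i hi => hf i hi hx hy hxy

theorem Finset.strictAntiOn_sum [PartialOrder β] [IsOrderedCancelAddMonoid β] (hs : s.Nonempty)
    (hf : ∀ i ∈ s, StrictAntiOn (f i) t) : StrictAntiOn (fun x => ∑ i ∈ s, f i x) t :=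
  fun _ hx _ hy hxy => sum_lt_sum_of_nonempty hs fun i hi => hf i hi hx hy hxy

theorem Finset.monotoneOn_sum [Preorder β] [IsOrderedAddMonoid β]
    (hf : ∀ i ∈ s, MonotoneOn (f i) t) : MonotoneOn (fun x => ∑ i ∈ s, f i x) t :=
  fun _ hx _ hy hxy => sum_le_sum fun i hi => hf i hi hx hy hxy

theorem Finset.antitoneOn_sum [Preorder β] [IsOrderedAddMonoid β]
    (hf : ∀ i ∈ s, AntitoneOn (f i) t) : AntitoneOn (fun x => ∑ i ∈ s, f i x) t :=
  fun _ hx _ hy hxy => sum_le_sum fun i hi => hf i hi hx hy hxy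

end Sum

namespace IsMinimizingInterval

variable {ι α β : Type*} [LinearOrder α] [AddCommMonoid β] [PartialOrder β]
  [IsOrderedCancelAddMonoid β] {s : Finset ι} {f : ι → α → β} {l u : ι → α} {l₀ u₀ : α}

theorem left_mem_Icc_inf'_sup' (hs : s.Nonempty)
    (hf : ∀ i ∈ s, IsMinimizingInterval (f i) (l i) (u i))
    (h₀ : IsMinimizingInterval (fun x => ∑ i ∈ s, f i x) l₀ u₀) :
    l₀ ∈ Set.Icc (s.inf' hs l) (s.sup' hs l) := by
  refine ⟨le_of_isMinOn_of_strictAntiOn_Iic h₀.isMinOn_left ?_,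
    le_of_strictAntiOn_Iic_of_monotoneOn_Ici h₀.strictAntiOn ?_⟩
  · exact strictAntiOn_sum hs fun i hi =>
      (hf i hi).strictAntiOn.mono (Iic_subset_Iic.2 (inf'_le l hi))
  · exact monotoneOn_sum fun i hi =>
      (hf i hi).monotoneOn_Ici.mono (Ici_subset_Ici.2 (le_sup' l hi))

theorem right_mem_Icc_inf'_sup' (hs : s.Nonempty)
    (hf : ∀ i ∈ s, IsMinimizingInterval (f i) (l i) (u i))
    (h₀ : IsMinimizingInterval (fun x => ∑ i ∈ s, f i x) l₀ u₀) :
    u₀ ∈ Set.Icc (s.inf' hs u) (s.sup' hs u) := by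
  refine ⟨le_of_antitoneOn_Iic_of_strictMonoOn_Ici ?_ h₀.strictMonoOn,
    le_of_isMinOn_of_strictMonoOn_Ici h₀.isMinOn_right ?_⟩
  · exact antitoneOn_sum fun i hi =>
      (hf i hi).antitoneOn_Iic.mono (Iic_subset_Iic.2 (inf'_le u hi))
  · exact strictMonoOn_sum hs fun i hi =>
      (hf i hi).strictMonoOn.mono (Ici_subset_Ici.2 (le_sup' u hi))

end IsMinimizingInterval

section ConsecutiveBlocks

variable {k : ℕ} {aa bb : ℕ → ℕ}

theorem start_le_block_start (hblock : ∀ i < k, aa i ≤ bb i)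
    (hconsec : ∀ i, i + 1 < k → aa (i + 1) = bb i + 1) : ∀ i < k, aa 0 ≤ aa i := by
  intro i
  induction i with
  | zero => intro _; exact le_rfl
  | succ i ih =>
    intro hi
    have := hblock i (by omega)
    have := hconsec i hi
    have := ih (by omega)
    omega

theorem block_end_le_end (hblock : ∀ i < k, aa i ≤ bb i)
    (hconsec : ∀ i, i + 1 < k → aa (i + 1) = bb i + 1) : ∀ i < k, bb i ≤ bb (k - 1) := by
  intro i hi
  suffices ∀ j, i ≤ j → j < k → bb i ≤ bb j from this (k - 1) (by omega) (by omega)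
  intro j hij
  induction j, hij using Nat.le_induction with
  | base => intro _; exact le_rfl
  | succ j _ ih =>
    intro hj
    have := hblock (j + 1) hj
    have := hconsec j hj
    have := ih (by omega)
    omega

theorem sum_Icc_eq_sum_range_sum_Icc {M : Type*} [AddCommMonoid M] (f : ℕ → M) (hk : 0 < k)
    (hblock : ∀ i < k, aa i ≤ bb i) (hconsec : ∀ i, i + 1 < k → aa (i + 1) = bb i + 1) :
    ∑ j ∈ Finset.Icc (aa 0) (bb (k - 1)), f j =
      ∑ i ∈ range k, ∑ j ∈ Finset.Icc (aa i) (bb i), f j := by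
  suffices ∀ n < k, ∑ j ∈ Finset.Icc (aa 0) (bb n), f j =
      ∑ i ∈ range (n + 1), ∑ j ∈ Finset.Icc (aa i) (bb i), f j by
    simpa [Nat.sub_add_cancel hk] using this (k - 1) (by omega)
  intro n
  induction n with
  | zero => intro _; simp
  | succ n ih =>
    intro hn
    have := start_le_block_start hblock hconsec n (by omega)
    have := hblock n (by omega)
    have := hblock (n + 1) hn
    have hstart := hconsec n hn
    rw [sum_range_succ, ← ih (by omega), hstart, ← Finset.Ico_add_one_right_eq_Icc,
      ← Finset.Ico_add_one_right_eq_Icc, ← Finset.Ico_add_one_right_eq_Icc,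
      sum_Ico_consecutive _ (by omega) (by omega)]

end ConsecutiveBlocks

/-- Cauchy mean value property for minimizing intervals of sums of loss functions. -/
theorem stmt0 (m : ℕ) (R : ℕ → ℝ → ℝ) (L U : ℕ → ℕ → ℝ)
    (hLU : ∀ a b, 1 ≤ a → a ≤ b → b ≤ m → L a b ≤ U a b)
    (hmin : ∀ a b, 1 ≤ a → a ≤ b → b ≤ m → ∀ q : ℝ,
      (∀ r : ℝ, (∑ j ∈ Finset.Icc a b, R j q) ≤ ∑ j ∈ Finset.Icc a b, R j r) ↔
        q ∈ Set.Icc (L a b) (U a b))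
    (hanti : ∀ a b, 1 ≤ a → a ≤ b → b ≤ m →
      StrictAntiOn (fun q => ∑ j ∈ Finset.Icc a b, R j q) (Set.Iic (L a b)))
    (hmono : ∀ a b, 1 ≤ a → a ≤ b → b ≤ m →
      StrictMonoOn (fun q => ∑ j ∈ Finset.Icc a b, R j q) (Set.Ici (U a b)))
    (a b k : ℕ) (ha : 1 ≤ a) (hab : a ≤ b) (hbm : b ≤ m) (hk : 2 ≤ k)
    (aa bb : ℕ → ℕ)
    (haa0 : aa 0 = a) (hbbk : bb (k - 1) = b)
    (hblock : ∀ i < k, aa i ≤ bb i)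
    (hconsec : ∀ i, i + 1 < k → aa (i + 1) = bb i + 1) :
    ((Finset.range k).inf' (Finset.nonempty_range_iff.mpr (by omega))
        fun i => L (aa i) (bb i)) ≤ L a b ∧
    L a b ≤ ((Finset.range k).sup' (Finset.nonempty_range_iff.mpr (by omega))
        fun i => L (aa i) (bb i)) ∧
    ((Finset.range k).inf' (Finset.nonempty_range_iff.mpr (by omega))
        fun i => U (aa i) (bb i)) ≤ U a b ∧
    U a b ≤ ((Finset.range k).sup' (Finset.nonempty_range_iff.mpr (by omega))
        fun i => U (aa i) (bb i)) := by
  subst haa0 hbbk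
  have hinterval : ∀ a b, 1 ≤ a → a ≤ b → b ≤ m → IsMinimizingInterval
      (fun q => ∑ j ∈ Finset.Icc a b, R j q) (L a b) (U a b) := fun a b ha hab hbm =>
    ⟨hLU a b ha hab hbm, fun q hq => isMinOn_univ_iff.2 ((hmin a b ha hab hbm q).2 hq),
      hanti a b ha hab hbm, hmono a b ha hab hbm⟩
  have hblocks : ∀ i ∈ range k, IsMinimizingInterval
      (fun q => ∑ j ∈ Finset.Icc (aa i) (bb i), R j q) (L (aa i) (bb i)) (U (aa i) (bb i)) := by
    intro i hi
    have hik := mem_range.1 hi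
    exact hinterval _ _ (ha.trans (start_le_block_start hblock hconsec i hik))
      (hblock i hik) ((block_end_le_end hblock hconsec i hik).trans hbm)
  have hwhole := hinterval _ _ ha hab hbm
  simp_rw [sum_Icc_eq_sum_range_sum_Icc _ (by omega) hblock hconsec] at hwhole
  obtain ⟨hL₁, hL₂⟩ := hwhole.left_mem_Icc_inf'_sup' _ hblocks
  obtain ⟨hU₁, hU₂⟩ := hwhole.right_mem_Icc_inf'_sup' _ hblocks
  exact ⟨hL₁, hL₂, hU₁, hU₂⟩
end

section
/- Under the standing assumptions on the loss functions R_1,...,R_m (each R_{ab} minimal exactly on [L_{ab},U_{ab}], strictly decreasing before and strictly increasing after), a vector x in the isotone cone ℝ^m_↑ = {x : x_1 ≤ ... ≤ x_m} minimizes T(x) = Σ_j R_j(x_j) over ℝ^m_↑ if and only if for all indices 1 ≤ a ≤ b ≤ m: x_a ≤ U_{ab} whenever x_{a-1} < x_a, and x_b ≥ L_{ab} whenever x_b < x_{b+1} (with the conventions x_0 = -∞, x_{m+1} = +∞). -/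
/-!
If `x` is optimal and `x (a - 1) < x a`, a block `[a, b]` on which `x` is constant can be lowered a
little without leaving the cone; as `R_{ab}` strictly increases beyond `U_{ab}`, optimality forces
`x a ≤ U_{ab}`. For a general block, cut off the first constant run `[a, c]` of `x` and recurse:
`R_{ab} = R_{ac} + R_{c+1,b}` is nonincreasing up to `min U_{ac} U_{c+1,b}`, so this minimum is at
most `U_{ab}`.

Conversely, `T (x ⊓ y) + T (x ⊔ y) = T x + T y`, so it suffices to compare `x` with isotone `z ≤ x`
and `z ≥ x`. For `z ≤ x`, go through the blocks of `x` from left to right, replacing `z` by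
`max z (x a)` on `[a, m]` at the start `a` of each block. Raising an isotone vector on `[a, b]` to a
level `s ≤ U_{ac}` (for all `c ≤ b`) does not increase its cost: peel off the last coordinate and use
that `R_{ac}` is nonincreasing up to `U_{ac}`.

Reversing the indices and negating the values exchanges the conditions on `L` and on `U`, which gives
the remaining halves.
-/

open Finset

namespace IsotonicRegression

theorem le_of_strictMonoOn_Ici_of_antitoneOn_Iic {α β : Type*} [LinearOrder α] [Preorder β]
    {f : α → β} {u q : α} (hmono : StrictMonoOn f (Set.Ici u)) (hanti : AntitoneOn f (Set.Iic q)) :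
    q ≤ u := by
  by_contra! h
  exact (hmono Set.self_mem_Ici h.le h).not_ge (hanti h.le Set.self_mem_Iic h.le)

theorem sum_Icc_add_sum_Icc {M : Type*} [AddCommMonoid M] (f : ℕ → M) {a c b : ℕ}
    (hac : a ≤ c + 1) (hcb : c ≤ b) :
    ∑ j ∈ Icc a c, f j + ∑ j ∈ Icc (c + 1) b, f j = ∑ j ∈ Icc a b, f j := by
  simp only [← Ico_add_one_right_eq_Icc]
  exact sum_Ico_consecutive f hac (by omega)

theorem sum_Icc_reflect {M : Type*} [AddCommMonoid M] (f : ℕ → M) {m a b : ℕ} (hbm : b ≤ m) :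
    ∑ j ∈ Icc a b, f (m + 1 - j) = ∑ j ∈ Icc (m + 1 - b) (m + 1 - a), f j := by
  refine sum_nbij' (fun j => m + 1 - j) (fun j => m + 1 - j) ?_ ?_ ?_ ?_ (fun _ _ => rfl) <;>
    intro j hj <;> simp only [mem_Icc] at hj ⊢ <;> omega

def IsValley (f : ℝ → ℝ) (l u : ℝ) : Prop :=
  (∀ q ∈ Set.Icc l u, ∀ r, f q ≤ f r) ∧ StrictAntiOn f (Set.Iic l) ∧ StrictMonoOn f (Set.Ici u)

namespace IsValley

variable {f : ℝ → ℝ} {l u : ℝ}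

theorem antitoneOn (h : IsValley f l u) : AntitoneOn f (Set.Iic u) := by
  intro r _ s hs hrs
  rcases le_or_gt s l with hsl | hls
  · exact h.2.1.antitoneOn (hrs.trans hsl) hsl hrs
  · exact h.1 s ⟨hls.le, hs⟩ r

theorem comp_neg (h : IsValley f l u) : IsValley (fun q => f (-q)) (-u) (-l) := by
  refine ⟨fun q hq r => h.1 (-q) ⟨?_, ?_⟩ (-r), fun r hr s hs hrs => ?_, fun r hr s hs hrs => ?_⟩
  · linarith [hq.2]
  · linarith [hq.1]
  · exact h.2.2 (le_neg.1 (Set.mem_Iic.1 hs)) (le_neg.1 (Set.mem_Iic.1 hr)) (neg_lt_neg hrs)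
  · exact h.2.1 (neg_le.1 (Set.mem_Ici.1 hs)) (neg_le.1 (Set.mem_Ici.1 hr)) (neg_lt_neg hrs)

end IsValley

noncomputable def blockSum (R : ℕ → ℝ → ℝ) (a b : ℕ) (q : ℝ) : ℝ := ∑ j ∈ Icc a b, R j q

def HasValleys (m : ℕ) (R : ℕ → ℝ → ℝ) (L U : ℕ → ℕ → ℝ) : Prop :=
  ∀ a b, 1 ≤ a → a ≤ b → b ≤ m → IsValley (blockSum R a b) (L a b) (U a b)

noncomputable def cost (R : ℕ → ℝ → ℝ) (m : ℕ) (y : ℕ → ℝ) : ℝ := ∑ j ∈ Icc 1 m, R j (y j)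

def isotoneCone (m : ℕ) : Set (ℕ → ℝ) := {y | MonotoneOn y (Set.Icc 1 m)}

def UpperCondition (m : ℕ) (U : ℕ → ℕ → ℝ) (x : ℕ → ℝ) : Prop :=
  ∀ a b, 1 ≤ a → a ≤ b → b ≤ m → (a = 1 ∨ x (a - 1) < x a) → x a ≤ U a b

def LowerCondition (m : ℕ) (L : ℕ → ℕ → ℝ) (x : ℕ → ℝ) : Prop :=
  ∀ a b, 1 ≤ a → a ≤ b → b ≤ m → (b = m ∨ x b < x (b + 1)) → L a b ≤ x b

def setBlock (x : ℕ → ℝ) (a b : ℕ) (t : ℝ) : ℕ → ℝ := fun j => if j ∈ Icc a b then t else x j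

section

variable {m : ℕ} {R : ℕ → ℝ → ℝ} {L U : ℕ → ℕ → ℝ} {x : ℕ → ℝ}

theorem exists_block_end (hx : MonotoneOn x (Set.Icc 1 m)) {a : ℕ} (ha : 1 ≤ a) (ham : a ≤ m) :
    ∃ c, a ≤ c ∧ c ≤ m ∧ (∀ j ∈ Icc a c, x j = x a) ∧ (c = m ∨ x c < x (c + 1)) := by
  have hsingle : ∀ j ∈ Icc a a, x j = x a := fun j hj => by
    rw [Icc_self, mem_singleton] at hj
    rw [hj]
  rcases ham.eq_or_lt with rfl | ham
  · exact ⟨a, le_rfl, le_rfl, hsingle, Or.inl rfl⟩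
  rcases (hx ⟨ha, ham.le⟩ ⟨by omega, ham⟩ (Nat.le_succ a)).lt_or_eq with hlt | heq
  · exact ⟨a, le_rfl, ham.le, hsingle, Or.inr hlt⟩
  obtain ⟨c, hac, hcm, hconst, hend⟩ := exists_block_end hx (a := a + 1) (by omega) ham
  refine ⟨c, by omega, hcm, fun j hj => ?_, hend⟩
  rcases (mem_Icc.1 hj).1.eq_or_lt with rfl | hlt
  · rfl
  · rw [hconst j (mem_Icc.2 ⟨hlt, (mem_Icc.1 hj).2⟩), heq]
termination_by m - a

theorem monotoneOn_setBlock (hx : MonotoneOn x (Set.Icc 1 m)) {a b : ℕ} {t : ℝ}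
    (hprev : 1 < a → x (a - 1) ≤ t) (hnext : b < m → t ≤ x (b + 1)) :
    MonotoneOn (setBlock x a b t) (Set.Icc 1 m) := by
  intro i hi j hj hij
  obtain ⟨hi1, him⟩ := hi
  obtain ⟨hj1, hjm⟩ := hj
  by_cases hiB : i ∈ Icc a b <;> by_cases hjB : j ∈ Icc a b <;>
    simp only [setBlock, hiB, hjB, if_true, if_false, le_refl] <;> rw [mem_Icc] at hiB hjB
  · exact (hnext (by omega)).trans (hx ⟨by omega, by omega⟩ ⟨hj1, hjm⟩ (by omega))
  · exact (hx ⟨hi1, him⟩ ⟨by omega, by omega⟩ (by omega)).trans (hprev (by omega))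
  · exact hx ⟨hi1, him⟩ ⟨hj1, hjm⟩ hij

theorem cost_setBlock {a b : ℕ} (ha : 1 ≤ a) (hbm : b ≤ m) (t : ℝ) :
    cost R m (setBlock x a b t) = cost R m x + ∑ j ∈ Icc a b, (R j t - R j (x j)) := by
  rw [cost, cost, ← sub_eq_iff_eq_add', ← sum_sub_distrib,
    ← sum_subset (Icc_subset_Icc ha hbm) fun j _ hj => by simp [setBlock, hj]]
  exact sum_congr rfl fun j hj => by simp [setBlock, hj]

namespace HasValleys

variable (hR : HasValleys m R L U)
include hR

theorem le_upper_of_split {a c b : ℕ} (ha : 1 ≤ a) (hac : a ≤ c) (hcb : c < b) (hbm : b ≤ m)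
    {q : ℝ} (h₁ : q ≤ U a c) (h₂ : q ≤ U (c + 1) b) : q ≤ U a b := by
  have hanti : AntitoneOn (blockSum R a b) (Set.Iic q) := by
    have h := ((hR a c ha hac (by omega)).antitoneOn.mono (Set.Iic_subset_Iic.2 h₁)).add
      ((hR (c + 1) b (by omega) hcb hbm).antitoneOn.mono (Set.Iic_subset_Iic.2 h₂))
    convert h using 1
    funext r
    exact (sum_Icc_add_sum_Icc (R · r) (by omega) hcb.le).symm
  exact le_of_strictMonoOn_Ici_of_antitoneOn_Iic (hR a b ha (by omega) hbm).2.2 hanti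

theorem le_upper_of_isMinOn_of_const (hx : MonotoneOn x (Set.Icc 1 m))
    (hopt : IsMinOn (cost R m) (isotoneCone m) x) {a b : ℕ} (ha : 1 ≤ a) (hab : a ≤ b)
    (hbm : b ≤ m) (hconst : ∀ j ∈ Icc a b, x j = x a) (hstart : a = 1 ∨ x (a - 1) < x a) :
    x a ≤ U a b := by
  by_contra! hU
  obtain ⟨t, hUt, htx, hprev⟩ : ∃ t, U a b ≤ t ∧ t < x a ∧ (1 < a → x (a - 1) ≤ t) := by
    rcases hstart with rfl | hlt
    · exact ⟨U 1 b, le_rfl, hU, by omega⟩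
    · exact ⟨max (U a b) (x (a - 1)), le_max_left _ _, max_lt hU hlt, fun _ => le_max_right _ _⟩
  have hnext : b < m → t ≤ x (b + 1) := fun hb =>
    htx.le.trans (hx ⟨ha, by omega⟩ ⟨by omega, hb⟩ (by omega))
  have hle := isMinOn_iff.1 hopt _ (monotoneOn_setBlock hx hprev hnext)
  have hdrop : ∑ j ∈ Icc a b, R j t < ∑ j ∈ Icc a b, R j (x a) :=
    (hR a b ha hab hbm).2.2 hUt (hUt.trans htx.le) htx
  have hblock : ∑ j ∈ Icc a b, R j (x j) = ∑ j ∈ Icc a b, R j (x a) :=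
    sum_congr rfl fun j hj => by rw [hconst j hj]
  rw [cost_setBlock ha hbm, sum_sub_distrib, hblock] at hle
  linarith

theorem le_upper_of_isMinOn (hx : MonotoneOn x (Set.Icc 1 m))
    (hopt : IsMinOn (cost R m) (isotoneCone m) x) {a b : ℕ} (ha : 1 ≤ a) (hab : a ≤ b)
    (hbm : b ≤ m) (hstart : a = 1 ∨ x (a - 1) < x a) : x a ≤ U a b := by
  obtain ⟨c, hac, hcm, hconst, hend⟩ := exists_block_end hx ha (hab.trans hbm)
  by_cases hbc : b ≤ c
  · exact hR.le_upper_of_isMinOn_of_const hx hopt ha hab hbm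
      (fun j hj => hconst j (Icc_subset_Icc_right hbc hj)) hstart
  have hjump : x c < x (c + 1) := hend.resolve_left (by omega)
  have hxc : x c = x a := hconst c (right_mem_Icc.2 hac)
  have h₁ := hR.le_upper_of_isMinOn_of_const hx hopt ha hac (by omega) hconst hstart
  have h₂ := le_upper_of_isMinOn hx hopt (a := c + 1) (b := b) (by omega) (by omega) hbm
    (Or.inr (by rwa [Nat.add_sub_cancel]))
  exact hR.le_upper_of_split ha hac (by omega) hbm h₁ (by linarith)
termination_by b - a

theorem upperCondition_of_isMinOn (hx : MonotoneOn x (Set.Icc 1 m))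
    (hopt : IsMinOn (cost R m) (isotoneCone m) x) : UpperCondition m U x :=
  fun _ _ ha hab hbm => hR.le_upper_of_isMinOn hx hopt ha hab hbm

theorem sum_max_le {y : ℕ → ℝ} {a b : ℕ} (ha : 1 ≤ a) (hbm : b ≤ m)
    (hy : MonotoneOn y (Set.Icc a b)) {s : ℝ} (hs : ∀ c ∈ Icc a b, s ≤ U a c) :
    ∑ j ∈ Icc a b, R j (max (y j) s) ≤ ∑ j ∈ Icc a b, R j (y j) := by
  induction b generalizing s with
  | zero => simp [Icc_eq_empty_of_lt (show 0 < a by omega)]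
  | succ b ih =>
    by_cases hab : a ≤ b + 1
    swap
    · simp [Icc_eq_empty_of_lt (not_le.1 hab)]
    have hy' : MonotoneOn y (Set.Icc a b) := hy.mono (Set.Icc_subset_Icc_right (by omega))
    have hs' : ∀ c ∈ Icc a b, s ≤ U a c := fun c hc => hs c (Icc_subset_Icc_right (by omega) hc)
    have hlast : b + 1 ∈ Icc a (b + 1) := right_mem_Icc.2 hab
    have hyle : ∀ j ∈ Icc a (b + 1), y j ≤ y (b + 1) := fun j hj =>
      hy (by simpa using hj) (by simpa using hlast) (mem_Icc.1 hj).2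
    rw [sum_Icc_succ_top hab, sum_Icc_succ_top hab]
    rcases le_total s (y (b + 1)) with hsy | hys
    · rw [max_eq_left hsy]
      exact add_le_add (ih (by omega) hy' hs') le_rfl
    · have hIH := ih (by omega) hy' (s := y (b + 1)) fun c hc => hys.trans (hs' c hc)
      calc ∑ j ∈ Icc a b, R j (max (y j) s) + R (b + 1) (max (y (b + 1)) s)
          = blockSum R a (b + 1) s := by
            rw [blockSum, sum_Icc_succ_top hab]
            refine congrArg₂ (· + ·) (sum_congr rfl fun j hj => ?_) (by rw [max_eq_right hys])
            rw [max_eq_right ((hyle j (Icc_subset_Icc_right (by omega) hj)).trans hys)]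
        _ ≤ blockSum R a (b + 1) (y (b + 1)) :=
            (hR a (b + 1) ha hab hbm).antitoneOn (hys.trans (hs _ hlast)) (hs _ hlast) hys
        _ = ∑ j ∈ Icc a b, R j (max (y j) (y (b + 1))) + R (b + 1) (y (b + 1)) := by
            rw [blockSum, sum_Icc_succ_top hab]
            refine congrArg (· + _) (sum_congr rfl fun j hj => ?_)
            rw [max_eq_right (hyle j (Icc_subset_Icc_right (by omega) hj))]
        _ ≤ ∑ j ∈ Icc a b, R j (y j) + R (b + 1) (y (b + 1)) := add_le_add hIH le_rfl

theorem sum_le_of_below (hx : MonotoneOn x (Set.Icc 1 m)) (hxU : UpperCondition m U x) {a : ℕ}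
    (ha : 1 ≤ a) (hstart : a = 1 ∨ x (a - 1) < x a) {z : ℕ → ℝ} (hz : MonotoneOn z (Set.Icc a m))
    (hzx : ∀ j ∈ Icc a m, z j ≤ x j) :
    ∑ j ∈ Icc a m, R j (x j) ≤ ∑ j ∈ Icc a m, R j (z j) := by
  by_cases ham : a ≤ m
  swap
  · simp [Icc_eq_empty_of_lt (not_le.1 ham)]
  obtain ⟨c, hac, hcm, hconst, hend⟩ := exists_block_end hx ha ham
  have hxa : ∀ j ∈ Icc a m, x a ≤ x j := fun j hj =>
    hx ⟨ha, ham⟩ ⟨by simp at hj; omega, (mem_Icc.1 hj).2⟩ (mem_Icc.1 hj).1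
  have hhead : ∀ j ∈ Icc a c, x j = max (z j) (x a) := fun j hj => by
    have hj' : j ∈ Icc a m := Icc_subset_Icc_right hcm hj
    rw [max_eq_right ((hzx j hj').trans (hconst j hj).le), hconst j hj]
  have htail : ∑ j ∈ Icc (c + 1) m, R j (x j) ≤ ∑ j ∈ Icc (c + 1) m, R j (max (z j) (x a)) := by
    rcases hend with rfl | hjump
    · simp
    have hsub : Icc (c + 1) m ⊆ Icc a m := Icc_subset_Icc_left (by omega)
    refine sum_le_of_below hx hxU (a := c + 1) (by omega) (Or.inr (by rwa [Nat.add_sub_cancel]))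
      (fun i hi j hj hij => max_le_max (hz ?_ ?_ hij) le_rfl) fun j hj =>
        max_le (hzx j (hsub hj)) (hxa j (hsub hj))
    · exact Set.Icc_subset_Icc_left (by omega) hi
    · exact Set.Icc_subset_Icc_left (by omega) hj
  calc ∑ j ∈ Icc a m, R j (x j)
      = ∑ j ∈ Icc a c, R j (x j) + ∑ j ∈ Icc (c + 1) m, R j (x j) :=
        (sum_Icc_add_sum_Icc _ (by omega) hcm).symm
    _ ≤ ∑ j ∈ Icc a c, R j (max (z j) (x a)) + ∑ j ∈ Icc (c + 1) m, R j (max (z j) (x a)) := by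
        rw [sum_congr rfl fun j hj => congrArg (R j) (hhead j hj)]
        exact add_le_add le_rfl htail
    _ = ∑ j ∈ Icc a m, R j (max (z j) (x a)) := sum_Icc_add_sum_Icc _ (by omega) hcm
    _ ≤ ∑ j ∈ Icc a m, R j (z j) := hR.sum_max_le ha le_rfl hz fun c hc =>
        hxU a c ha (mem_Icc.1 hc).1 (mem_Icc.1 hc).2 hstart
termination_by m + 1 - a

theorem cost_le_of_below (hx : MonotoneOn x (Set.Icc 1 m)) (hxU : UpperCondition m U x)
    {z : ℕ → ℝ} (hz : MonotoneOn z (Set.Icc 1 m)) (hzx : ∀ j ∈ Icc 1 m, z j ≤ x j) :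
    cost R m x ≤ cost R m z :=
  hR.sum_le_of_below hx hxU le_rfl (Or.inl rfl) hz hzx

end HasValleys

end

theorem cost_inf_add_cost_sup (R : ℕ → ℝ → ℝ) (m : ℕ) (x y : ℕ → ℝ) :
    cost R m (x ⊓ y) + cost R m (x ⊔ y) = cost R m x + cost R m y := by
  simp only [cost, ← sum_add_distrib]
  refine sum_congr rfl fun j _ => ?_
  rcases le_total (x j) (y j) with h | h
  · simp [h]
  · simp [h, add_comm]

def reflect (m : ℕ) (x : ℕ → ℝ) : ℕ → ℝ := fun j => -x (m + 1 - j)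

def reflectLoss (m : ℕ) (R : ℕ → ℝ → ℝ) : ℕ → ℝ → ℝ := fun j q => R (m + 1 - j) (-q)

def reflectBound (m : ℕ) (B : ℕ → ℕ → ℝ) : ℕ → ℕ → ℝ := fun a b => -B (m + 1 - b) (m + 1 - a)

section

variable {m : ℕ} {R : ℕ → ℝ → ℝ} {L U : ℕ → ℕ → ℝ} {x : ℕ → ℝ}

theorem HasValleys.reflect (hR : HasValleys m R L U) :
    HasValleys m (reflectLoss m R) (reflectBound m U) (reflectBound m L) := by
  intro a b ha hab hbm
  have hsum : blockSum (reflectLoss m R) a b = fun q => blockSum R (m + 1 - b) (m + 1 - a) (-q) :=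
    funext fun q => sum_Icc_reflect (R · (-q)) hbm
  rw [hsum]
  exact (hR (m + 1 - b) (m + 1 - a) (by omega) (by omega) (by omega)).comp_neg

theorem reflect_reflect {j : ℕ} (hj : j ≤ m + 1) : reflect m (reflect m x) j = x j := by
  simp [reflect, Nat.sub_sub_self hj]

theorem monotoneOn_reflect (hx : MonotoneOn x (Set.Icc 1 m)) :
    MonotoneOn (reflect m x) (Set.Icc 1 m) := fun i ⟨hi1, him⟩ j ⟨hj1, hjm⟩ hij =>
  neg_le_neg (hx ⟨by omega, by omega⟩ ⟨by omega, by omega⟩ (by omega))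

theorem cost_reflectLoss (y : ℕ → ℝ) : cost (reflectLoss m R) m y = cost R m (reflect m y) := by
  have h := sum_Icc_reflect (fun i => R i (reflect m y i)) (a := 1) (le_refl m)
  rw [Nat.add_sub_cancel_left, Nat.add_sub_cancel] at h
  rw [cost, cost, ← h]
  refine sum_congr rfl fun j hj => ?_
  simp [reflectLoss, reflect, Nat.sub_sub_self (show j ≤ m + 1 by simp at hj; omega)]

theorem cost_reflect_reflect : cost R m (reflect m (reflect m x)) = cost R m x :=
  sum_congr rfl fun j hj => by rw [reflect_reflect (by simp at hj; omega)]

theorem isMinOn_reflect (hopt : IsMinOn (cost R m) (isotoneCone m) x) :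
    IsMinOn (cost (reflectLoss m R) m) (isotoneCone m) (reflect m x) :=
  isMinOn_iff.2 fun y hy => by
    rw [cost_reflectLoss, cost_reflectLoss, cost_reflect_reflect]
    exact isMinOn_iff.1 hopt _ (monotoneOn_reflect hy)

theorem lowerCondition_iff_upperCondition_reflect :
    LowerCondition m L x ↔ UpperCondition m (reflectBound m L) (reflect m x) := by
  constructor
  · intro h a b ha hab hbm hstart
    have e : m + 1 - (a - 1) = m + 1 - a + 1 := by omega
    have := h (m + 1 - b) (m + 1 - a) (by omega) (by omega) (by omega) (by
      rcases hstart with rfl | hlt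
      · exact Or.inl (by omega)
      · exact Or.inr (by simpa [reflect, e] using hlt))
    simpa [reflect, reflectBound] using this
  · intro h a b ha hab hbm hend
    have e₁ : m + 1 - (m + 1 - a) = a := by omega
    have e₂ : m + 1 - (m + 1 - b) = b := by omega
    have e₃ : m + 1 - (m + 1 - b - 1) = b + 1 := by omega
    have := h (m + 1 - b) (m + 1 - a) (by omega) (by omega) (by omega) (by
      rcases hend with rfl | hlt
      · exact Or.inl (by omega)
      · exact Or.inr (by simpa [reflect, e₂, e₃] using hlt))
    simpa [reflect, reflectBound, e₁, e₂] using this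

theorem HasValleys.lowerCondition_of_isMinOn (hR : HasValleys m R L U)
    (hx : MonotoneOn x (Set.Icc 1 m)) (hopt : IsMinOn (cost R m) (isotoneCone m) x) :
    LowerCondition m L x :=
  lowerCondition_iff_upperCondition_reflect.2 <|
    hR.reflect.upperCondition_of_isMinOn (monotoneOn_reflect hx) (isMinOn_reflect hopt)

theorem HasValleys.cost_le_of_above (hR : HasValleys m R L U) (hx : MonotoneOn x (Set.Icc 1 m))
    (hxL : LowerCondition m L x) {z : ℕ → ℝ} (hz : MonotoneOn z (Set.Icc 1 m))
    (hxz : ∀ j ∈ Icc 1 m, x j ≤ z j) : cost R m x ≤ cost R m z := by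
  have h := hR.reflect.cost_le_of_below (monotoneOn_reflect hx)
    (lowerCondition_iff_upperCondition_reflect.1 hxL) (monotoneOn_reflect hz)
    fun j hj => neg_le_neg (hxz _ (by simp at hj ⊢; omega))
  rwa [cost_reflectLoss, cost_reflectLoss, cost_reflect_reflect, cost_reflect_reflect] at h

theorem HasValleys.isMinOn_iff (hR : HasValleys m R L U) (hx : MonotoneOn x (Set.Icc 1 m)) :
    IsMinOn (cost R m) (isotoneCone m) x ↔ UpperCondition m U x ∧ LowerCondition m L x := by
  refine ⟨fun hopt => ⟨hR.upperCondition_of_isMinOn hx hopt, hR.lowerCondition_of_isMinOn hx hopt⟩,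
    fun ⟨hU, hL⟩ => _root_.isMinOn_iff.2 fun y (hy : MonotoneOn y _) => ?_⟩
  have hinf := hR.cost_le_of_below hx hU (hx.inf hy) fun j _ => inf_le_left
  have hsup := hR.cost_le_of_above hx hL (hx.sup hy) fun j _ => le_sup_left
  linarith [cost_inf_add_cost_sup R m x y]

end

end IsotonicRegression

theorem stmt1_general (m : ℕ) (R : ℕ → ℝ → ℝ) (L U : ℕ → ℕ → ℝ)
    (hmin : ∀ a b, 1 ≤ a → a ≤ b → b ≤ m → ∀ q : ℝ,
      (∀ r : ℝ, (∑ j ∈ Finset.Icc a b, R j q) ≤ ∑ j ∈ Finset.Icc a b, R j r) ↔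
        q ∈ Set.Icc (L a b) (U a b))
    (hanti : ∀ a b, 1 ≤ a → a ≤ b → b ≤ m →
      StrictAntiOn (fun q => ∑ j ∈ Finset.Icc a b, R j q) (Set.Iic (L a b)))
    (hmono : ∀ a b, 1 ≤ a → a ≤ b → b ≤ m →
      StrictMonoOn (fun q => ∑ j ∈ Finset.Icc a b, R j q) (Set.Ici (U a b)))
    (x : ℕ → ℝ) (hx : MonotoneOn x (Set.Icc 1 m)) :
    (∀ y : ℕ → ℝ, MonotoneOn y (Set.Icc 1 m) →
        (∑ j ∈ Finset.Icc 1 m, R j (x j)) ≤ ∑ j ∈ Finset.Icc 1 m, R j (y j)) ↔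
    (∀ a b, 1 ≤ a → a ≤ b → b ≤ m →
        ((a = 1 ∨ x (a - 1) < x a) → x a ≤ U a b) ∧
        ((b = m ∨ x b < x (b + 1)) → L a b ≤ x b)) := by
  have hR : IsotonicRegression.HasValleys m R L U := fun a b ha hab hbm =>
    ⟨fun q hq => (hmin a b ha hab hbm q).2 hq, hanti a b ha hab hbm, hmono a b ha hab hbm⟩
  refine (isMinOn_iff.symm.trans (hR.isMinOn_iff hx)).trans
    ⟨fun ⟨hU, hL⟩ a b ha hab hbm => ⟨hU a b ha hab hbm, hL a b ha hab hbm⟩, fun h =>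
      ⟨fun a b ha hab hbm => (h a b ha hab hbm).1, fun a b ha hab hbm => (h a b ha hab hbm).2⟩⟩

/-- Characterization of minimizers of `T` over the isotone cone. -/
theorem stmt1 (m : ℕ) (hm : 1 ≤ m) (R : ℕ → ℝ → ℝ) (L U : ℕ → ℕ → ℝ)
    (hLU : ∀ a b, 1 ≤ a → a ≤ b → b ≤ m → L a b ≤ U a b)
    (hmin : ∀ a b, 1 ≤ a → a ≤ b → b ≤ m → ∀ q : ℝ,
      (∀ r : ℝ, (∑ j ∈ Finset.Icc a b, R j q) ≤ ∑ j ∈ Finset.Icc a b, R j r) ↔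
        q ∈ Set.Icc (L a b) (U a b))
    (hanti : ∀ a b, 1 ≤ a → a ≤ b → b ≤ m →
      StrictAntiOn (fun q => ∑ j ∈ Finset.Icc a b, R j q) (Set.Iic (L a b)))
    (hmono : ∀ a b, 1 ≤ a → a ≤ b → b ≤ m →
      StrictMonoOn (fun q => ∑ j ∈ Finset.Icc a b, R j q) (Set.Ici (U a b)))
    (x : ℕ → ℝ) (hx : MonotoneOn x (Set.Icc 1 m)) :
    (∀ y : ℕ → ℝ, MonotoneOn y (Set.Icc 1 m) →
        (∑ j ∈ Finset.Icc 1 m, R j (x j)) ≤ ∑ j ∈ Finset.Icc 1 m, R j (y j)) ↔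
    (∀ a b, 1 ≤ a → a ≤ b → b ≤ m →
        ((a = 1 ∨ x (a - 1) < x a) → x a ≤ U a b) ∧
        ((b = m ∨ x b < x (b + 1)) → L a b ≤ x b)) :=
  stmt1_general m R L U hmin hanti hmono x hx
end

section
/- Under the standing assumptions on R_1,...,R_m, if x and y both minimize T(q) = Σ_j R_j(q_j) over the isotone cone ℝ^m_↑, then the componentwise minimum min(x,y) and the componentwise maximum max(x,y) are also minimizers of T over ℝ^m_↑. -/
/-!
A separable objective `T x = ∑ j, R j (x j)` is modular: `T (x ⊓ y) + T (x ⊔ y) = T x + T y`,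
since at each coordinate `{min (x j) (y j), max (x j) (y j)} = {x j, y j}`. The isotone cone is a
sublattice, so if `x` and `y` minimize `T` on it then `T x ≤ T (x ⊓ y)` and `T y ≤ T (x ⊔ y)`,
and modularity forces both to be equalities.
-/

theorem apply_min_add_apply_max {α β : Type*} [LinearOrder α] [AddCommMagma β]
    (f : α → β) (a b : α) : f (min a b) + f (max a b) = f a + f b := by
  rcases le_total a b with h | h
  · rw [min_eq_left h, max_eq_right h]
  · rw [min_eq_right h, max_eq_left h, add_comm]

theorem Finset.sum_apply_min_add_sum_apply_max {ι α β : Type*} [LinearOrder α] [AddCommMonoid β]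
    (s : Finset ι) (f : ι → α → β) (x y : ι → α) :
    ∑ i ∈ s, f i (min (x i) (y i)) + ∑ i ∈ s, f i (max (x i) (y i)) =
      ∑ i ∈ s, f i (x i) + ∑ i ∈ s, f i (y i) := by
  simp only [← Finset.sum_add_distrib, apply_min_add_apply_max]

section Submodular

variable {α β : Type*} [Lattice α] [AddCommMonoid β] [PartialOrder β]
  [IsOrderedCancelAddMonoid β] {F : α → β} {S : Set α} {x y : α}

theorem IsMinOn.inf_of_submodular (hF : F (x ⊓ y) + F (x ⊔ y) ≤ F x + F y)
    (hsup : x ⊔ y ∈ S) (hx : IsMinOn F S x) (hy : IsMinOn F S y) : IsMinOn F S (x ⊓ y) := by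
  have hle : F (x ⊓ y) ≤ F x :=
    le_of_add_le_add_right (hF.trans (add_le_add_right (isMinOn_iff.mp hy _ hsup) _))
  exact isMinOn_iff.mpr fun z hz => hle.trans (isMinOn_iff.mp hx z hz)

theorem IsMinOn.sup_of_submodular (hF : F (x ⊓ y) + F (x ⊔ y) ≤ F x + F y)
    (hinf : x ⊓ y ∈ S) (hx : IsMinOn F S x) (hy : IsMinOn F S y) : IsMinOn F S (x ⊔ y) := by
  have hle : F (x ⊔ y) ≤ F y :=
    le_of_add_le_add_left (hF.trans (add_le_add_left (isMinOn_iff.mp hx _ hinf) _))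
  exact isMinOn_iff.mpr fun z hz => hle.trans (isMinOn_iff.mp hy z hz)

end Submodular

theorem stmt2_general (m : ℕ) (R : ℕ → ℝ → ℝ)
    (x y : ℕ → ℝ) (hx : MonotoneOn x (Set.Icc 1 m)) (hy : MonotoneOn y (Set.Icc 1 m))
    (hxmin : ∀ z : ℕ → ℝ, MonotoneOn z (Set.Icc 1 m) →
      (∑ j ∈ Finset.Icc 1 m, R j (x j)) ≤ ∑ j ∈ Finset.Icc 1 m, R j (z j))
    (hymin : ∀ z : ℕ → ℝ, MonotoneOn z (Set.Icc 1 m) →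
      (∑ j ∈ Finset.Icc 1 m, R j (y j)) ≤ ∑ j ∈ Finset.Icc 1 m, R j (z j)) :
    (MonotoneOn (fun j => min (x j) (y j)) (Set.Icc 1 m) ∧
      ∀ z : ℕ → ℝ, MonotoneOn z (Set.Icc 1 m) →
        (∑ j ∈ Finset.Icc 1 m, R j (min (x j) (y j))) ≤ ∑ j ∈ Finset.Icc 1 m, R j (z j)) ∧
    (MonotoneOn (fun j => max (x j) (y j)) (Set.Icc 1 m) ∧
      ∀ z : ℕ → ℝ, MonotoneOn z (Set.Icc 1 m) →
        (∑ j ∈ Finset.Icc 1 m, R j (max (x j) (y j))) ≤ ∑ j ∈ Finset.Icc 1 m, R j (z j)) := by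
  set cone : Set (ℕ → ℝ) := {z | MonotoneOn z (Set.Icc 1 m)}
  set T : (ℕ → ℝ) → ℝ := fun z => ∑ j ∈ Finset.Icc 1 m, R j (z j)
  have hT : T (x ⊓ y) + T (x ⊔ y) ≤ T x + T y :=
    (Finset.sum_apply_min_add_sum_apply_max _ R x y).le
  have hinf : x ⊓ y ∈ cone := hx.inf hy
  have hsup : x ⊔ y ∈ cone := hx.sup hy
  have hxT : IsMinOn T cone x := isMinOn_iff.mpr hxmin
  have hyT : IsMinOn T cone y := isMinOn_iff.mpr hymin
  exact ⟨⟨hinf, isMinOn_iff.mp (hxT.inf_of_submodular hT hsup hyT)⟩,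
    ⟨hsup, isMinOn_iff.mp (hxT.sup_of_submodular hT hinf hyT)⟩⟩

/-- Componentwise min and max of two minimizers over the isotone cone are minimizers. -/
theorem stmt2 (m : ℕ) (hm : 1 ≤ m) (R : ℕ → ℝ → ℝ) (L U : ℕ → ℕ → ℝ)
    (hLU : ∀ a b, 1 ≤ a → a ≤ b → b ≤ m → L a b ≤ U a b)
    (hmin : ∀ a b, 1 ≤ a → a ≤ b → b ≤ m → ∀ q : ℝ,
      (∀ r : ℝ, (∑ j ∈ Finset.Icc a b, R j q) ≤ ∑ j ∈ Finset.Icc a b, R j r) ↔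
        q ∈ Set.Icc (L a b) (U a b))
    (hanti : ∀ a b, 1 ≤ a → a ≤ b → b ≤ m →
      StrictAntiOn (fun q => ∑ j ∈ Finset.Icc a b, R j q) (Set.Iic (L a b)))
    (hmono : ∀ a b, 1 ≤ a → a ≤ b → b ≤ m →
      StrictMonoOn (fun q => ∑ j ∈ Finset.Icc a b, R j q) (Set.Ici (U a b)))
    (x y : ℕ → ℝ) (hx : MonotoneOn x (Set.Icc 1 m)) (hy : MonotoneOn y (Set.Icc 1 m))
    (hxmin : ∀ z : ℕ → ℝ, MonotoneOn z (Set.Icc 1 m) →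
      (∑ j ∈ Finset.Icc 1 m, R j (x j)) ≤ ∑ j ∈ Finset.Icc 1 m, R j (z j))
    (hymin : ∀ z : ℕ → ℝ, MonotoneOn z (Set.Icc 1 m) →
      (∑ j ∈ Finset.Icc 1 m, R j (y j)) ≤ ∑ j ∈ Finset.Icc 1 m, R j (z j)) :
    (MonotoneOn (fun j => min (x j) (y j)) (Set.Icc 1 m) ∧
      ∀ z : ℕ → ℝ, MonotoneOn z (Set.Icc 1 m) →
        (∑ j ∈ Finset.Icc 1 m, R j (min (x j) (y j))) ≤ ∑ j ∈ Finset.Icc 1 m, R j (z j)) ∧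
    (MonotoneOn (fun j => max (x j) (y j)) (Set.Icc 1 m) ∧
      ∀ z : ℕ → ℝ, MonotoneOn z (Set.Icc 1 m) →
        (∑ j ∈ Finset.Icc 1 m, R j (max (x j) (y j))) ≤ ∑ j ∈ Finset.Icc 1 m, R j (z j)) :=
  stmt2_general m R x y hx hy hxmin hymin
end

section
/- Under the standing assumptions on R_1,...,R_m, for every index 1 ≤ j ≤ m one has the min-max identities max_{a ≤ j} min_{b ≥ j} L_{ab} = min_{b ≥ j} max_{a ≤ j} L_{ab} and min_{b ≥ j} max_{a ≤ j} U_{ab} = max_{a ≤ j} min_{b ≥ j} U_{ab}. Moreover, defining ℓ_j := max_{a ≤ j} min_{b ≥ j} L_{ab} and u_j := min_{b ≥ j} max_{a ≤ j} U_{ab}, the vectors ℓ and u belong to the set 𝒬 of minimizers of T over ℝ^m_↑, and every x ∈ 𝒬 satisfies ℓ ≤ x ≤ u componentwise. -/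
open Finset

namespace IsoReg

noncomputable def SS (R : ℕ → ℝ → ℝ) (a b : ℕ) (q : ℝ) : ℝ := ∑ j ∈ Finset.Icc a b, R j q

def Hyp (m : ℕ) (R : ℕ → ℝ → ℝ) (L U : ℕ → ℕ → ℝ) : Prop :=
  (∀ a b, 1 ≤ a → a ≤ b → b ≤ m → L a b ≤ U a b) ∧
  (∀ a b, 1 ≤ a → a ≤ b → b ≤ m → ∀ q : ℝ,
      (∀ r : ℝ, SS R a b q ≤ SS R a b r) ↔ q ∈ Set.Icc (L a b) (U a b)) ∧
  (∀ a b, 1 ≤ a → a ≤ b → b ≤ m → StrictAntiOn (SS R a b) (Set.Iic (L a b))) ∧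
  (∀ a b, 1 ≤ a → a ≤ b → b ≤ m → StrictMonoOn (SS R a b) (Set.Ici (U a b)))

variable {m : ℕ} {R : ℕ → ℝ → ℝ} {L U : ℕ → ℕ → ℝ}

lemma Icc_split (a t b : ℕ) (h1 : a ≤ t) (h2 : t < b) :
    Finset.Icc a b = Finset.Icc a t ∪ Finset.Icc (t+1) b := by
  ext x; simp only [Finset.mem_Icc, Finset.mem_union]; omega

lemma Icc_split_disj (a t b : ℕ) :
    Disjoint (Finset.Icc a t) (Finset.Icc (t+1) b) := by
  rw [Finset.disjoint_left]; intro x hx hx'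
  simp only [Finset.mem_Icc] at hx hx'; omega

lemma SS_split {a t b : ℕ} (h1 : a ≤ t) (h2 : t < b) (q : ℝ) :
    SS R a b q = SS R a t q + SS R (t+1) b q := by
  unfold SS
  rw [Icc_split a t b h1 h2, Finset.sum_union (Icc_split_disj a t b)]

lemma sum_split {a t b : ℕ} (h1 : a ≤ t) (h2 : t < b) (f : ℕ → ℝ) :
    ∑ j ∈ Finset.Icc a b, f j = (∑ j ∈ Finset.Icc a t, f j) + ∑ j ∈ Finset.Icc (t+1) b, f j := by
  rw [Icc_split a t b h1 h2, Finset.sum_union (Icc_split_disj a t b)]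

/-- q in the argmin interval minimizes -/
lemma min_at (H : Hyp m R L U) {a b : ℕ} (h1 : 1 ≤ a) (h2 : a ≤ b) (h3 : b ≤ m)
    {q : ℝ} (hq : L a b ≤ q) (hq' : q ≤ U a b) : ∀ r, SS R a b q ≤ SS R a b r :=
  (H.2.1 a b h1 h2 h3 q).mpr ⟨hq, hq'⟩

/-- nondecreasing above L -/
lemma mono_above (H : Hyp m R L U) {a b : ℕ} (h1 : 1 ≤ a) (h2 : a ≤ b) (h3 : b ≤ m)
    {x y : ℝ} (hx : L a b ≤ x) (hxy : x ≤ y) : SS R a b x ≤ SS R a b y := by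
  rcases eq_or_lt_of_le hxy with h | h
  · rw [h]
  rcases le_total x (U a b) with hU | hU
  · exact min_at H h1 h2 h3 hx hU y
  · exact le_of_lt (H.2.2.2 a b h1 h2 h3 hU (hU.trans hxy) h)


/-- strictly decreasing below L -/
lemma anti_below (H : Hyp m R L U) {a b : ℕ} (h1 : 1 ≤ a) (h2 : a ≤ b) (h3 : b ≤ m)
    {x y : ℝ} (hy : y ≤ L a b) (hxy : x < y) : SS R a b y < SS R a b x :=
  H.2.2.1 a b h1 h2 h3 (Set.mem_Iic.mpr (hxy.le.trans hy)) (Set.mem_Iic.mpr hy) hxy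

/-- betweenness, upper bound -/
lemma BL1 (H : Hyp m R L U) {a t b : ℕ} (h1 : 1 ≤ a) (hat : a ≤ t) (htb : t < b) (hbm : b ≤ m) :
    L a b ≤ max (L a t) (L (t+1) b) := by
  by_contra hcon
  push_neg at hcon
  set M := max (L a t) (L (t+1) b) with hM
  have htm : t ≤ m := le_trans (le_of_lt htb) hbm
  have hab : a ≤ b := le_trans hat (le_of_lt htb)
  have hmin : ∀ r, SS R a b M ≤ SS R a b r := by
    intro r
    have step : SS R a b M ≤ SS R a b (L a b) := by
      rw [SS_split hat htb, SS_split hat htb]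
      have e1 : SS R a t M ≤ SS R a t (L a b) :=
        mono_above H h1 hat htm (le_max_left _ _) (le_of_lt hcon)
      have e2 : SS R (t+1) b M ≤ SS R (t+1) b (L a b) :=
        mono_above H (Nat.le_add_left 1 t) htb hbm (le_max_right _ _) (le_of_lt hcon)
      linarith
    exact le_trans step (min_at H h1 hab hbm le_rfl (H.1 a b h1 hab hbm) r)
  have := ((H.2.1 a b h1 hab hbm M).mp hmin).1
  exact absurd this (not_le.mpr hcon)

/-- betweenness, lower bound -/
lemma BL2 (H : Hyp m R L U) {a t b : ℕ} (h1 : 1 ≤ a) (hat : a ≤ t) (htb : t < b) (hbm : b ≤ m) :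
    min (L a t) (L (t+1) b) ≤ L a b := by
  by_contra hcon
  push_neg at hcon
  set μ := min (L a t) (L (t+1) b) with hμ
  have htm : t ≤ m := le_trans (le_of_lt htb) hbm
  have hab : a ≤ b := le_trans hat (le_of_lt htb)
  have e1 : SS R a t μ < SS R a t (L a b) :=
    anti_below H h1 hat htm (min_le_left _ _) hcon
  have e2 : SS R (t+1) b μ < SS R (t+1) b (L a b) :=
    anti_below H (Nat.le_add_left 1 t) htb hbm (min_le_right _ _) hcon
  have hstep : SS R a b μ < SS R a b (L a b) := by
    rw [SS_split hat htb, SS_split hat htb]; linarith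
  exact absurd (min_at H h1 hab hbm le_rfl (H.1 a b h1 hab hbm) μ) (not_le.mpr hstep)

section Ell
variable {ℓ : ℕ → ℝ}

/-- abbreviation for the defining formula hypothesis -/
def HEll (m : ℕ) (L : ℕ → ℕ → ℝ) (ℓ : ℕ → ℝ) : Prop :=
  ∀ j, ∀ (h1 : 1 ≤ j) (h2 : j ≤ m),
      ℓ j = (Finset.Icc 1 j).sup' (Finset.nonempty_Icc.mpr h1) fun a =>
        (Finset.Icc j m).inf' (Finset.nonempty_Icc.mpr h2) fun b => L a b

lemma ell_exists_b (hℓ : HEll m L ℓ) {j a : ℕ} (h1 : 1 ≤ j) (h2 : j ≤ m)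
    (ha1 : 1 ≤ a) (haj : a ≤ j) : ∃ b, j ≤ b ∧ b ≤ m ∧ L a b ≤ ℓ j := by
  have hinf : (Finset.Icc j m).inf' (Finset.nonempty_Icc.mpr h2) (fun b => L a b) ≤ ℓ j := by
    rw [hℓ j h1 h2]
    exact Finset.le_sup' (fun a => (Finset.Icc j m).inf' (Finset.nonempty_Icc.mpr h2) fun b => L a b)
      (Finset.mem_Icc.mpr ⟨ha1, haj⟩)
  obtain ⟨b, hb, hbe⟩ := Finset.exists_mem_eq_inf' (Finset.nonempty_Icc.mpr h2) (fun b => L a b)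
  rw [Finset.mem_Icc] at hb
  exact ⟨b, hb.1, hb.2, by rw [← hbe]; exact hinf⟩

lemma ell_exists_a (hℓ : HEll m L ℓ) {j : ℕ} (h1 : 1 ≤ j) (h2 : j ≤ m) :
    ∃ a, 1 ≤ a ∧ a ≤ j ∧ ∀ b, j ≤ b → b ≤ m → ℓ j ≤ L a b := by
  obtain ⟨a, ha, hae⟩ := Finset.exists_mem_eq_sup' (Finset.nonempty_Icc.mpr h1)
    (fun a => (Finset.Icc j m).inf' (Finset.nonempty_Icc.mpr h2) fun b => L a b)
  rw [Finset.mem_Icc] at ha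
  refine ⟨a, ha.1, ha.2, fun b hb1 hb2 => ?_⟩
  have : ℓ j = (Finset.Icc j m).inf' (Finset.nonempty_Icc.mpr h2) fun b => L a b := by
    rw [hℓ j h1 h2]; exact hae
  rw [this]
  exact Finset.inf'_le _ (Finset.mem_Icc.mpr ⟨hb1, hb2⟩)

lemma ell_mono (hℓ : HEll m L ℓ) : MonotoneOn ℓ (Set.Icc 1 m) := by
  intro i hi i' hi' hii'
  simp only [Set.mem_Icc] at hi hi'
  rw [hℓ i hi.1 hi.2, hℓ i' hi'.1 hi'.2]
  apply Finset.sup'_le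
  intro a ha
  rw [Finset.mem_Icc] at ha
  have hsub : Finset.Icc i' m ⊆ Finset.Icc i m := by
    apply Finset.Icc_subset_Icc hii' le_rfl
  have h1 : (Finset.Icc i m).inf' (Finset.nonempty_Icc.mpr hi.2) (fun b => L a b) ≤
      (Finset.Icc i' m).inf' (Finset.nonempty_Icc.mpr hi'.2) (fun b => L a b) :=
    Finset.inf'_mono _ hsub (Finset.nonempty_Icc.mpr hi'.2)
  refine le_trans h1 ?_
  exact Finset.le_sup' (fun a => (Finset.Icc i' m).inf' (Finset.nonempty_Icc.mpr hi'.2) fun b => L a b)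
    (Finset.mem_Icc.mpr ⟨ha.1, le_trans ha.2 hii'⟩)

end Ell


section Struct
variable {ℓ : ℕ → ℝ}

/-- Prefix property at a block start: values L p e for e ≥ p sit at or above the block value. -/
lemma Ppre (H : Hyp m R L U) (hℓ : HEll m L ℓ) {p : ℕ} (hp1 : 1 ≤ p) (hpm : p ≤ m)
    (hstart : p = 1 ∨ ℓ (p-1) < ℓ p) {e : ℕ} (hpe : p ≤ e) (hem : e ≤ m) :
    ℓ p ≤ L p e := by
  obtain ⟨a₀, ha₀1, ha₀p, hw⟩ := ell_exists_a hℓ hp1 hpm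
  rcases eq_or_lt_of_le ha₀p with heq | hlt
  · have := hw e hpe hem; rwa [heq] at this
  -- a₀ < p
  have hjump : ℓ (p-1) < ℓ p := by
    rcases hstart with h | h
    · omega
    · exact h
  obtain ⟨b₁, hb₁1, hb₁m, hb₁le⟩ := ell_exists_b hℓ (show 1 ≤ p-1 by omega)
    (show p-1 ≤ m by omega) ha₀1 (show a₀ ≤ p-1 by omega)
  have hb₁lt : L a₀ b₁ < ℓ p := lt_of_le_of_lt hb₁le hjump
  have hb₁eq : b₁ = p - 1 := by
    by_contra hne
    have hb₁p : p ≤ b₁ := by omega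
    exact absurd (hw b₁ hb₁p hb₁m) (not_le.mpr hb₁lt)
  rw [hb₁eq] at hb₁lt
  have hsplit : L a₀ e ≤ max (L a₀ (p-1)) (L ((p-1)+1) e) :=
    BL1 H ha₀1 (show a₀ ≤ p-1 by omega) (show p-1 < e by omega) hem
  rw [show ((p-1)+1) = p by omega] at hsplit
  have hLe : ℓ p ≤ L a₀ e := hw e hpe hem
  rcases max_cases (L a₀ (p-1)) (L p e) with ⟨hmax, _⟩ | ⟨hmax, _⟩
  · rw [hmax] at hsplit; linarith
  · rw [hmax] at hsplit; linarith

/-- key step for the suffix property -/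
lemma Qone (H : Hyp m R L U) (hℓ : HEll m L ℓ) {r : ℕ} (hr1 : 1 ≤ r) (hrm : r ≤ m)
    (hend : r = m ∨ ℓ r < ℓ (r+1)) {t : ℕ} (h1 : 1 ≤ t) (h2 : t ≤ r) (h3 : ℓ t = ℓ r) :
    ∃ b, t ≤ b ∧ b ≤ r ∧ L t b ≤ ℓ r := by
  have htm : t ≤ m := le_trans h2 hrm
  obtain ⟨b₀, hb₀1, hb₀2, hb₀3⟩ := ell_exists_b hℓ h1 htm h1 le_rfl
  rw [h3] at hb₀3
  rcases le_or_gt b₀ r with hb₀r | hb₀r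
  · exact ⟨b₀, hb₀1, hb₀r, hb₀3⟩
  have hrm' : r < m := lt_of_lt_of_le hb₀r hb₀2
  have hjump : ℓ r < ℓ (r+1) := by
    rcases hend with h | h
    · omega
    · exact h
  obtain ⟨a₁, ha₁1, ha₁le, ha₁w⟩ := ell_exists_a hℓ (show 1 ≤ r+1 by omega)
    (show r+1 ≤ m by omega)
  have hb₀big : ℓ r < L a₁ b₀ := lt_of_lt_of_le hjump (ha₁w b₀ (by omega) hb₀2)
  rcases lt_or_ge t a₁ with hcase | hcase
  · -- t < a₁ : take b := a₁ - 1
    have hL2 : min (L t (a₁-1)) (L ((a₁-1)+1) b₀) ≤ L t b₀ :=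
      BL2 H h1 (show t ≤ a₁-1 by omega) (show a₁-1 < b₀ by omega) hb₀2
    rw [show ((a₁-1)+1) = a₁ by omega] at hL2
    refine ⟨a₁-1, by omega, by omega, ?_⟩
    rcases min_cases (L t (a₁-1)) (L a₁ b₀) with ⟨hmin', _⟩ | ⟨hmin', _⟩
    · rw [hmin'] at hL2; linarith
    · rw [hmin'] at hL2; linarith
  · -- a₁ ≤ t
    obtain ⟨b₂, hb₂1, hb₂2, hb₂3⟩ := ell_exists_b hℓ h1 htm ha₁1 hcase
    rw [h3] at hb₂3
    have hb₂r : b₂ ≤ r := by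
      by_contra hne
      have := ha₁w b₂ (by omega) hb₂2
      linarith
    rcases eq_or_lt_of_le hcase with heq | hlt'
    · refine ⟨b₂, hb₂1, hb₂r, ?_⟩; rwa [← heq]
    -- a₁ < t
    have hL1 : L a₁ b₀ ≤ max (L a₁ (t-1)) (L ((t-1)+1) b₀) :=
      BL1 H ha₁1 (show a₁ ≤ t-1 by omega) (show t-1 < b₀ by omega) hb₀2
    rw [show ((t-1)+1) = t by omega] at hL1
    have hgt : ℓ r < L a₁ (t-1) := by
      rcases max_cases (L a₁ (t-1)) (L t b₀) with ⟨hmax, _⟩ | ⟨hmax, _⟩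
      · rw [hmax] at hL1; linarith
      · rw [hmax] at hL1; linarith
    have hL2 : min (L a₁ (t-1)) (L ((t-1)+1) b₂) ≤ L a₁ b₂ :=
      BL2 H ha₁1 (show a₁ ≤ t-1 by omega) (show t-1 < b₂ by omega) hb₂2
    rw [show ((t-1)+1) = t by omega] at hL2
    refine ⟨b₂, hb₂1, hb₂r, ?_⟩
    rcases min_cases (L a₁ (t-1)) (L t b₂) with ⟨hmin', _⟩ | ⟨hmin', _⟩
    · rw [hmin'] at hL2; linarith
    · rw [hmin'] at hL2; linarith

/-- Suffix property at a block end. -/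
lemma Psuf (H : Hyp m R L U) (hℓ : HEll m L ℓ) (hm : MonotoneOn ℓ (Set.Icc 1 m))
    {r : ℕ} (hr1 : 1 ≤ r) (hrm : r ≤ m) (hend : r = m ∨ ℓ r < ℓ (r+1)) :
    ∀ t, 1 ≤ t → t ≤ r → ℓ t = ℓ r → L t r ≤ ℓ r := by
  suffices h : ∀ n t, 1 ≤ t → t ≤ r → ℓ t = ℓ r → r - t ≤ n → L t r ≤ ℓ r by
    intro t h1 h2 h3; exact h (r - t) t h1 h2 h3 le_rfl
  intro n
  induction n with
  | zero =>
    intro t h1 h2 h3 hn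
    obtain ⟨b, hb1, hb2, hb3⟩ := Qone H hℓ hr1 hrm hend h1 h2 h3
    rw [show t = r by omega] at hb3 ⊢
    rw [show b = r by omega] at hb3
    exact hb3
  | succ n ih =>
    intro t h1 h2 h3 hn
    obtain ⟨b, hb1, hb2, hb3⟩ := Qone H hℓ hr1 hrm hend h1 h2 h3
    rcases eq_or_lt_of_le hb2 with heq | hlt
    · rwa [heq] at hb3
    · have hb1' : ℓ (b+1) = ℓ r := by
        have e1 : ℓ t ≤ ℓ (b+1) := hm (Set.mem_Icc.mpr ⟨h1, le_trans h2 hrm⟩)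
          (Set.mem_Icc.mpr ⟨by omega, by omega⟩) (by omega)
        have e2 : ℓ (b+1) ≤ ℓ r := hm (Set.mem_Icc.mpr ⟨by omega, by omega⟩)
          (Set.mem_Icc.mpr ⟨hr1, hrm⟩) (by omega)
        rw [h3] at e1
        linarith
      have hrec : L (b+1) r ≤ ℓ r := ih (b+1) (by omega) (by omega) hb1' (by omega)
      have hsplit : L t r ≤ max (L t b) (L (b+1) r) :=
        BL1 H h1 hb1 hlt hrm
      rcases max_cases (L t b) (L (b+1) r) with ⟨hmax, _⟩ | ⟨hmax, _⟩
      · rw [hmax] at hsplit; linarith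
      · rw [hmax] at hsplit; linarith

end Struct


section BlockEnd
variable {ℓ : ℕ → ℝ}

/-- end of the level set of ℓ containing j -/
noncomputable def BE (m : ℕ) (ℓ : ℕ → ℝ) (j : ℕ) : ℕ :=
  (insert j ((Finset.Icc j m).filter (fun t => ℓ t = ℓ j))).max' (Finset.insert_nonempty _ _)

lemma BE_ge (j : ℕ) : j ≤ BE m ℓ j :=
  Finset.le_max' _ j (Finset.mem_insert_self _ _)

lemma BE_le {j : ℕ} (hjm : j ≤ m) : BE m ℓ j ≤ m := by
  apply Finset.max'_le
  intro y hy
  rcases Finset.mem_insert.mp hy with h | h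
  · omega
  · exact (Finset.mem_Icc.mp (Finset.mem_filter.mp h).1).2

lemma BE_eq (m : ℕ) (ℓ : ℕ → ℝ) (j : ℕ) : ℓ (BE m ℓ j) = ℓ j := by
  have : BE m ℓ j ∈ insert j ((Finset.Icc j m).filter (fun t => ℓ t = ℓ j)) :=
    Finset.max'_mem _ _
  rcases Finset.mem_insert.mp this with h | h
  · rw [h]
  · exact (Finset.mem_filter.mp h).2

lemma BE_block (hm : MonotoneOn ℓ (Set.Icc 1 m)) {j t : ℕ} (hj1 : 1 ≤ j) (hjm : j ≤ m)
    (h1 : j ≤ t) (h2 : t ≤ BE m ℓ j) : ℓ t = ℓ j := by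
  have hbe := BE_le (ℓ := ℓ) hjm
  have e1 : ℓ j ≤ ℓ t := hm (Set.mem_Icc.mpr ⟨hj1, hjm⟩) (Set.mem_Icc.mpr ⟨by omega, by omega⟩) h1
  have e2 : ℓ t ≤ ℓ (BE m ℓ j) := hm (Set.mem_Icc.mpr ⟨by omega, by omega⟩)
    (Set.mem_Icc.mpr ⟨by omega, by omega⟩) h2
  rw [BE_eq m ℓ j] at e2
  linarith

lemma BE_end (hm : MonotoneOn ℓ (Set.Icc 1 m)) {j : ℕ} (hj1 : 1 ≤ j) (hjm : j ≤ m) :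
    BE m ℓ j = m ∨ ℓ (BE m ℓ j) < ℓ (BE m ℓ j + 1) := by
  have hbe := BE_le (ℓ := ℓ) hjm
  have hbj := BE_ge (m := m) (ℓ := ℓ) j
  rcases eq_or_lt_of_le hbe with h | h
  · exact Or.inl h
  right
  have e1 : ℓ (BE m ℓ j) ≤ ℓ (BE m ℓ j + 1) := hm (Set.mem_Icc.mpr ⟨by omega, by omega⟩)
    (Set.mem_Icc.mpr ⟨by omega, by omega⟩) (by omega)
  rcases eq_or_lt_of_le e1 with heq | hlt
  · exfalso
    have hmem : BE m ℓ j + 1 ∈ insert j ((Finset.Icc j m).filter (fun t => ℓ t = ℓ j)) := by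
      apply Finset.mem_insert_of_mem
      rw [Finset.mem_filter, Finset.mem_Icc]
      refine ⟨⟨by omega, by omega⟩, ?_⟩
      rw [← heq]
      exact BE_eq m ℓ j
    have := Finset.le_max' _ _ hmem
    change _ ≤ BE m ℓ j at this
    omega
  · exact hlt

/-- every L a (BE j) for a ≤ j lies at or below ℓ j -/
lemma Gblk (H : Hyp m R L U) (hℓ : HEll m L ℓ) (hm : MonotoneOn ℓ (Set.Icc 1 m)) :
    ∀ j, 1 ≤ j → j ≤ m → ∀ a, 1 ≤ a → a ≤ j → L a (BE m ℓ j) ≤ ℓ j := by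
  intro j
  induction j using Nat.strong_induction_on with
  | _ j ih =>
    intro hj1 hjm a ha1 haj
    have hbe1 : j ≤ BE m ℓ j := BE_ge j
    have hbe2 : BE m ℓ j ≤ m := BE_le hjm
    have hbeq : ℓ (BE m ℓ j) = ℓ j := BE_eq m ℓ j
    have hend := BE_end hm hj1 hjm
    rcases eq_or_ne (ℓ a) (ℓ j) with heq | hne
    · have := Psuf H hℓ hm (by omega : 1 ≤ BE m ℓ j) hbe2 hend a ha1 (by omega)
        (by rw [heq, hbeq])
      rwa [hbeq] at this
    · have halt : ℓ a < ℓ j :=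
        lt_of_le_of_ne (hm (Set.mem_Icc.mpr ⟨ha1, by omega⟩) (Set.mem_Icc.mpr ⟨hj1, hjm⟩) haj) hne
      -- p : start of the level set of j
      set F := (Finset.Icc 1 j).filter (fun t => ℓ t = ℓ j) with hF
      have hFne : F.Nonempty := ⟨j, by simp [hF, Finset.mem_Icc, hj1]⟩
      set p := F.min' hFne with hp
      have hpF : p ∈ F := Finset.min'_mem _ _
      have hp1 : 1 ≤ p := (Finset.mem_Icc.mp (Finset.mem_filter.mp hpF).1).1
      have hpj : p ≤ j := (Finset.mem_Icc.mp (Finset.mem_filter.mp hpF).1).2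
      have hpeq : ℓ p = ℓ j := (Finset.mem_filter.mp hpF).2
      have hap : a < p := by
        by_contra hc
        push_neg at hc
        have e1 : ℓ p ≤ ℓ a := hm (Set.mem_Icc.mpr ⟨hp1, by omega⟩)
          (Set.mem_Icc.mpr ⟨ha1, by omega⟩) hc
        rw [hpeq] at e1
        linarith
      have hstartp : ℓ (p-1) < ℓ p := by
        have e1 : ℓ (p-1) ≤ ℓ p := hm (Set.mem_Icc.mpr ⟨by omega, by omega⟩)
          (Set.mem_Icc.mpr ⟨hp1, by omega⟩) (by omega)
        rcases eq_or_lt_of_le e1 with heq2 | hlt2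
        · exfalso
          have hmem : p - 1 ∈ F := by
            rw [hF, Finset.mem_filter, Finset.mem_Icc]
            exact ⟨⟨by omega, by omega⟩, heq2.trans hpeq⟩
          have := Finset.min'_le _ _ hmem
          omega
        · exact hlt2
      -- BE of p-1 is p-1
      have hbp : BE m ℓ (p-1) = p - 1 := by
        have h1 := BE_ge (m := m) (ℓ := ℓ) (p-1)
        rcases eq_or_lt_of_le h1 with h | h
        · omega
        · exfalso
          have hle : p ≤ BE m ℓ (p-1) := by omega
          have e1 : ℓ p ≤ ℓ (BE m ℓ (p-1)) := hm (Set.mem_Icc.mpr ⟨hp1, by omega⟩)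
            (Set.mem_Icc.mpr ⟨by omega, BE_le (by omega)⟩) hle
          rw [BE_eq m ℓ (p-1)] at e1
          linarith
      have hprev : L a (p-1) ≤ ℓ (p-1) := by
        have := ih (p-1) (by omega) (by omega) (by omega) a ha1 (by omega)
        rwa [hbp] at this
      have hsufp : L p (BE m ℓ j) ≤ ℓ j := by
        have := Psuf H hℓ hm (by omega : 1 ≤ BE m ℓ j) hbe2 hend p hp1 (by omega)
          (by rw [hpeq, hbeq])
        rwa [hbeq] at this
      have hsplit : L a (BE m ℓ j) ≤ max (L a (p-1)) (L ((p-1)+1) (BE m ℓ j)) :=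
        BL1 H ha1 (by omega) (by omega) hbe2
      rw [show ((p-1)+1) = p by omega] at hsplit
      rcases max_cases (L a (p-1)) (L p (BE m ℓ j)) with ⟨hmax, _⟩ | ⟨hmax, _⟩
      · rw [hmax] at hsplit; linarith
      · rw [hmax] at hsplit; linarith

/-- the first min-max identity -/
lemma identity1 (H : Hyp m R L U) (hℓ : HEll m L ℓ) :
    ∀ j, ∀ (h1 : 1 ≤ j) (h2 : j ≤ m),
      ℓ j = (Finset.Icc j m).inf' (Finset.nonempty_Icc.mpr h2) fun b =>
        (Finset.Icc 1 j).sup' (Finset.nonempty_Icc.mpr h1) fun a => L a b := by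
  intro j h1 h2
  have hm := ell_mono hℓ
  apply le_antisymm
  · apply Finset.le_inf'
    intro b hb
    rw [Finset.mem_Icc] at hb
    rw [hℓ j h1 h2]
    apply Finset.sup'_le
    intro a ha
    rw [Finset.mem_Icc] at ha
    refine le_trans (Finset.inf'_le _ (Finset.mem_Icc.mpr hb)) ?_
    exact Finset.le_sup' (fun a => L a b) (Finset.mem_Icc.mpr ha)
  · have hbe1 : j ≤ BE m ℓ j := BE_ge j
    have hbe2 : BE m ℓ j ≤ m := BE_le h2
    refine le_trans (Finset.inf'_le _ (Finset.mem_Icc.mpr ⟨hbe1, hbe2⟩)) ?_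
    apply Finset.sup'_le
    intro a ha
    rw [Finset.mem_Icc] at ha
    exact Gblk H hℓ hm j h1 h2 a ha.1 ha.2

end BlockEnd


section Wlem

/-- comparison on a block from above -/
lemma Wge (H : Hyp m R L U) {p r : ℕ} (hp1 : 1 ≤ p) (hpr : p ≤ r) (hrm : r ≤ m) {c : ℝ}
    (hsuf : ∀ t, p ≤ t → t ≤ r → L t r ≤ c) :
    ∀ z : ℕ → ℝ, (∀ i i', p ≤ i → i ≤ i' → i' ≤ r → z i ≤ z i') →
      (∀ i, p ≤ i → i ≤ r → c ≤ z i) →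
      SS R p r c ≤ ∑ i ∈ Finset.Icc p r, R i (z i) := by
  suffices h : ∀ n, ∀ z : ℕ → ℝ, (∀ i i', p ≤ i → i ≤ i' → i' ≤ r → z i ≤ z i') →
      (∀ i, p ≤ i → i ≤ r → c ≤ z i) →
      (∀ i, p ≤ i → i ≤ r → p + n ≤ i → z i = z r) →
      SS R p r c ≤ ∑ i ∈ Finset.Icc p r, R i (z i) by
    intro z hz1 hz2
    exact h (r - p + 1) z hz1 hz2 (fun i h1 h2 h3 => by omega)
  intro n
  induction n with
  | zero =>
    intro z hmono' hzc htail
    have hconst : ∀ i ∈ Finset.Icc p r, R i (z i) = R i (z r) := by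
      intro i hi
      rw [Finset.mem_Icc] at hi
      rw [htail i hi.1 hi.2 (by omega)]
    rw [Finset.sum_congr rfl hconst]
    exact mono_above H hp1 hpr hrm (hsuf p le_rfl hpr) (hzc r hpr le_rfl)
  | succ n ih =>
    intro z hmono' hzc htail
    by_cases hcase : ∀ i, p ≤ i → i ≤ r → p + n ≤ i → z i = z r
    · exact ih z hmono' hzc hcase
    push_neg at hcase
    obtain ⟨q, hq1, hq2, hq3, hq4⟩ := hcase
    have hqeq : q = p + n := by
      rcases eq_or_lt_of_le hq3 with h | h
      · omega
      · exact absurd (htail q hq1 hq2 (by omega)) hq4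
    have hqr : q < r := by
      rcases eq_or_lt_of_le hq2 with h | h
      · exact absurd (congrArg z h) hq4
      · exact h
    have hzq : z q < z r := lt_of_le_of_ne (hmono' q r hq1 hq2 le_rfl) hq4
    set z' : ℕ → ℝ := fun i => if q+1 ≤ i ∧ i ≤ r then z q else z i with hz'
    have hz'mono : ∀ i i', p ≤ i → i ≤ i' → i' ≤ r → z' i ≤ z' i' := by
      intro i i' h1 h2 h3
      simp only [hz']
      by_cases c1 : q+1 ≤ i ∧ i ≤ r
      · by_cases c2 : q+1 ≤ i' ∧ i' ≤ r
        · simp [c1, c2]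
        · have : ¬(q + 1 ≤ i') := by omega
          rw [if_pos c1, if_neg c2]
          exact hmono' q i' hq1 (by omega) h3
      · by_cases c2 : q+1 ≤ i' ∧ i' ≤ r
        · rw [if_neg c1, if_pos c2]
          exact hmono' i q h1 (by omega) (by omega)
        · rw [if_neg c1, if_neg c2]
          exact hmono' i i' h1 h2 h3
    have hz'c : ∀ i, p ≤ i → i ≤ r → c ≤ z' i := by
      intro i h1 h2
      simp only [hz']
      by_cases c1 : q+1 ≤ i ∧ i ≤ r
      · simp [c1]; exact hzc q hq1 hq2
      · rw [if_neg c1]; exact hzc i h1 h2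
    have hz'tail : ∀ i, p ≤ i → i ≤ r → p + n ≤ i → z' i = z' r := by
      intro i h1 h2 h3
      simp only [hz']
      have hr : (q+1 ≤ r ∧ r ≤ r) := by omega
      rcases eq_or_lt_of_le h3 with h | h
      · have : ¬(q+1 ≤ i ∧ i ≤ r) := by omega
        simp [this, hr, ← hqeq, ← h]
      · have : q+1 ≤ i ∧ i ≤ r := by omega
        simp [this, hr]
    have hsum : ∑ i ∈ Finset.Icc p r, R i (z i) =
        (∑ i ∈ Finset.Icc p q, R i (z i)) + SS R (q+1) r (z r) := by
      rw [sum_split hq1 hqr]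
      congr 1
      unfold SS
      apply Finset.sum_congr rfl
      intro i hi
      rw [Finset.mem_Icc] at hi
      rw [htail i (by omega) hi.2 (by omega)]
    have hsum' : ∑ i ∈ Finset.Icc p r, R i (z' i) =
        (∑ i ∈ Finset.Icc p q, R i (z i)) + SS R (q+1) r (z q) := by
      rw [sum_split hq1 hqr]
      congr 1
      · apply Finset.sum_congr rfl
        intro i hi
        rw [Finset.mem_Icc] at hi
        have : ¬(q+1 ≤ i ∧ i ≤ r) := by omega
        simp only [hz', if_neg this]
      · unfold SS
        apply Finset.sum_congr rfl
        intro i hi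
        rw [Finset.mem_Icc] at hi
        have : q+1 ≤ i ∧ i ≤ r := by omega
        simp only [hz', if_pos this]
    have hstep : SS R (q+1) r (z q) ≤ SS R (q+1) r (z r) :=
      mono_above H (by omega) (by omega) hrm
        (le_trans (hsuf (q+1) (by omega) (by omega)) (hzc q hq1 hq2)) hzq.le
    have := ih z' hz'mono hz'c hz'tail
    rw [hsum'] at this
    rw [hsum]
    linarith

end Wlem


/-- comparison on a block from below, with strictness -/
lemma Wle (H : Hyp m R L U) {p r : ℕ} (hp1 : 1 ≤ p) (hpr : p ≤ r) (hrm : r ≤ m) {c : ℝ}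
    (hpre : ∀ e, p ≤ e → e ≤ r → c ≤ L p e) :
    ∀ z : ℕ → ℝ, (∀ i i', p ≤ i → i ≤ i' → i' ≤ r → z i ≤ z i') →
      (∀ i, p ≤ i → i ≤ r → z i ≤ c) →
      SS R p r c ≤ ∑ i ∈ Finset.Icc p r, R i (z i) ∧
      ((∃ i₀, p ≤ i₀ ∧ i₀ ≤ r ∧ z i₀ < c) →
        SS R p r c < ∑ i ∈ Finset.Icc p r, R i (z i)) := by
  suffices h : ∀ n, ∀ z : ℕ → ℝ, (∀ i i', p ≤ i → i ≤ i' → i' ≤ r → z i ≤ z i') →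
      (∀ i, p ≤ i → i ≤ r → z i ≤ c) →
      (∀ i, p ≤ i → i ≤ r → i + n ≤ r → z i = z p) →
      SS R p r c ≤ ∑ i ∈ Finset.Icc p r, R i (z i) ∧
      ((∃ i₀, p ≤ i₀ ∧ i₀ ≤ r ∧ z i₀ < c) →
        SS R p r c < ∑ i ∈ Finset.Icc p r, R i (z i)) by
    intro z hz1 hz2
    exact h (r - p + 1) z hz1 hz2 (fun i h1 h2 h3 => by omega)
  intro n
  induction n with
  | zero =>
    intro z hmono' hzc hhead
    have hconst : ∀ i ∈ Finset.Icc p r, R i (z i) = R i (z p) := by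
      intro i hi
      rw [Finset.mem_Icc] at hi
      rw [hhead i hi.1 hi.2 (by omega)]
    rw [Finset.sum_congr rfl hconst]
    have hvc : z p ≤ c := hzc p le_rfl hpr
    rcases eq_or_lt_of_le hvc with heq | hlt
    · constructor
      · rw [heq]
        exact le_rfl
      · rintro ⟨i₀, h1, h2, h3⟩
        rw [hhead i₀ h1 h2 (by omega), heq] at h3
        exact absurd h3 (lt_irrefl c)
    · have hstrict : SS R p r c < SS R p r (z p) :=
        anti_below H hp1 hpr hrm (hpre r hpr le_rfl) hlt
      exact ⟨hstrict.le, fun _ => hstrict⟩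
  | succ n ih =>
    intro z hmono' hzc hhead
    by_cases hcase : ∀ i, p ≤ i → i ≤ r → i + n ≤ r → z i = z p
    · exact ih z hmono' hzc hcase
    push_neg at hcase
    obtain ⟨q, hq1, hq2, hq3, hq4⟩ := hcase
    have hqeq : q + n = r := by
      have : ¬ (q + (n+1) ≤ r) := fun h => hq4 (hhead q hq1 hq2 h)
      omega
    have hqp : p < q := by
      rcases eq_or_lt_of_le hq1 with h | h
      · exact absurd (congrArg z h.symm) hq4
      · exact h
    have hzq : z p < z q := lt_of_le_of_ne (hmono' p q le_rfl hq1 hq2) (fun h => hq4 h.symm)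
    have hzqc : z q ≤ c := hzc q hq1 hq2
    have hvc : z p < c := lt_of_lt_of_le hzq hzqc
    set z' : ℕ → ℝ := fun i => if p ≤ i ∧ i ≤ q-1 then z q else z i with hz'
    have hz'mono : ∀ i i', p ≤ i → i ≤ i' → i' ≤ r → z' i ≤ z' i' := by
      intro i i' h1 h2 h3
      simp only [hz']
      by_cases c1 : p ≤ i ∧ i ≤ q-1
      · by_cases c2 : p ≤ i' ∧ i' ≤ q-1
        · simp [c1, c2]
        · simp [c1, c2]
          exact hmono' q i' hq1 (by omega) h3
      · have c2 : ¬(p ≤ i' ∧ i' ≤ q-1) := by omega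
        simp [c1, c2]
        exact hmono' i i' h1 h2 h3
    have hz'c : ∀ i, p ≤ i → i ≤ r → z' i ≤ c := by
      intro i h1 h2
      simp only [hz']
      by_cases c1 : p ≤ i ∧ i ≤ q-1
      · simp [c1]; exact hzqc
      · simp [c1]; exact hzc i h1 h2
    have hz'head : ∀ i, p ≤ i → i ≤ r → i + n ≤ r → z' i = z' p := by
      intro i h1 h2 h3
      simp only [hz']
      have hp' : p ≤ p ∧ p ≤ q - 1 := by omega
      by_cases c1 : p ≤ i ∧ i ≤ q-1
      · simp [c1, hp']
      · have : i = q := by omega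
        simp [c1, hp', this]
    have hsum : ∑ i ∈ Finset.Icc p r, R i (z i) =
        SS R p (q-1) (z p) + ∑ i ∈ Finset.Icc q r, R i (z i) := by
      rw [sum_split (show p ≤ q-1 by omega) (show q-1 < r by omega),
        show (q-1)+1 = q by omega]
      congr 1
      unfold SS
      apply Finset.sum_congr rfl
      intro i hi
      rw [Finset.mem_Icc] at hi
      rw [hhead i hi.1 (by omega) (by omega)]
    have hsum' : ∑ i ∈ Finset.Icc p r, R i (z' i) =
        SS R p (q-1) (z q) + ∑ i ∈ Finset.Icc q r, R i (z i) := by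
      rw [sum_split (show p ≤ q-1 by omega) (show q-1 < r by omega),
        show (q-1)+1 = q by omega]
      congr 1
      · unfold SS
        apply Finset.sum_congr rfl
        intro i hi
        rw [Finset.mem_Icc] at hi
        have : p ≤ i ∧ i ≤ q-1 := by omega
        simp [hz', this]
      · apply Finset.sum_congr rfl
        intro i hi
        rw [Finset.mem_Icc] at hi
        have : ¬(p ≤ i ∧ i ≤ q-1) := by omega
        simp [hz', this]
    have hstep : SS R p (q-1) (z q) < SS R p (q-1) (z p) :=
      anti_below H hp1 (by omega) (by omega)
        (le_trans hzqc (hpre (q-1) (by omega) (by omega))) hzq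
    have hih := ih z' hz'mono hz'c hz'head
    rw [hsum'] at hih
    rw [hsum]
    constructor
    · linarith [hih.1]
    · intro _
      linarith [hih.1]




section Peel
variable {ℓ : ℕ → ℝ}

lemma blockWge (H : Hyp m R L U) (hℓ : HEll m L ℓ) (hm : MonotoneOn ℓ (Set.Icc 1 m))
    {p : ℕ} (hp1 : 1 ≤ p) (hpm : p ≤ m) (z : ℕ → ℝ)
    (hzm : ∀ i i', p ≤ i → i ≤ i' → i' ≤ BE m ℓ p → z i ≤ z i')
    (hzc : ∀ i, p ≤ i → i ≤ BE m ℓ p → ℓ i ≤ z i) :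
    ∑ i ∈ Finset.Icc p (BE m ℓ p), R i (ℓ i) ≤ ∑ i ∈ Finset.Icc p (BE m ℓ p), R i (z i) := by
  set r := BE m ℓ p with hr
  have hpr : p ≤ r := BE_ge p
  have hrm : r ≤ m := BE_le hpm
  have hbeq : ℓ r = ℓ p := BE_eq m ℓ p
  have hend := BE_end hm hp1 hpm
  have hsuf : ∀ t, p ≤ t → t ≤ r → L t r ≤ ℓ p := by
    intro t h1 h2
    have := Psuf H hℓ hm (by omega) hrm hend t (by omega) h2
      (by rw [BE_block hm hp1 hpm h1 h2, hbeq])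
    rwa [hbeq] at this
  have hc : ∀ i, p ≤ i → i ≤ r → ℓ p ≤ z i := by
    intro i h1 h2
    rw [← BE_block hm hp1 hpm h1 h2]
    exact hzc i h1 h2
  have hkey := Wge H hp1 hpr hrm hsuf z hzm hc
  have hcongr : ∑ i ∈ Finset.Icc p r, R i (ℓ i) = SS R p r (ℓ p) := by
    unfold SS
    apply Finset.sum_congr rfl
    intro i hi
    rw [Finset.mem_Icc] at hi
    rw [BE_block hm hp1 hpm hi.1 hi.2]
  rw [hcongr]
  exact hkey

lemma blockWle (H : Hyp m R L U) (hℓ : HEll m L ℓ) (hm : MonotoneOn ℓ (Set.Icc 1 m))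
    {p : ℕ} (hp1 : 1 ≤ p) (hpm : p ≤ m) (hstart : p = 1 ∨ ℓ (p-1) < ℓ p) (z : ℕ → ℝ)
    (hzm : ∀ i i', p ≤ i → i ≤ i' → i' ≤ BE m ℓ p → z i ≤ z i')
    (hzc : ∀ i, p ≤ i → i ≤ BE m ℓ p → z i ≤ ℓ i) :
    ∑ i ∈ Finset.Icc p (BE m ℓ p), R i (ℓ i) ≤ ∑ i ∈ Finset.Icc p (BE m ℓ p), R i (z i) ∧
    ((∃ i₀, p ≤ i₀ ∧ i₀ ≤ BE m ℓ p ∧ z i₀ < ℓ i₀) →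
      ∑ i ∈ Finset.Icc p (BE m ℓ p), R i (ℓ i) < ∑ i ∈ Finset.Icc p (BE m ℓ p), R i (z i)) := by
  set r := BE m ℓ p with hr
  have hpr : p ≤ r := BE_ge p
  have hrm : r ≤ m := BE_le hpm
  have hpre : ∀ e, p ≤ e → e ≤ r → ℓ p ≤ L p e := by
    intro e h1 h2
    exact Ppre H hℓ hp1 hpm hstart h1 (by omega)
  have hc : ∀ i, p ≤ i → i ≤ r → z i ≤ ℓ p := by
    intro i h1 h2
    rw [← BE_block hm hp1 hpm h1 h2]
    exact hzc i h1 h2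
  have hkey := Wle H hp1 hpr hrm hpre z hzm hc
  have hcongr : ∑ i ∈ Finset.Icc p r, R i (ℓ i) = SS R p r (ℓ p) := by
    unfold SS
    apply Finset.sum_congr rfl
    intro i hi
    rw [Finset.mem_Icc] at hi
    rw [BE_block hm hp1 hpm hi.1 hi.2]
  rw [hcongr]
  refine ⟨hkey.1, ?_⟩
  rintro ⟨i₀, h1, h2, h3⟩
  apply hkey.2
  refine ⟨i₀, h1, h2, ?_⟩
  rwa [BE_block hm hp1 hpm h1 h2] at h3

lemma Hge (H : Hyp m R L U) (hℓ : HEll m L ℓ) (hm : MonotoneOn ℓ (Set.Icc 1 m)) :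
    ∀ n p, 1 ≤ p → p ≤ m → m - p ≤ n → (p = 1 ∨ ℓ (p-1) < ℓ p) →
    ∀ z : ℕ → ℝ, (∀ i i', p ≤ i → i ≤ i' → i' ≤ m → z i ≤ z i') →
      (∀ i, p ≤ i → i ≤ m → ℓ i ≤ z i) →
      ∑ i ∈ Finset.Icc p m, R i (ℓ i) ≤ ∑ i ∈ Finset.Icc p m, R i (z i) := by
  intro n
  induction n with
  | zero =>
    intro p hp1 hpm hn hstart z hzm hzc
    have hpm' : p = m := by omega
    have hbe : BE m ℓ p = m := by
      have := BE_ge (m := m) (ℓ := ℓ) p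
      have := BE_le (ℓ := ℓ) hpm
      omega
    have := blockWge H hℓ hm hp1 hpm z (by rw [hbe]; exact hzm) (by rw [hbe]; exact hzc)
    rwa [hbe] at this
  | succ n ih =>
    intro p hp1 hpm hn hstart z hzm hzc
    set r := BE m ℓ p with hr
    have hpr : p ≤ r := BE_ge p
    have hrm : r ≤ m := BE_le hpm
    have hblock := blockWge H hℓ hm hp1 hpm z
      (fun i i' h1 h2 h3 => hzm i i' h1 h2 (by omega))
      (fun i h1 h2 => hzc i h1 (by omega))
    rcases eq_or_lt_of_le hrm with heq | hlt
    · rw [← hr] at hblock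
      rw [← heq]
      exact hblock
    · have hend := BE_end hm hp1 hpm
      have hjump : ℓ r < ℓ (r+1) := by
        rcases hend with h | h
        · omega
        · exact h
      have hrec := ih (r+1) (by omega) (by omega) (by omega) (by right; simpa using hjump)
        z (fun i i' h1 h2 h3 => hzm i i' (by omega) h2 h3)
        (fun i h1 h2 => hzc i (by omega) h2)
      rw [sum_split (f := fun i => R i (ℓ i)) hpr hlt,
        sum_split (f := fun i => R i (z i)) hpr hlt]
      rw [← hr] at hblock
      exact add_le_add hblock hrec

lemma Hle (H : Hyp m R L U) (hℓ : HEll m L ℓ) (hm : MonotoneOn ℓ (Set.Icc 1 m)) :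
    ∀ n p, 1 ≤ p → p ≤ m → m - p ≤ n → (p = 1 ∨ ℓ (p-1) < ℓ p) →
    ∀ z : ℕ → ℝ, (∀ i i', p ≤ i → i ≤ i' → i' ≤ m → z i ≤ z i') →
      (∀ i, p ≤ i → i ≤ m → z i ≤ ℓ i) →
      (∑ i ∈ Finset.Icc p m, R i (ℓ i) ≤ ∑ i ∈ Finset.Icc p m, R i (z i)) ∧
      ((∃ i₀, p ≤ i₀ ∧ i₀ ≤ m ∧ z i₀ < ℓ i₀) →
        ∑ i ∈ Finset.Icc p m, R i (ℓ i) < ∑ i ∈ Finset.Icc p m, R i (z i)) := by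
  intro n
  induction n with
  | zero =>
    intro p hp1 hpm hn hstart z hzm hzc
    have hpm' : p = m := by omega
    have hbe : BE m ℓ p = m := by
      have := BE_ge (m := m) (ℓ := ℓ) p
      have := BE_le (ℓ := ℓ) hpm
      omega
    have := blockWle H hℓ hm hp1 hpm hstart z (by rw [hbe]; exact hzm) (by rw [hbe]; exact hzc)
    rwa [hbe] at this
  | succ n ih =>
    intro p hp1 hpm hn hstart z hzm hzc
    set r := BE m ℓ p with hr
    have hpr : p ≤ r := BE_ge p
    have hrm : r ≤ m := BE_le hpm
    have hblock := blockWle H hℓ hm hp1 hpm hstart z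
      (fun i i' h1 h2 h3 => hzm i i' h1 h2 (by omega))
      (fun i h1 h2 => hzc i h1 (by omega))
    rw [← hr] at hblock
    rcases eq_or_lt_of_le hrm with heq | hlt
    · rw [← heq]
      exact hblock
    · have hend := BE_end hm hp1 hpm
      have hjump : ℓ r < ℓ (r+1) := by
        rcases hend with h | h
        · omega
        · exact h
      have hrec := ih (r+1) (by omega) (by omega) (by omega) (by right; simpa using hjump)
        z (fun i i' h1 h2 h3 => hzm i i' (by omega) h2 h3)
        (fun i h1 h2 => hzc i (by omega) h2)
      rw [sum_split (f := fun i => R i (ℓ i)) hpr hlt,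
        sum_split (f := fun i => R i (z i)) hpr hlt]
      constructor
      · exact add_le_add hblock.1 hrec.1
      · rintro ⟨i₀, h1, h2, h3⟩
        rcases le_or_gt i₀ r with hc | hc
        · have := hblock.2 ⟨i₀, h1, hc, h3⟩
          linarith [hrec.1]
        · have := hrec.2 ⟨i₀, by omega, h2, h3⟩
          linarith [hblock.1]

end Peel


section Master
variable {ℓ : ℕ → ℝ}

theorem ML (hm1 : 1 ≤ m) (H : Hyp m R L U) (hℓ : HEll m L ℓ) :
    MonotoneOn ℓ (Set.Icc 1 m) ∧
    (∀ z : ℕ → ℝ, MonotoneOn z (Set.Icc 1 m) →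
      ∑ j ∈ Finset.Icc 1 m, R j (ℓ j) ≤ ∑ j ∈ Finset.Icc 1 m, R j (z j)) ∧
    (∀ x : ℕ → ℝ, MonotoneOn x (Set.Icc 1 m) →
      (∀ z : ℕ → ℝ, MonotoneOn z (Set.Icc 1 m) →
        ∑ j ∈ Finset.Icc 1 m, R j (x j) ≤ ∑ j ∈ Finset.Icc 1 m, R j (z j)) →
      ∀ j, 1 ≤ j → j ≤ m → ℓ j ≤ x j) ∧
    (∀ j, ∀ (h1 : 1 ≤ j) (h2 : j ≤ m),
      ℓ j = (Finset.Icc j m).inf' (Finset.nonempty_Icc.mpr h2) fun b =>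
        (Finset.Icc 1 j).sup' (Finset.nonempty_Icc.mpr h1) fun a => L a b) := by
  have hmono := ell_mono hℓ
  have toAll : ∀ (z : ℕ → ℝ), MonotoneOn z (Set.Icc 1 m) →
      ∀ i i', 1 ≤ i → i ≤ i' → i' ≤ m → z i ≤ z i' := by
    intro z hz i i' h1 h2 h3
    exact hz (Set.mem_Icc.mpr ⟨h1, by omega⟩) (Set.mem_Icc.mpr ⟨by omega, h3⟩) h2
  have hmonoAll := toAll ℓ hmono
  have sumid : ∀ z : ℕ → ℝ,
      (∑ j ∈ Finset.Icc 1 m, R j (max (z j) (ℓ j))) +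
      (∑ j ∈ Finset.Icc 1 m, R j (min (z j) (ℓ j))) =
      (∑ j ∈ Finset.Icc 1 m, R j (z j)) + ∑ j ∈ Finset.Icc 1 m, R j (ℓ j) := by
    intro z
    rw [← Finset.sum_add_distrib, ← Finset.sum_add_distrib]
    apply Finset.sum_congr rfl
    intro i _
    rcases le_total (z i) (ℓ i) with h | h
    · rw [max_eq_right h, min_eq_left h, add_comm]
    · rw [max_eq_left h, min_eq_right h]
  have hargmax : ∀ z : ℕ → ℝ, MonotoneOn z (Set.Icc 1 m) →
      ∑ j ∈ Finset.Icc 1 m, R j (ℓ j) ≤ ∑ j ∈ Finset.Icc 1 m, R j (max (z j) (ℓ j)) := by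
    intro z hz
    exact Hge H hℓ hmono m 1 le_rfl hm1 (by omega) (Or.inl rfl) _
      (fun i i' h1 h2 h3 => max_le_max (toAll z hz i i' h1 h2 h3) (hmonoAll i i' h1 h2 h3))
      (fun i _ _ => le_max_right _ _)
  have hargmin : ∀ z : ℕ → ℝ, MonotoneOn z (Set.Icc 1 m) →
      (∑ j ∈ Finset.Icc 1 m, R j (ℓ j) ≤ ∑ j ∈ Finset.Icc 1 m, R j (min (z j) (ℓ j))) ∧
      ((∃ i₀, 1 ≤ i₀ ∧ i₀ ≤ m ∧ min (z i₀) (ℓ i₀) < ℓ i₀) →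
        ∑ j ∈ Finset.Icc 1 m, R j (ℓ j) < ∑ j ∈ Finset.Icc 1 m, R j (min (z j) (ℓ j))) := by
    intro z hz
    exact Hle H hℓ hmono m 1 le_rfl hm1 (by omega) (Or.inl rfl) _
      (fun i i' h1 h2 h3 => min_le_min (toAll z hz i i' h1 h2 h3) (hmonoAll i i' h1 h2 h3))
      (fun i _ _ => min_le_right _ _)
  refine ⟨hmono, ?_, ?_, identity1 H hℓ⟩
  · intro z hz
    have h1 := hargmax z hz
    have h2 := (hargmin z hz).1
    have h3 := sumid z
    linarith
  · intro x hx hopt j hj1 hjm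
    by_contra hcon
    push_neg at hcon
    have hminmono : MonotoneOn (fun j => max (x j) (ℓ j)) (Set.Icc 1 m) := by
      intro i hi i' hi' hii'
      exact max_le_max (hx hi hi' hii') (hmono hi hi' hii')
    have h1 := hopt _ hminmono
    have h2 := (hargmin x hx).1
    have h3 := sumid x
    have h4 := (hargmin x hx).2 ⟨j, hj1, hjm, by rw [min_eq_left hcon.le]; exact hcon⟩
    linarith

end Master


section Reflect

lemma sum_reflect (m : ℕ) (g : ℕ → ℝ) {a b : ℕ} (ha : 1 ≤ a) (hab : a ≤ b) (hb : b ≤ m) :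
    ∑ j ∈ Finset.Icc a b, g (m+1-j) = ∑ i ∈ Finset.Icc (m+1-b) (m+1-a), g i := by
  apply Finset.sum_nbij' (fun j => m+1-j) (fun i => m+1-i)
  · intro x hx; rw [Finset.mem_Icc] at hx ⊢; omega
  · intro x hx; rw [Finset.mem_Icc] at hx ⊢; omega
  · intro x hx; rw [Finset.mem_Icc] at hx; omega
  · intro x hx; rw [Finset.mem_Icc] at hx; omega
  · intro x hx; rfl

lemma sup'_reflect (m : ℕ) (g : ℕ → ℝ) {a b a' b' : ℕ} (ha : 1 ≤ a) (hab : a ≤ b) (hb : b ≤ m)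
    (ha' : a' = m+1-b) (hb' : b' = m+1-a)
    (H1 : (Finset.Icc a b).Nonempty) (H2 : (Finset.Icc a' b').Nonempty) :
    (Finset.Icc a b).sup' H1 (fun i => g (m+1-i)) = (Finset.Icc a' b').sup' H2 g := by
  subst ha' hb'
  apply le_antisymm
  · apply Finset.sup'_le
    intro i hi
    rw [Finset.mem_Icc] at hi
    exact Finset.le_sup' g (Finset.mem_Icc.mpr (by omega))
  · apply Finset.sup'_le
    intro i hi
    rw [Finset.mem_Icc] at hi
    have : g i = (fun i => g (m+1-i)) (m+1-i) := by
      simp only []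
      rw [show m+1-(m+1-i) = i by omega]
    rw [this]
    exact Finset.le_sup' (fun i => g (m+1-i)) (Finset.mem_Icc.mpr (by omega))

lemma inf'_reflect (m : ℕ) (g : ℕ → ℝ) {a b a' b' : ℕ} (ha : 1 ≤ a) (hab : a ≤ b) (hb : b ≤ m)
    (ha' : a' = m+1-b) (hb' : b' = m+1-a)
    (H1 : (Finset.Icc a b).Nonempty) (H2 : (Finset.Icc a' b').Nonempty) :
    (Finset.Icc a b).inf' H1 (fun i => g (m+1-i)) = (Finset.Icc a' b').inf' H2 g := by
  subst ha' hb'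
  apply le_antisymm
  · apply Finset.le_inf'
    intro i hi
    rw [Finset.mem_Icc] at hi
    have : g i = (fun i => g (m+1-i)) (m+1-i) := by
      simp only []
      rw [show m+1-(m+1-i) = i by omega]
    rw [this]
    exact Finset.inf'_le (fun i => g (m+1-i)) (Finset.mem_Icc.mpr (by omega))
  · apply Finset.le_inf'
    intro i hi
    rw [Finset.mem_Icc] at hi
    exact Finset.inf'_le g (Finset.mem_Icc.mpr (by omega))

lemma inf'_neg_eq (s : Finset ℕ) (H : s.Nonempty) (f : ℕ → ℝ) :
    s.inf' H (fun b => -(f b)) = -(s.sup' H f) := by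
  apply le_antisymm
  · obtain ⟨b, hb, hbe⟩ := Finset.exists_mem_eq_sup' H f
    rw [hbe]
    exact Finset.inf'_le (fun b => -(f b)) hb
  · apply Finset.le_inf'
    intro b hb
    simp only [neg_le_neg_iff]
    exact Finset.le_sup' f hb

lemma sup'_neg_eq (s : Finset ℕ) (H : s.Nonempty) (f : ℕ → ℝ) :
    s.sup' H (fun b => -(f b)) = -(s.inf' H f) := by
  apply le_antisymm
  · apply Finset.sup'_le
    intro b hb
    simp only [neg_le_neg_iff]
    exact Finset.inf'_le f hb
  · obtain ⟨b, hb, hbe⟩ := Finset.exists_mem_eq_inf' H f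
    rw [hbe]
    exact Finset.le_sup' (fun b => -(f b)) hb

variable {m : ℕ} {R : ℕ → ℝ → ℝ} {L U : ℕ → ℕ → ℝ}

lemma SS_reflect {a b : ℕ} (ha : 1 ≤ a) (hab : a ≤ b) (hb : b ≤ m) (q : ℝ) :
    SS (fun j q => R (m+1-j) (-q)) a b q = SS R (m+1-b) (m+1-a) (-q) := by
  unfold SS
  exact sum_reflect m (fun i => R i (-q)) ha hab hb

lemma Hyp_reflect (H : Hyp m R L U) :
    Hyp m (fun j q => R (m+1-j) (-q)) (fun a b => -(U (m+1-b) (m+1-a)))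
      (fun a b => -(L (m+1-b) (m+1-a))) := by
  obtain ⟨hLU, hmin, hanti, hmono⟩ := H
  refine ⟨?_, ?_, ?_, ?_⟩
  · intro a b h1 h2 h3
    show -(U (m+1-b) (m+1-a)) ≤ -(L (m+1-b) (m+1-a))
    have := hLU (m+1-b) (m+1-a) (by omega) (by omega) (by omega)
    linarith
  · intro a b h1 h2 h3 q
    rw [SS_reflect h1 h2 h3]
    constructor
    · intro h
      have h' : ∀ r : ℝ, SS R (m+1-b) (m+1-a) (-q) ≤ SS R (m+1-b) (m+1-a) r := by
        intro r
        have := h (-r)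
        rwa [SS_reflect h1 h2 h3, neg_neg] at this
      have := (hmin (m+1-b) (m+1-a) (by omega) (by omega) (by omega) (-q)).mp h'
      rw [Set.mem_Icc] at this ⊢
      constructor
      · show -(U (m+1-b) (m+1-a)) ≤ q
        linarith [this.1, this.2]
      · show q ≤ -(L (m+1-b) (m+1-a))
        linarith [this.1, this.2]
    · intro h r
      rw [SS_reflect h1 h2 h3]
      rw [Set.mem_Icc] at h
      have ha' : -(U (m+1-b) (m+1-a)) ≤ q := h.1
      have hb' : q ≤ -(L (m+1-b) (m+1-a)) := h.2
      apply (hmin (m+1-b) (m+1-a) (by omega) (by omega) (by omega) (-q)).mpr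
      rw [Set.mem_Icc]
      constructor <;> linarith
  · intro a b h1 h2 h3 x hx y hy hxy
    simp only [Set.mem_Iic] at hx hy
    show SS (fun j q => R (m+1-j) (-q)) a b y < SS (fun j q => R (m+1-j) (-q)) a b x
    rw [SS_reflect h1 h2 h3, SS_reflect h1 h2 h3]
    exact hmono (m+1-b) (m+1-a) (by omega) (by omega) (by omega)
      (Set.mem_Ici.mpr (by linarith)) (Set.mem_Ici.mpr (by linarith)) (by linarith)
  · intro a b h1 h2 h3 x hx y hy hxy
    simp only [Set.mem_Ici] at hx hy
    show SS (fun j q => R (m+1-j) (-q)) a b x < SS (fun j q => R (m+1-j) (-q)) a b y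
    rw [SS_reflect h1 h2 h3, SS_reflect h1 h2 h3]
    exact hanti (m+1-b) (m+1-a) (by omega) (by omega) (by omega)
      (Set.mem_Iic.mpr (by linarith)) (Set.mem_Iic.mpr (by linarith)) (by linarith)

end Reflect


section Uside
variable {m : ℕ} {R : ℕ → ℝ → ℝ} {L U : ℕ → ℕ → ℝ}

def HU (m : ℕ) (U : ℕ → ℕ → ℝ) (u : ℕ → ℝ) : Prop :=
  ∀ j, ∀ (h1 : 1 ≤ j) (h2 : j ≤ m),
      u j = (Finset.Icc j m).inf' (Finset.nonempty_Icc.mpr h2) fun b =>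
        (Finset.Icc 1 j).sup' (Finset.nonempty_Icc.mpr h1) fun a => U a b

lemma HEll_reflect (hm1 : 1 ≤ m) {u : ℕ → ℝ} (hu : HU m U u) :
    HEll m (fun a b => -(U (m+1-b) (m+1-a))) (fun j => -(u (m+1-j))) := by
  intro j h1 h2
  have hNE : ∀ {x y : ℕ}, x ≤ y → (Finset.Icc x y).Nonempty := fun h => Finset.nonempty_Icc.mpr h
  -- inner rewrite
  have step1 : ∀ a ∈ Finset.Icc 1 j,
      ((Finset.Icc j m).inf' (Finset.nonempty_Icc.mpr h2)
        fun b => -(U (m+1-b) (m+1-a))) =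
      -((Finset.Icc 1 (m+1-j)).sup' (hNE (by omega))
        fun b' => U b' (m+1-a)) := by
    intro a ha
    rw [inf'_neg_eq]
    congr 1
    exact sup'_reflect m (fun i => U i (m+1-a)) h1 h2 le_rfl (by omega) (by omega) _ _
  rw [Finset.sup'_congr (Finset.nonempty_Icc.mpr h1) rfl step1]
  rw [sup'_neg_eq]
  have step3 : (Finset.Icc 1 j).inf' (Finset.nonempty_Icc.mpr h1)
      (fun a => (Finset.Icc 1 (m+1-j)).sup' (hNE (by omega)) fun b' => U b' (m+1-a)) =
      (Finset.Icc (m+1-j) m).inf' (hNE (by omega))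
      (fun b'' => (Finset.Icc 1 (m+1-j)).sup' (hNE (by omega)) fun b' => U b' b'') :=
    inf'_reflect m (fun b'' => (Finset.Icc 1 (m+1-j)).sup' (hNE (by omega)) fun b' => U b' b'')
      le_rfl h1 (le_trans h2 (by omega)) (by omega) (by omega) _ _
  rw [step3]
  rw [← hu (m+1-j) (by omega) (by omega)]

theorem MLu (hm1 : 1 ≤ m) (H : Hyp m R L U) {u : ℕ → ℝ} (hu : HU m U u) :
    MonotoneOn u (Set.Icc 1 m) ∧
    (∀ z : ℕ → ℝ, MonotoneOn z (Set.Icc 1 m) →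
      ∑ j ∈ Finset.Icc 1 m, R j (u j) ≤ ∑ j ∈ Finset.Icc 1 m, R j (z j)) ∧
    (∀ x : ℕ → ℝ, MonotoneOn x (Set.Icc 1 m) →
      (∀ z : ℕ → ℝ, MonotoneOn z (Set.Icc 1 m) →
        ∑ j ∈ Finset.Icc 1 m, R j (x j) ≤ ∑ j ∈ Finset.Icc 1 m, R j (z j)) →
      ∀ j, 1 ≤ j → j ≤ m → x j ≤ u j) ∧
    (∀ j, ∀ (h1 : 1 ≤ j) (h2 : j ≤ m),
      ((Finset.Icc j m).inf' (Finset.nonempty_Icc.mpr h2) fun b =>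
        (Finset.Icc 1 j).sup' (Finset.nonempty_Icc.mpr h1) fun a => U a b) =
      ((Finset.Icc 1 j).sup' (Finset.nonempty_Icc.mpr h1) fun a =>
        (Finset.Icc j m).inf' (Finset.nonempty_Icc.mpr h2) fun b => U a b)) := by
  have hNE : ∀ {x y : ℕ}, x ≤ y → (Finset.Icc x y).Nonempty := fun h => Finset.nonempty_Icc.mpr h
  set R' : ℕ → ℝ → ℝ := fun j q => R (m+1-j) (-q) with hR'
  set ℓ' : ℕ → ℝ := fun j => -(u (m+1-j)) with hℓ'def
  have E := ML hm1 (Hyp_reflect H) (HEll_reflect hm1 hu)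
  -- transfer of sums
  have Tq : ∀ y : ℕ → ℝ, ∑ j ∈ Finset.Icc 1 m, R' j (y j) =
      ∑ i ∈ Finset.Icc 1 m, R i (-(y (m+1-i))) := by
    intro y
    have e1 : ∑ j ∈ Finset.Icc 1 m, R' j (y j) =
        ∑ j ∈ Finset.Icc 1 m, (fun i => R i (-(y (m+1-i)))) (m+1-j) := by
      apply Finset.sum_congr rfl
      intro j hj
      rw [Finset.mem_Icc] at hj
      simp only [hR']
      rw [show m+1-(m+1-j) = j by omega]
    rw [e1, sum_reflect m (fun i => R i (-(y (m+1-i)))) le_rfl hm1 le_rfl]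
    rw [show m+1-m = 1 by omega, show m+1-1 = m by omega]
  have Tu : ∑ j ∈ Finset.Icc 1 m, R' j (ℓ' j) = ∑ i ∈ Finset.Icc 1 m, R i (u i) := by
    rw [Tq]
    apply Finset.sum_congr rfl
    intro i hi
    rw [Finset.mem_Icc] at hi
    simp only [hℓ'def]
    rw [neg_neg, show m+1-(m+1-i) = i by omega]
  have Tρ : ∀ z : ℕ → ℝ, ∑ j ∈ Finset.Icc 1 m, R' j (-(z (m+1-j))) =
      ∑ i ∈ Finset.Icc 1 m, R i (z i) := by
    intro z
    rw [Tq]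
    apply Finset.sum_congr rfl
    intro i hi
    rw [Finset.mem_Icc] at hi
    rw [neg_neg, show m+1-(m+1-i) = i by omega]
  have ρmono : ∀ z : ℕ → ℝ, MonotoneOn z (Set.Icc 1 m) →
      MonotoneOn (fun j => -(z (m+1-j))) (Set.Icc 1 m) := by
    intro z hz i hi i' hi' hii'
    simp only [Set.mem_Icc] at hi hi'
    simp only [neg_le_neg_iff]
    exact hz (Set.mem_Icc.mpr ⟨by omega, by omega⟩) (Set.mem_Icc.mpr ⟨by omega, by omega⟩)
      (by omega)
  refine ⟨?_, ?_, ?_, ?_⟩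
  · -- monotone
    intro i hi i' hi' hii'
    simp only [Set.mem_Icc] at hi hi'
    have h2 := E.1 (Set.mem_Icc.mpr (⟨by omega, by omega⟩ : 1 ≤ m+1-i' ∧ m+1-i' ≤ m))
      (Set.mem_Icc.mpr (⟨by omega, by omega⟩ : 1 ≤ m+1-i ∧ m+1-i ≤ m)) (by omega)
    simp only [hℓ'def] at h2
    rw [show m+1-(m+1-i') = i' by omega, show m+1-(m+1-i) = i by omega] at h2
    linarith
  · -- minimizer
    intro z hz
    have := E.2.1 (fun j => -(z (m+1-j))) (ρmono z hz)
    rwa [Tu, Tρ] at this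
  · -- squeeze above
    intro x hx hopt j hj1 hjm
    have hopt' : ∀ z' : ℕ → ℝ, MonotoneOn z' (Set.Icc 1 m) →
        ∑ j ∈ Finset.Icc 1 m, R' j (-(x (m+1-j))) ≤ ∑ j ∈ Finset.Icc 1 m, R' j (z' j) := by
      intro z' hz'
      rw [Tρ x, Tq z']
      exact hopt (fun i => -(z' (m+1-i))) (ρmono z' hz')
    have hkey := E.2.2.1 (fun j => -(x (m+1-j))) (ρmono x hx) hopt' (m+1-j)
      (by omega) (by omega)
    simp only [show m+1-(m+1-j) = j from by omega] at hkey
    linarith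
  · -- identity 2
    intro j h1 h2
    have hId := E.2.2.2 (m+1-j) (by omega) (by omega)
    have inner : ∀ b ∈ Finset.Icc (m+1-j) m,
        ((Finset.Icc 1 (m+1-j)).sup' (hNE (by omega))
          fun a => (fun a b => -(U (m+1-b) (m+1-a))) a b) =
        -((Finset.Icc j m).inf' (hNE h2) fun a' => U (m+1-b) a') := by
      intro b hb
      show ((Finset.Icc 1 (m+1-j)).sup' (hNE (by omega))
          fun a => -(U (m+1-b) (m+1-a))) = _
      rw [sup'_neg_eq]
      congr 1
      exact inf'_reflect m (fun a' => U (m+1-b) a') le_rfl (by omega) (by omega)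
        (by omega) (by omega) _ _
    rw [Finset.inf'_congr (hNE (by omega)) rfl inner] at hId
    rw [inf'_neg_eq] at hId
    have outer : ((Finset.Icc (m+1-j) m).sup' (hNE (by omega))
        fun b => (Finset.Icc j m).inf' (hNE h2) fun a' => U (m+1-b) a') =
        (Finset.Icc 1 j).sup' (hNE h1)
        fun a => (Finset.Icc j m).inf' (hNE h2) fun b => U a b :=
      sup'_reflect m (fun i => (Finset.Icc j m).inf' (hNE h2) fun a' => U i a')
        (by omega) (by omega) le_rfl (by omega) (by omega) _ _
    rw [outer] at hId
    simp only [show m+1-(m+1-j) = j from by omega] at hId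
    have := neg_injective hId
    rw [hu j h1 h2] at this
    rw [← hu j h1 h2]
    rw [hu j h1 h2]
    exact this

end Uside

end IsoReg

/-- Min-max identities and extremal minimizers of isotonic regression. -/
theorem stmt3 (m : ℕ) (hm : 1 ≤ m) (R : ℕ → ℝ → ℝ) (L U : ℕ → ℕ → ℝ)
    (hLU : ∀ a b, 1 ≤ a → a ≤ b → b ≤ m → L a b ≤ U a b)
    (hmin : ∀ a b, 1 ≤ a → a ≤ b → b ≤ m → ∀ q : ℝ,
      (∀ r : ℝ, (∑ j ∈ Finset.Icc a b, R j q) ≤ ∑ j ∈ Finset.Icc a b, R j r) ↔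
        q ∈ Set.Icc (L a b) (U a b))
    (hanti : ∀ a b, 1 ≤ a → a ≤ b → b ≤ m →
      StrictAntiOn (fun q => ∑ j ∈ Finset.Icc a b, R j q) (Set.Iic (L a b)))
    (hmono : ∀ a b, 1 ≤ a → a ≤ b → b ≤ m →
      StrictMonoOn (fun q => ∑ j ∈ Finset.Icc a b, R j q) (Set.Ici (U a b)))
    (ℓ u : ℕ → ℝ)
    (hℓ : ∀ j, ∀ (h1 : 1 ≤ j) (h2 : j ≤ m),
      ℓ j = (Finset.Icc 1 j).sup' (Finset.nonempty_Icc.mpr h1) fun a =>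
        (Finset.Icc j m).inf' (Finset.nonempty_Icc.mpr h2) fun b => L a b)
    (hu : ∀ j, ∀ (h1 : 1 ≤ j) (h2 : j ≤ m),
      u j = (Finset.Icc j m).inf' (Finset.nonempty_Icc.mpr h2) fun b =>
        (Finset.Icc 1 j).sup' (Finset.nonempty_Icc.mpr h1) fun a => U a b) :
    -- min-max identities
    (∀ j, ∀ (h1 : 1 ≤ j) (h2 : j ≤ m),
      ((Finset.Icc 1 j).sup' (Finset.nonempty_Icc.mpr h1) fun a =>
        (Finset.Icc j m).inf' (Finset.nonempty_Icc.mpr h2) fun b => L a b) =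
      ((Finset.Icc j m).inf' (Finset.nonempty_Icc.mpr h2) fun b =>
        (Finset.Icc 1 j).sup' (Finset.nonempty_Icc.mpr h1) fun a => L a b) ∧
      ((Finset.Icc j m).inf' (Finset.nonempty_Icc.mpr h2) fun b =>
        (Finset.Icc 1 j).sup' (Finset.nonempty_Icc.mpr h1) fun a => U a b) =
      ((Finset.Icc 1 j).sup' (Finset.nonempty_Icc.mpr h1) fun a =>
        (Finset.Icc j m).inf' (Finset.nonempty_Icc.mpr h2) fun b => U a b)) ∧
    -- ℓ is a minimizer over the isotone cone
    (MonotoneOn ℓ (Set.Icc 1 m) ∧ ∀ z : ℕ → ℝ, MonotoneOn z (Set.Icc 1 m) →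
      (∑ j ∈ Finset.Icc 1 m, R j (ℓ j)) ≤ ∑ j ∈ Finset.Icc 1 m, R j (z j)) ∧
    -- u is a minimizer over the isotone cone
    (MonotoneOn u (Set.Icc 1 m) ∧ ∀ z : ℕ → ℝ, MonotoneOn z (Set.Icc 1 m) →
      (∑ j ∈ Finset.Icc 1 m, R j (u j)) ≤ ∑ j ∈ Finset.Icc 1 m, R j (z j)) ∧
    -- every minimizer is squeezed between ℓ and u
    (∀ x : ℕ → ℝ, MonotoneOn x (Set.Icc 1 m) →
      (∀ z : ℕ → ℝ, MonotoneOn z (Set.Icc 1 m) →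
        (∑ j ∈ Finset.Icc 1 m, R j (x j)) ≤ ∑ j ∈ Finset.Icc 1 m, R j (z j)) →
      ∀ j, 1 ≤ j → j ≤ m → ℓ j ≤ x j ∧ x j ≤ u j) := by
  have H : IsoReg.Hyp m R L U := ⟨hLU, hmin, hanti, hmono⟩
  have Eℓ := IsoReg.ML hm H hℓ
  have Eu := IsoReg.MLu hm H hu
  refine ⟨?_, ⟨Eℓ.1, Eℓ.2.1⟩, ⟨Eu.1, Eu.2.1⟩, ?_⟩
  · intro j h1 h2
    exact ⟨(hℓ j h1 h2).symm.trans (Eℓ.2.2.2 j h1 h2), Eu.2.2.2 j h1 h2⟩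
  · intro x hx hopt j h1 h2
    exact ⟨Eℓ.2.2.1 x hx hopt j h1 h2, Eu.2.2.1 x hx hopt j h1 h2⟩
end

section
/- Suppose in addition to the standing assumptions that each R_j is convex, and let ℓ and u be the componentwise smallest and largest elements of 𝒬. If x ∈ ℝ^m_↑ satisfies ℓ ≤ x ≤ u componentwise and the set {j < m : x_j < x_{j+1}} is contained in {j < m : ℓ_j < ℓ_{j+1} or u_j < u_{j+1}}, then x ∈ 𝒬. Moreover, each R_j is affine (linear plus constant) on the interval [ℓ_j, u_j]. -/
private lemma monoOn_Icc_succ_aux {m : ℕ} (f : ℕ → ℝ)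
    (h : ∀ j, 1 ≤ j → j + 1 ≤ m → f j ≤ f (j + 1)) :
    MonotoneOn f (Set.Icc 1 m) := by
  have key : ∀ a, 1 ≤ a → ∀ b, a ≤ b → b ≤ m → f a ≤ f b := by
    intro a ha1 b
    induction b with
    | zero => intro h0 _; exact absurd (le_trans ha1 h0) (by omega)
    | succ k ih =>
        intro hab hbm
        rcases Nat.eq_or_lt_of_le hab with h' | h'
        · rw [h']
        · exact (ih (Nat.lt_succ_iff.mp h') (by omega)).trans (h k (by omega) hbm)
  intro a ha b hb hab
  exact key a ha.1 b hab hb.2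

/-- For convex losses: any isotone vector squeezed between the extremal minimizers ℓ and u
whose jump set is contained in the joint jump set of ℓ and u is a minimizer, and each
loss function is affine on `[ℓ_j, u_j]`. -/
theorem stmt5 (m : ℕ) (hm : 1 ≤ m) (R : ℕ → ℝ → ℝ)
    (hconv : ∀ j, ConvexOn ℝ Set.univ (R j))
    (L U : ℕ → ℕ → ℝ)
    (hLU : ∀ a b, 1 ≤ a → a ≤ b → b ≤ m → L a b ≤ U a b)
    (hmin : ∀ a b, 1 ≤ a → a ≤ b → b ≤ m → ∀ q : ℝ,
      (∀ r : ℝ, (∑ j ∈ Finset.Icc a b, R j q) ≤ ∑ j ∈ Finset.Icc a b, R j r) ↔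
        q ∈ Set.Icc (L a b) (U a b))
    (hanti : ∀ a b, 1 ≤ a → a ≤ b → b ≤ m →
      StrictAntiOn (fun q => ∑ j ∈ Finset.Icc a b, R j q) (Set.Iic (L a b)))
    (hmono : ∀ a b, 1 ≤ a → a ≤ b → b ≤ m →
      StrictMonoOn (fun q => ∑ j ∈ Finset.Icc a b, R j q) (Set.Ici (U a b)))
    (ℓ u : ℕ → ℝ)
    (hℓmono : MonotoneOn ℓ (Set.Icc 1 m))
    (humono : MonotoneOn u (Set.Icc 1 m))
    (hℓmin : ∀ z : ℕ → ℝ, MonotoneOn z (Set.Icc 1 m) →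
      (∑ j ∈ Finset.Icc 1 m, R j (ℓ j)) ≤ ∑ j ∈ Finset.Icc 1 m, R j (z j))
    (humin : ∀ z : ℕ → ℝ, MonotoneOn z (Set.Icc 1 m) →
      (∑ j ∈ Finset.Icc 1 m, R j (u j)) ≤ ∑ j ∈ Finset.Icc 1 m, R j (z j))
    (hsqueeze : ∀ x : ℕ → ℝ, MonotoneOn x (Set.Icc 1 m) →
      (∀ z : ℕ → ℝ, MonotoneOn z (Set.Icc 1 m) →
        (∑ j ∈ Finset.Icc 1 m, R j (x j)) ≤ ∑ j ∈ Finset.Icc 1 m, R j (z j)) →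
      ∀ j, 1 ≤ j → j ≤ m → ℓ j ≤ x j ∧ x j ≤ u j) :
    -- squeezed vectors with small jump sets are minimizers
    (∀ x : ℕ → ℝ, MonotoneOn x (Set.Icc 1 m) →
      (∀ j, 1 ≤ j → j ≤ m → ℓ j ≤ x j ∧ x j ≤ u j) →
      (∀ j, 1 ≤ j → j < m → x j < x (j + 1) → (ℓ j < ℓ (j + 1) ∨ u j < u (j + 1))) →
      ∀ z : ℕ → ℝ, MonotoneOn z (Set.Icc 1 m) →
        (∑ j ∈ Finset.Icc 1 m, R j (x j)) ≤ ∑ j ∈ Finset.Icc 1 m, R j (z j)) ∧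
    -- each R_j is affine on [ℓ_j, u_j]
    (∀ j, 1 ≤ j → j ≤ m → ∃ c d : ℝ, ∀ t ∈ Set.Icc (ℓ j) (u j), R j t = c * t + d) := by
  classical
  have hmemI : ∀ j, j ∈ Finset.Icc 1 m ↔ 1 ≤ j ∧ j ≤ m := by
    intro j; simp
  have hℓu : ∀ j, 1 ≤ j → j ≤ m → ℓ j ≤ u j := fun j h1 h2 =>
    (hsqueeze ℓ hℓmono hℓmin j h1 h2).2
  have hTlu : (∑ j ∈ Finset.Icc 1 m, R j (ℓ j)) = ∑ j ∈ Finset.Icc 1 m, R j (u j) :=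
    le_antisymm (hℓmin u humono) (humin ℓ hℓmono)
  -- Key equality: convex combinations of ℓ and u realize equality in convexity.
  have keyA : ∀ lam : ℝ, 0 ≤ lam → lam ≤ 1 → ∀ j, 1 ≤ j → j ≤ m →
      R j (lam * ℓ j + (1 - lam) * u j) = lam * R j (ℓ j) + (1 - lam) * R j (u j) := by
    intro lam h0 h1
    have h1' : (0:ℝ) ≤ 1 - lam := by linarith
    have hzmono : MonotoneOn (fun j => lam * ℓ j + (1 - lam) * u j) (Set.Icc 1 m) := by
      intro a ha b hb hab
      exact add_le_add (mul_le_mul_of_nonneg_left (hℓmono ha hb hab) h0)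
        (mul_le_mul_of_nonneg_left (humono ha hb hab) h1')
    have hge : (∑ j ∈ Finset.Icc 1 m, R j (ℓ j)) ≤
        ∑ j ∈ Finset.Icc 1 m, R j (lam * ℓ j + (1 - lam) * u j) := hℓmin _ hzmono
    have hterm : ∀ j ∈ Finset.Icc 1 m,
        R j (lam * ℓ j + (1 - lam) * u j) ≤ lam * R j (ℓ j) + (1 - lam) * R j (u j) := by
      intro j _
      have := (hconv j).2 (Set.mem_univ (ℓ j)) (Set.mem_univ (u j)) h0 h1' (by ring)
      simpa using this
    have hnn : ∀ j ∈ Finset.Icc 1 m, 0 ≤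
        lam * R j (ℓ j) + (1 - lam) * R j (u j) - R j (lam * ℓ j + (1 - lam) * u j) := by
      intro j hj; linarith [hterm j hj]
    have hsum : ∑ j ∈ Finset.Icc 1 m,
        (lam * R j (ℓ j) + (1 - lam) * R j (u j) - R j (lam * ℓ j + (1 - lam) * u j)) = 0 := by
      have expand : ∑ j ∈ Finset.Icc 1 m,
          (lam * R j (ℓ j) + (1 - lam) * R j (u j) - R j (lam * ℓ j + (1 - lam) * u j))
          = lam * (∑ j ∈ Finset.Icc 1 m, R j (ℓ j))
            + (1 - lam) * (∑ j ∈ Finset.Icc 1 m, R j (u j))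
            - ∑ j ∈ Finset.Icc 1 m, R j (lam * ℓ j + (1 - lam) * u j) := by
        rw [Finset.sum_sub_distrib, Finset.sum_add_distrib, Finset.mul_sum, Finset.mul_sum]
      have hle : ∑ j ∈ Finset.Icc 1 m,
          (lam * R j (ℓ j) + (1 - lam) * R j (u j) - R j (lam * ℓ j + (1 - lam) * u j)) ≤ 0 := by
        rw [expand, ← hTlu]
        nlinarith [hge]
      have hge0 := Finset.sum_nonneg hnn
      linarith
    intro j hj1 hjm
    have := (Finset.sum_eq_zero_iff_of_nonneg hnn).mp hsum j ((hmemI j).mpr ⟨hj1, hjm⟩)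
    linarith
  -- Part 2: affinity on [ℓ j, u j]
  have haff : ∀ j, 1 ≤ j → j ≤ m →
      ∃ c d : ℝ, ∀ t ∈ Set.Icc (ℓ j) (u j), R j t = c * t + d := by
    intro j hj1 hjm
    rcases eq_or_lt_of_le (hℓu j hj1 hjm) with heq | hlt
    · refine ⟨0, R j (ℓ j), fun t ht => ?_⟩
      have : t = ℓ j := le_antisymm (heq ▸ ht.2) ht.1
      rw [this]; ring
    · refine ⟨(R j (u j) - R j (ℓ j)) / (u j - ℓ j),
        R j (ℓ j) - (R j (u j) - R j (ℓ j)) / (u j - ℓ j) * ℓ j, ?_⟩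
      intro t ht
      have hne : u j - ℓ j ≠ 0 := by intro h; rw [sub_eq_zero] at h; linarith
      set lam := (u j - t) / (u j - ℓ j) with hlam
      have h0 : 0 ≤ lam := div_nonneg (by linarith [ht.2]) (by linarith)
      have h1 : lam ≤ 1 := by
        rw [hlam, div_le_one (by linarith)]; linarith [ht.1]
      have ht' : lam * ℓ j + (1 - lam) * u j = t := by
        have : lam * (u j - ℓ j) = u j - t := by rw [hlam]; exact div_mul_cancel₀ _ hne
        linear_combination -this
      have hk := keyA lam h0 h1 j hj1 hjm
      rw [ht'] at hk
      rw [hk, hlam]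
      field_simp
      ring
  refine ⟨?_, haff⟩
  -- choose affine coefficients
  have haff' : ∀ j, ∃ c d : ℝ, 1 ≤ j → j ≤ m →
      ∀ t ∈ Set.Icc (ℓ j) (u j), R j t = c * t + d := by
    intro j
    by_cases h : 1 ≤ j ∧ j ≤ m
    · obtain ⟨c, d, hcd⟩ := haff j h.1 h.2
      exact ⟨c, d, fun _ _ => hcd⟩
    · exact ⟨0, 0, fun h1 h2 => absurd ⟨h1, h2⟩ h⟩
  choose c d hcd using haff'
  intro x hxmono hxb hxjump z hzmono
  set w : ℕ → ℝ := fun j => (ℓ j + u j) / 2 with hw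
  have hwj : ∀ j, w j = (ℓ j + u j) / 2 := fun j => rfl
  have hwmem : ∀ j, 1 ≤ j → j ≤ m → w j ∈ Set.Icc (ℓ j) (u j) := by
    intro j h1 h2
    have := hℓu j h1 h2
    constructor <;> (rw [hwj]; linarith)
  -- T(w) = T(ℓ)
  have hTw : ∑ j ∈ Finset.Icc 1 m, R j (w j) = ∑ j ∈ Finset.Icc 1 m, R j (ℓ j) := by
    have hc : ∀ j ∈ Finset.Icc 1 m,
        R j (w j) = (1/2 : ℝ) * R j (ℓ j) + (1 - 1/2 : ℝ) * R j (u j) := by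
      intro j hj
      obtain ⟨h1, h2⟩ := (hmemI j).mp hj
      have hk := keyA (1/2) (by norm_num) (by norm_num) j h1 h2
      have hw' : (1/2 : ℝ) * ℓ j + (1 - 1/2 : ℝ) * u j = w j := by rw [hwj]; ring
      rw [hw'] at hk
      exact hk
    rw [Finset.sum_congr rfl hc, Finset.sum_add_distrib, ← Finset.mul_sum, ← Finset.mul_sum,
      ← hTlu]
    ring
  set S : ℝ := ∑ j ∈ Finset.Icc 1 m, c j * (x j - ℓ j) with hS
  -- construct t0
  set f : ℕ → ℝ := fun j => if ℓ j < ℓ (j+1) ∨ u j < u (j+1)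
      then (w (j+1) - w j) / (|(x (j+1) - ℓ (j+1)) - (x j - ℓ j)| + 1)
      else 1 with hf
  set s : Finset ℝ := insert (1/2 : ℝ) ((Finset.Ico 1 m).image f) with hs
  have hsne : s.Nonempty := ⟨1/2, by simp [hs]⟩
  set t0 := s.min' hsne with ht0
  have ht0le : t0 ≤ 1/2 := Finset.min'_le s _ (by simp [hs])
  have ht0f : ∀ j, 1 ≤ j → j < m → t0 ≤ f j := by
    intro j h1 h2
    exact Finset.min'_le s _ (by
      rw [hs]
      refine Finset.mem_insert_of_mem (Finset.mem_image.mpr ⟨j, ?_, rfl⟩)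
      simp [Finset.mem_Ico]; omega)
  have hgap : ∀ j, 1 ≤ j → j + 1 ≤ m → (ℓ j < ℓ (j+1) ∨ u j < u (j+1)) →
      0 < w (j+1) - w j := by
    intro j h1 h2 hj
    have hjI : j ∈ Set.Icc 1 m := ⟨h1, by omega⟩
    have hj1I : j + 1 ∈ Set.Icc 1 m := ⟨by omega, h2⟩
    have hℓle := hℓmono hjI hj1I (by omega)
    have hule := humono hjI hj1I (by omega)
    rw [hwj, hwj]
    rcases hj with h | h
    · linarith
    · linarith
  have ht0pos : 0 < t0 := by
    rw [ht0]
    apply (Finset.lt_min'_iff s hsne).mpr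
    intro b hb
    rw [hs] at hb
    rcases Finset.mem_insert.mp hb with rfl | hb
    · norm_num
    · obtain ⟨j, hj, rfl⟩ := Finset.mem_image.mp hb
      rw [Finset.mem_Ico] at hj
      rw [hf]
      by_cases hjump : ℓ j < ℓ (j+1) ∨ u j < u (j+1)
      · simp only [if_pos hjump]
        exact div_pos (hgap j hj.1 (by omega) hjump) (by positivity)
      · simp only [if_neg hjump]; norm_num
  -- the perturbation inequality
  have hpert : ∀ t : ℝ, |t| ≤ t0 →
      (∑ j ∈ Finset.Icc 1 m, R j (ℓ j)) ≤
        (∑ j ∈ Finset.Icc 1 m, (c j * w j + d j)) + t * S := by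
    intro t ht
    have h12 : |t| ≤ 1/2 := le_trans ht ht0le
    obtain ⟨htl, htr⟩ := abs_le.mp h12
    have hmem : ∀ j, 1 ≤ j → j ≤ m → w j + t * (x j - ℓ j) ∈ Set.Icc (ℓ j) (u j) := by
      intro j h1 h2
      obtain ⟨hx1, hx2⟩ := hxb j h1 h2
      have hlu := hℓu j h1 h2
      constructor
      · rw [hwj]
        nlinarith [mul_nonneg (by linarith : (0:ℝ) ≤ t + 1/2) (by linarith : (0:ℝ) ≤ x j - ℓ j)]
      · rw [hwj]
        nlinarith [mul_nonneg (by linarith : (0:ℝ) ≤ 1/2 - t) (by linarith : (0:ℝ) ≤ x j - ℓ j)]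
    have hmono' : MonotoneOn (fun j => w j + t * (x j - ℓ j)) (Set.Icc 1 m) := by
      apply monoOn_Icc_succ_aux
      intro j h1 h2
      have hjI : j ∈ Set.Icc 1 m := ⟨h1, by omega⟩
      have hj1I : j + 1 ∈ Set.Icc 1 m := ⟨by omega, h2⟩
      have hℓle := hℓmono hjI hj1I (by omega)
      have hule := humono hjI hj1I (by omega)
      by_cases hjump : ℓ j < ℓ (j+1) ∨ u j < u (j+1)
      · have hg := hgap j h1 h2 hjump
        have hfj := ht0f j h1 (by omega)
        rw [hf] at hfj
        simp only [if_pos hjump] at hfj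
        set Δ : ℝ := (x (j+1) - ℓ (j+1)) - (x j - ℓ j) with hΔ
        have habsΔ : |t * Δ| ≤ w (j+1) - w j := by
          have e1 : |t * Δ| = |t| * |Δ| := abs_mul t Δ
          have e2 : |t| * |Δ| ≤ t0 * |Δ| :=
            mul_le_mul_of_nonneg_right ht (abs_nonneg Δ)
          have e3 : t0 * |Δ| ≤ (w (j+1) - w j) / (|Δ| + 1) * |Δ| :=
            mul_le_mul_of_nonneg_right hfj (abs_nonneg Δ)
          have e4 : (w (j+1) - w j) / (|Δ| + 1) * |Δ| ≤ w (j+1) - w j := by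
            rw [div_mul_eq_mul_div, div_le_iff₀ (by positivity)]
            nlinarith [abs_nonneg Δ]
          linarith
        have hneg := neg_abs_le (t * Δ)
        have hrw : w (j+1) + t * (x (j+1) - ℓ (j+1)) - (w j + t * (x j - ℓ j))
            = (w (j+1) - w j) + t * Δ := by rw [hΔ]; ring
        show w j + t * (x j - ℓ j) ≤ w (j+1) + t * (x (j+1) - ℓ (j+1))
        linarith [hrw, hneg, habsΔ]
      · push_neg at hjump
        have hℓeq : ℓ (j+1) = ℓ j := le_antisymm hjump.1 hℓle
        have hueq : u (j+1) = u j := le_antisymm hjump.2 hule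
        have hxle := hxmono hjI hj1I (by omega)
        have hxeq : x (j+1) = x j := by
          rcases eq_or_lt_of_le hxle with h | h
          · exact h.symm
          · exact absurd (hxjump j h1 (by omega) h) (by push_neg; exact ⟨hjump.1, hjump.2⟩)
        have hweq : w (j+1) = w j := by rw [hwj, hwj, hℓeq, hueq]
        show w j + t * (x j - ℓ j) ≤ w (j+1) + t * (x (j+1) - ℓ (j+1))
        rw [hweq, hℓeq, hxeq]
    have hval : ∑ j ∈ Finset.Icc 1 m, R j (w j + t * (x j - ℓ j))
        = (∑ j ∈ Finset.Icc 1 m, (c j * w j + d j)) + t * S := by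
      have hc : ∀ j ∈ Finset.Icc 1 m, R j (w j + t * (x j - ℓ j))
          = (c j * w j + d j) + t * (c j * (x j - ℓ j)) := by
        intro j hj
        obtain ⟨h1, h2⟩ := (hmemI j).mp hj
        rw [hcd j h1 h2 _ (hmem j h1 h2)]
        ring
      rw [Finset.sum_congr rfl hc, Finset.sum_add_distrib, ← Finset.mul_sum, hS]
    calc (∑ j ∈ Finset.Icc 1 m, R j (ℓ j))
        ≤ ∑ j ∈ Finset.Icc 1 m, R j (w j + t * (x j - ℓ j)) := hℓmin _ hmono'
      _ = _ := hval
  have hA : (∑ j ∈ Finset.Icc 1 m, (c j * w j + d j)) = ∑ j ∈ Finset.Icc 1 m, R j (ℓ j) := by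
    rw [← hTw]
    refine Finset.sum_congr rfl fun j hj => ?_
    obtain ⟨h1, h2⟩ := (hmemI j).mp hj
    rw [hcd j h1 h2 _ (hwmem j h1 h2)]
  have hS0 : S = 0 := by
    have hp := hpert t0 (le_of_eq (abs_of_pos ht0pos))
    have hn := hpert (-t0) (by rw [abs_neg, abs_of_pos ht0pos])
    rw [hA] at hp hn
    nlinarith
  have hTx : ∑ j ∈ Finset.Icc 1 m, R j (x j) = ∑ j ∈ Finset.Icc 1 m, R j (ℓ j) := by
    have e1 : ∀ j ∈ Finset.Icc 1 m,
        R j (x j) = (c j * ℓ j + d j) + c j * (x j - ℓ j) := by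
      intro j hj
      obtain ⟨h1, h2⟩ := (hmemI j).mp hj
      rw [hcd j h1 h2 _ ⟨(hxb j h1 h2).1, (hxb j h1 h2).2⟩]
      ring
    have e2 : ∀ j ∈ Finset.Icc 1 m, R j (ℓ j) = c j * ℓ j + d j := by
      intro j hj
      obtain ⟨h1, h2⟩ := (hmemI j).mp hj
      rw [hcd j h1 h2 _ ⟨le_rfl, hℓu j h1 h2⟩]
    rw [Finset.sum_congr rfl e1, Finset.sum_add_distrib, ← hS, hS0,
      Finset.sum_congr rfl e2]
    ring
  calc (∑ j ∈ Finset.Icc 1 m, R j (x j)) = ∑ j ∈ Finset.Icc 1 m, R j (ℓ j) := hTx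
    _ ≤ ∑ j ∈ Finset.Icc 1 m, R j (z j) := hℓmin z hzmono
end

section
/- Let F be a distribution function and 0 ≤ β₁ < β₂ ≤ 1, κ > 0 be such that F(y₂) − F(y₁) ≥ κ(y₂ − y₁) whenever y₁ < y₂ and F(y₁), F(y₂−) ∈ (β₁, β₂). Then for every β ∈ (β₁, β₂) the minimal and maximal β-quantiles coincide, F^{-1}(β) = F^{-1}(β+), and for all β, β' ∈ (β₁, β₂) one has |F^{-1}(β) − F^{-1}(β')| ≤ κ^{-1} |β − β'|. -/
/-!
Let `a` be the minimal `β`-quantile and `b` the minimal `β'`-quantile (for `β < β'`) or the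
maximal `β`-quantile (for `β' = β`). On `(a, b)` the values of `F` lie in `[β, β']`, so the
growth condition gives `κ (y₂ - y₁) ≤ β' - β` for all `a < y₁ < y₂ < b`, hence
`b - a ≤ κ⁻¹ (β' - β)`. For `β' = β` this makes the two quantiles coincide, and for `β < β'`
it is the Lipschitz bound.
-/

/-- A cumulative distribution function on ℝ. -/
def IsCDF (F : ℝ → ℝ) : Prop :=
  Monotone F ∧ (∀ y, ContinuousWithinAt F (Set.Ici y) y) ∧
    Filter.Tendsto F Filter.atBot (nhds 0) ∧ Filter.Tendsto F Filter.atTop (nhds 1)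

open Set Filter Topology

noncomputable section

-- `F⁻¹(β)` and `F⁻¹(β+)`
def quantile (F : ℝ → ℝ) (β : ℝ) : ℝ := sInf {y | β ≤ F y}

def upperQuantile (F : ℝ → ℝ) (β : ℝ) : ℝ := sInf {y | β < F y}

end

theorem sub_le_of_forall_sub_le_of_mem_Ioo {a b C : ℝ} (hC : 0 ≤ C)
    (h : ∀ y₁ y₂, a < y₁ → y₁ < y₂ → y₂ < b → y₂ - y₁ ≤ C) : b - a ≤ C := by
  by_contra! hlt
  have := h (a + (b - a - C) / 3) (b - (b - a - C) / 3) (by linarith) (by linarith) (by linarith)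
  linarith

section Quantile

variable {F : ℝ → ℝ} {β : ℝ}

theorem bddBelow_setOf_le_of_tendsto_atBot {c : ℝ} (hF : Tendsto F atBot (𝓝 c)) (hβ : c < β) :
    BddBelow {y | β ≤ F y} := by
  obtain ⟨a, ha⟩ := (hF.eventually_lt_const hβ).exists_forall_of_atBot
  exact ⟨a, fun y hy => le_of_not_ge fun hya => (ha y hya).not_ge hy⟩

theorem nonempty_setOf_lt_of_tendsto_atTop {c : ℝ} (hF : Tendsto F atTop (𝓝 c)) (hβ : β < c) :
    {y | β < F y}.Nonempty :=
  (hF.eventually_const_lt hβ).exists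

theorem quantile_le_upperQuantile (hbdd : BddBelow {y | β ≤ F y})
    (hne : {y | β < F y}.Nonempty) : quantile F β ≤ upperQuantile F β :=
  csInf_le_csInf hbdd hne fun _ (hy : β < F _) => hy.le

theorem quantile_mono {β' : ℝ} (hbdd : BddBelow {y | β ≤ F y})
    (hne : {y | β' ≤ F y}.Nonempty) (hββ' : β ≤ β') : quantile F β ≤ quantile F β' :=
  csInf_le_csInf hbdd hne fun _ => hββ'.trans

theorem Monotone.le_apply_of_quantile_lt (hF : Monotone F) (hne : {y | β ≤ F y}.Nonempty)
    {y : ℝ} (hy : quantile F β < y) : β ≤ F y := by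
  obtain ⟨x, hx, hxy⟩ := exists_lt_of_csInf_lt hne hy
  exact hx.trans (hF hxy.le)

theorem apply_lt_of_lt_quantile (hbdd : BddBelow {y | β ≤ F y}) {y : ℝ}
    (hy : y < quantile F β) : F y < β :=
  not_le.mp (notMem_of_lt_csInf (s := {x | β ≤ F x}) hy hbdd)

theorem apply_le_of_lt_upperQuantile (hbdd : BddBelow {y | β ≤ F y}) {y : ℝ}
    (hy : y < upperQuantile F β) : F y ≤ β :=
  not_lt.mp <|
    notMem_of_lt_csInf (s := {x | β < F x}) hy (hbdd.mono fun _ (hy : β < F _) => hy.le)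

end Quantile

theorem sub_le_of_mapsTo_Ioo_Icc {F : ℝ → ℝ} {β₁ β₂ κ : ℝ} (hF : Monotone F) (hκ : 0 < κ)
    (hgrow : ∀ y₁ y₂ : ℝ, y₁ < y₂ → F y₁ ∈ Ioo β₁ β₂ →
      Function.leftLim F y₂ ∈ Ioo β₁ β₂ → κ * (y₂ - y₁) ≤ F y₂ - F y₁)
    {β β' a b : ℝ} (hβ : β₁ < β) (hβ' : β' < β₂) (hββ' : β ≤ β')
    (hab : MapsTo F (Ioo a b) (Icc β β')) : b - a ≤ κ⁻¹ * (β' - β) := by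
  refine sub_le_of_forall_sub_le_of_mem_Ioo (by positivity) fun y₁ y₂ hay₁ hy₁₂ hy₂b => ?_
  obtain ⟨hF₁l, hF₁r⟩ := hab ⟨hay₁, hy₁₂.trans hy₂b⟩
  obtain ⟨hF₂l, hF₂r⟩ := hab ⟨hay₁.trans hy₁₂, hy₂b⟩
  have hlim : Function.leftLim F y₂ ∈ Ioo β₁ β₂ :=
    ⟨hβ.trans_le (hF₁l.trans (hF.le_leftLim hy₁₂)),
      ((hF.leftLim_le le_rfl).trans hF₂r).trans_lt hβ'⟩
  have := hgrow y₁ y₂ hy₁₂ ⟨hβ.trans_le hF₁l, hF₁r.trans_lt hβ'⟩ hlim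
  rw [le_inv_mul_iff₀ hκ]
  linarith

theorem stmt7_general (F : ℝ → ℝ) (hF : IsCDF F) (β₁ β₂ κ : ℝ)
    (h0 : 0 ≤ β₁) (h1 : β₂ ≤ 1) (hκ : 0 < κ)
    (hgrow : ∀ y₁ y₂ : ℝ, y₁ < y₂ → F y₁ ∈ Set.Ioo β₁ β₂ →
      Function.leftLim F y₂ ∈ Set.Ioo β₁ β₂ → κ * (y₂ - y₁) ≤ F y₂ - F y₁) :
    (∀ β ∈ Set.Ioo β₁ β₂, sInf {y | β ≤ F y} = sInf {y | β < F y}) ∧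
    (∀ β ∈ Set.Ioo β₁ β₂, ∀ β' ∈ Set.Ioo β₁ β₂,
      |sInf {y | β ≤ F y} - sInf {y | β' ≤ F y}| ≤ κ⁻¹ * |β - β'|) := by
  obtain ⟨hmono, -, hbot, htop⟩ := hF
  have hbdd : ∀ β ∈ Ioo β₁ β₂, BddBelow {y | β ≤ F y} := fun β hβ =>
    bddBelow_setOf_le_of_tendsto_atBot hbot (h0.trans_lt hβ.1)
  have hne : ∀ β ∈ Ioo β₁ β₂, {y | β < F y}.Nonempty := fun β hβ =>
    nonempty_setOf_lt_of_tendsto_atTop htop (hβ.2.trans_le h1)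
  have hne' : ∀ β ∈ Ioo β₁ β₂, {y | β ≤ F y}.Nonempty := fun β hβ =>
    (hne β hβ).mono fun _ (hy : β < F _) => hy.le
  refine ⟨fun β hβ => le_antisymm (quantile_le_upperQuantile (hbdd β hβ) (hne β hβ)) ?_,
    fun β hβ β' hβ' => ?_⟩
  · have := sub_le_of_mapsTo_Ioo_Icc hmono hκ hgrow hβ.1 hβ.2 le_rfl fun y hy =>
      ⟨hmono.le_apply_of_quantile_lt (hne' β hβ) hy.1,
        apply_le_of_lt_upperQuantile (hbdd β hβ) hy.2⟩
    rwa [sub_self, mul_zero, sub_nonpos] at this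
  wlog hββ' : β ≤ β' generalizing β β'
  · rw [abs_sub_comm, abs_sub_comm β]
    exact this β' hβ' β hβ (le_of_not_ge hββ')
  have hle : quantile F β ≤ quantile F β' := quantile_mono (hbdd β hβ) (hne' β' hβ') hββ'
  change |quantile F β - quantile F β'| ≤ _
  rw [abs_sub_comm, abs_of_nonneg (sub_nonneg.mpr hle), abs_sub_comm,
    abs_of_nonneg (sub_nonneg.mpr hββ')]
  exact sub_le_of_mapsTo_Ioo_Icc hmono hκ hgrow hβ.1 hβ'.2 hββ' fun y hy =>
    ⟨hmono.le_apply_of_quantile_lt (hne' β hβ) hy.1,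
      (apply_lt_of_lt_quantile (hbdd β' hβ') hy.2).le⟩

/-- Under a local growth condition, minimal and maximal quantiles coincide and the
quantile function is Lipschitz with constant κ⁻¹ on (β₁, β₂). -/
theorem stmt7 (F : ℝ → ℝ) (hF : IsCDF F) (β₁ β₂ κ : ℝ)
    (h0 : 0 ≤ β₁) (h12 : β₁ < β₂) (h1 : β₂ ≤ 1) (hκ : 0 < κ)
    (hgrow : ∀ y₁ y₂ : ℝ, y₁ < y₂ → F y₁ ∈ Set.Ioo β₁ β₂ →
      Function.leftLim F y₂ ∈ Set.Ioo β₁ β₂ → κ * (y₂ - y₁) ≤ F y₂ - F y₁) :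
    (∀ β ∈ Set.Ioo β₁ β₂, sInf {y | β ≤ F y} = sInf {y | β < F y}) ∧
    (∀ β ∈ Set.Ioo β₁ β₂, ∀ β' ∈ Set.Ioo β₁ β₂,
      |sInf {y | β ≤ F y} - sInf {y | β' ≤ F y}| ≤ κ⁻¹ * |β - β'|) :=
  stmt7_general F hF β₁ β₂ κ h0 h1 hκ hgrow
end

section
/- Fix weights w₁,...,w_m > 0 and data (Y_i, groups j(i)) defining group empirical distribution functions 𝔽̂_j(y) = w_j^{-1} Σ_{i: group i = j} 1_{[Y_i ≤ y]}. For each y, let F̂(y) be the weighted isotone (antitone in j) least squares projection of (𝔽̂_j(y))_j onto ℝ^m_↓, given by F̂_j(y) = min_{r ≤ j} max_{s ≥ j} 𝔽̂_{rs}(y) with 𝔽̂_{rs}(y) = w_{rs}^{-1} Σ_{k=r}^s w_k 𝔽̂_k(y), w_{rs} = Σ_{k=r}^s w_k. Then for each fixed j, the function y ↦ F̂_j(y) is itself a cumulative distribution function (nondecreasing, right-continuous, with limits 0 at −∞ and 1 at +∞). -/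
open Filter Topology

private lemma tendsto_finset_inf'_aux {ι α : Type*} {l : Filter α}
    (s : Finset ι) (f : ι → α → ℝ) (L : ι → ℝ)
    (hf : ∀ i ∈ s, Tendsto (f i) l (𝓝 (L i))) (hs : s.Nonempty) :
    Tendsto (fun y => s.inf' hs fun i => f i y) l (𝓝 (s.inf' hs L)) := by
  classical
  revert hf hs
  induction s using Finset.cons_induction with
  | empty => intro _ hs; exact absurd hs (by simp)
  | cons a t ha ih =>
    intro hf hs
    rcases t.eq_empty_or_nonempty with rfl | ht
    · simpa using hf a (by simp)
    · simp only [Finset.inf'_cons ht]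
      exact (hf a (Finset.mem_cons_self a t)).min
        (ih (fun i hi => hf i (Finset.mem_cons_of_mem hi)) ht)

private lemma tendsto_finset_sup'_aux {ι α : Type*} {l : Filter α}
    (s : Finset ι) (f : ι → α → ℝ) (L : ι → ℝ)
    (hf : ∀ i ∈ s, Tendsto (f i) l (𝓝 (L i))) (hs : s.Nonempty) :
    Tendsto (fun y => s.sup' hs fun i => f i y) l (𝓝 (s.sup' hs L)) := by
  classical
  revert hf hs
  induction s using Finset.cons_induction with
  | empty => intro _ hs; exact absurd hs (by simp)
  | cons a t ha ih =>
    intro hf hs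
    rcases t.eq_empty_or_nonempty with rfl | ht
    · simpa using hf a (by simp)
    · simp only [Finset.sup'_cons ht]
      exact (hf a (Finset.mem_cons_self a t)).max
        (ih (fun i hi => hf i (Finset.mem_cons_of_mem hi)) ht)

/-- The isotonized (min-max) least squares estimate of the group empirical distribution
functions is itself a distribution function at each covariate value. -/
theorem stmt12 (n m : ℕ) (Y : Fin n → ℝ) (gp : Fin n → Fin m)
    (hg : ∀ j : Fin m, ∃ i, gp i = j)
    (w : Fin m → ℝ)
    (hw : ∀ j, w j = ((Finset.univ.filter fun i => gp i = j).card : ℝ))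
    (Femp : Fin m → ℝ → ℝ)
    (hFemp : ∀ j y, Femp j y =
      (w j)⁻¹ * ∑ i ∈ Finset.univ.filter (fun i => gp i = j),
        (if Y i ≤ y then (1 : ℝ) else 0))
    (Frs : Fin m → Fin m → ℝ → ℝ)
    (hFrs : ∀ r s y, Frs r s y =
      (∑ k ∈ Finset.Icc r s, w k)⁻¹ * ∑ k ∈ Finset.Icc r s, w k * Femp k y)
    (Fhat : Fin m → ℝ → ℝ)
    (hFhat : ∀ j y, Fhat j y =
      (Finset.Iic j).inf' ⟨j, Finset.mem_Iic.mpr le_rfl⟩ (fun r =>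
        (Finset.Ici j).sup' ⟨j, Finset.mem_Ici.mpr le_rfl⟩ (fun s => Frs r s y))) :
    ∀ j : Fin m,
      Monotone (Fhat j) ∧
      (∀ y, ContinuousWithinAt (Fhat j) (Set.Ici y) y) ∧
      Filter.Tendsto (Fhat j) Filter.atBot (nhds 0) ∧
      Filter.Tendsto (Fhat j) Filter.atTop (nhds 1) := by
  classical
  -- positivity of weights
  have hwpos : ∀ k : Fin m, 0 < w k := by
    intro k
    obtain ⟨i, hi⟩ := hg k
    rw [hw]
    have hmem : i ∈ Finset.univ.filter fun i => gp i = k := by simp [hi]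
    exact_mod_cast Finset.card_pos.mpr ⟨i, hmem⟩
  have hWpos : ∀ r s : Fin m, r ≤ s → 0 < ∑ k ∈ Finset.Icc r s, w k := fun r s hrs =>
    Finset.sum_pos (fun k _ => hwpos k) (Finset.nonempty_Icc.mpr hrs)
  -- indicator facts
  have hind_mono : ∀ i : Fin n, Monotone (fun y => if Y i ≤ y then (1 : ℝ) else 0) := by
    intro i a b hab
    dsimp only
    split_ifs with h1 h2
    · exact le_refl 1
    · exact absurd (h1.trans hab) h2
    · exact zero_le_one
    · exact le_refl 0
  have hind_cwa : ∀ (i : Fin n) (y : ℝ),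
      ContinuousWithinAt (fun y' => if Y i ≤ y' then (1 : ℝ) else 0) (Set.Ici y) y := by
    intro i y
    by_cases h : Y i ≤ y
    · have hev : ∀ᶠ y' in 𝓝[Set.Ici y] y,
          (if Y i ≤ y' then (1 : ℝ) else 0) = (if Y i ≤ y then (1 : ℝ) else 0) := by
        filter_upwards [self_mem_nhdsWithin] with y' hy'
        simp [h, h.trans hy']
      exact tendsto_const_nhds.congr' (Filter.EventuallyEq.symm hev)
    · have hmem : Set.Iio (Y i) ∈ 𝓝[Set.Ici y] y :=
        nhdsWithin_le_nhds (isOpen_Iio.mem_nhds (not_le.mp h))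
      have hev : ∀ᶠ y' in 𝓝[Set.Ici y] y,
          (if Y i ≤ y' then (1 : ℝ) else 0) = (if Y i ≤ y then (1 : ℝ) else 0) := by
        filter_upwards [hmem] with y' hy'
        simp [not_le.mpr (Set.mem_Iio.mp hy'), h]
      exact tendsto_const_nhds.congr' (Filter.EventuallyEq.symm hev)
  -- Femp facts
  have hFemp_mono : ∀ k : Fin m, Monotone (Femp k) := by
    intro k a b hab
    rw [hFemp, hFemp]
    exact mul_le_mul_of_nonneg_left
      (Finset.sum_le_sum fun i _ => hind_mono i hab)
      (inv_nonneg.mpr (hwpos k).le)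
  have hFemp_cwa : ∀ (k : Fin m) (y : ℝ), ContinuousWithinAt (Femp k) (Set.Ici y) y := by
    intro k y
    have heq : Femp k = fun y' => (w k)⁻¹ *
        ∑ i ∈ Finset.univ.filter (fun i => gp i = k), (if Y i ≤ y' then (1 : ℝ) else 0) :=
      funext fun y' => hFemp k y'
    rw [ContinuousWithinAt, heq]
    exact (tendsto_finset_sum _ fun i _ => hind_cwa i y).const_mul _
  have hFemp_top : ∀ k : Fin m, Tendsto (Femp k) atTop (𝓝 1) := by
    intro k
    have hev : ∀ᶠ y in (atTop : Filter ℝ), Femp k y = 1 := by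
      have hall : ∀ᶠ y : ℝ in atTop,
          ∀ i ∈ Finset.univ.filter fun i => gp i = k, Y i ≤ y := by
        rw [eventually_all_finset]
        exact fun i _ => eventually_ge_atTop (Y i)
      filter_upwards [hall] with y hy
      rw [hFemp, Finset.sum_congr rfl fun i hi => if_pos (hy i hi), Finset.sum_const,
        nsmul_eq_mul, mul_one, ← hw, inv_mul_cancel₀ (hwpos k).ne']
    exact tendsto_const_nhds.congr' (Filter.EventuallyEq.symm hev)
  have hFemp_bot : ∀ k : Fin m, Tendsto (Femp k) atBot (𝓝 0) := by
    intro k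
    have hev : ∀ᶠ y in (atBot : Filter ℝ), Femp k y = 0 := by
      have hall : ∀ᶠ y : ℝ in atBot,
          ∀ i ∈ Finset.univ.filter fun i => gp i = k, y < Y i := by
        rw [eventually_all_finset]
        exact fun i _ => eventually_lt_atBot (Y i)
      filter_upwards [hall] with y hy
      rw [hFemp, Finset.sum_congr rfl fun i hi => if_neg (not_le.mpr (hy i hi))]
      simp
    exact tendsto_const_nhds.congr' (Filter.EventuallyEq.symm hev)
  -- Frs facts (for r ≤ s)
  have hFrs_mono : ∀ r s : Fin m, r ≤ s → Monotone (Frs r s) := by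
    intro r s hrs a b hab
    rw [hFrs, hFrs]
    refine mul_le_mul_of_nonneg_left ?_ (inv_nonneg.mpr (hWpos r s hrs).le)
    exact Finset.sum_le_sum fun k _ =>
      mul_le_mul_of_nonneg_left (hFemp_mono k hab) (hwpos k).le
  have hFrs_cwa : ∀ (r s : Fin m) (y : ℝ), ContinuousWithinAt (Frs r s) (Set.Ici y) y := by
    intro r s y
    have heq : Frs r s = fun y' =>
        (∑ k ∈ Finset.Icc r s, w k)⁻¹ * ∑ k ∈ Finset.Icc r s, w k * Femp k y' :=
      funext fun y' => hFrs r s y'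
    rw [ContinuousWithinAt, heq]
    exact (tendsto_finset_sum _ fun k _ => (hFemp_cwa k y).const_mul (w k)).const_mul _
  have hFrs_top : ∀ r s : Fin m, r ≤ s → Tendsto (Frs r s) atTop (𝓝 1) := by
    intro r s hrs
    have heq : Frs r s = fun y' =>
        (∑ k ∈ Finset.Icc r s, w k)⁻¹ * ∑ k ∈ Finset.Icc r s, w k * Femp k y' :=
      funext fun y' => hFrs r s y'
    rw [heq]
    have h1 : Tendsto (fun y' => (∑ k ∈ Finset.Icc r s, w k)⁻¹ *
        ∑ k ∈ Finset.Icc r s, w k * Femp k y') atTop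
        (𝓝 ((∑ k ∈ Finset.Icc r s, w k)⁻¹ * ∑ k ∈ Finset.Icc r s, w k * 1)) :=
      (tendsto_finset_sum _ fun k _ => (hFemp_top k).const_mul (w k)).const_mul _
    simpa [mul_one, inv_mul_cancel₀ (hWpos r s hrs).ne'] using h1
  have hFrs_bot : ∀ r s : Fin m, Tendsto (Frs r s) atBot (𝓝 0) := by
    intro r s
    have heq : Frs r s = fun y' =>
        (∑ k ∈ Finset.Icc r s, w k)⁻¹ * ∑ k ∈ Finset.Icc r s, w k * Femp k y' :=
      funext fun y' => hFrs r s y'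
    rw [heq]
    have h1 : Tendsto (fun y' => (∑ k ∈ Finset.Icc r s, w k)⁻¹ *
        ∑ k ∈ Finset.Icc r s, w k * Femp k y') atBot
        (𝓝 ((∑ k ∈ Finset.Icc r s, w k)⁻¹ * ∑ k ∈ Finset.Icc r s, w k * 0)) :=
      (tendsto_finset_sum _ fun k _ => (hFemp_bot k).const_mul (w k)).const_mul _
    simpa using h1
  -- main
  intro j
  have ne1 : (Finset.Iic j).Nonempty := ⟨j, Finset.mem_Iic.mpr le_rfl⟩
  have ne2 : (Finset.Ici j).Nonempty := ⟨j, Finset.mem_Ici.mpr le_rfl⟩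
  have heqF : Fhat j = fun y => (Finset.Iic j).inf' ⟨j, Finset.mem_Iic.mpr le_rfl⟩ (fun r =>
      (Finset.Ici j).sup' ⟨j, Finset.mem_Ici.mpr le_rfl⟩ (fun s => Frs r s y)) :=
    funext fun y => hFhat j y
  have hle : ∀ r ∈ Finset.Iic j, ∀ s ∈ Finset.Ici j, r ≤ s := fun r hr s hs =>
    le_trans (Finset.mem_Iic.mp hr) (Finset.mem_Ici.mp hs)
  refine ⟨?_, ?_, ?_, ?_⟩
  · -- monotone
    intro a b hab
    rw [hFhat j a, hFhat j b]
    apply Finset.le_inf'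
    intro r hr
    refine le_trans (Finset.inf'_le _ hr) ?_
    apply Finset.sup'_le
    intro s hs
    exact le_trans (hFrs_mono r s (hle r hr s hs) hab) (Finset.le_sup' (fun s => Frs r s b) hs)
  · -- right continuity
    intro y
    rw [ContinuousWithinAt, heqF]
    exact tendsto_finset_inf'_aux _ _ _
      (fun r hr => tendsto_finset_sup'_aux _ _ _
        (fun s hs => hFrs_cwa r s y) _) _
  · -- limit at -∞
    rw [heqF]
    have h1 := tendsto_finset_inf'_aux (Finset.Iic j)
      (fun r y => (Finset.Ici j).sup' ⟨j, Finset.mem_Ici.mpr le_rfl⟩ (fun s => Frs r s y))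
      (fun r => (Finset.Ici j).sup' ⟨j, Finset.mem_Ici.mpr le_rfl⟩ (fun _ => (0 : ℝ)))
      (fun r hr => tendsto_finset_sup'_aux _ _ _ (fun s hs => hFrs_bot r s) _)
      ⟨j, Finset.mem_Iic.mpr le_rfl⟩
    convert h1 using 2
    symm
    apply le_antisymm
    · exact (Finset.inf'_le _ (Finset.mem_Iic.mpr le_rfl)).trans (Finset.sup'_le _ _ fun _ _ => le_rfl)
    · exact Finset.le_inf' _ _ fun r _ => Finset.le_sup'_of_le _ (Finset.mem_Ici.mpr (le_refl j)) le_rfl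
  · -- limit at +∞
    rw [heqF]
    have h1 := tendsto_finset_inf'_aux (Finset.Iic j)
      (fun r y => (Finset.Ici j).sup' ⟨j, Finset.mem_Ici.mpr le_rfl⟩ (fun s => Frs r s y))
      (fun r => (Finset.Ici j).sup' ⟨j, Finset.mem_Ici.mpr le_rfl⟩ (fun _ => (1 : ℝ)))
      (fun r hr => tendsto_finset_sup'_aux _ _ _
        (fun s hs => hFrs_top r s (hle r (by exact hr) s hs)) _)
      ⟨j, Finset.mem_Iic.mpr le_rfl⟩
    convert h1 using 2
    symm
    apply le_antisymm
    · exact (Finset.inf'_le _ (Finset.mem_Iic.mpr le_rfl)).trans (Finset.sup'_le _ _ fun _ _ => le_rfl)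
    · exact Finset.le_inf' _ _ fun r _ => Finset.le_sup'_of_le _ (Finset.mem_Ici.mpr (le_refl j)) le_rfl
end

section
/- In the setting of isotonic quantile regression (Lemma 2.1), let ℓ_j = max_{r ≤ j} min_{s ≥ j} 𝔽̂_{rs}^{-1}(β) and u_j = min_{s ≥ j} max_{r ≤ j} 𝔽̂_{rs}^{-1}(β+) be the smallest and largest minimizers. Then for each j ∈ {1,...,m}, the open set {x_j} × (ℓ_j, u_j) contains no data point; i.e., there is no observation i with X_i = x_j and ℓ_j < Y_i < u_j. -/
/-- No data point lies in the open strip between the extremal isotonic quantile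
regression fits: for each j there is no observation i with X_i = x_j and ℓ_j < Y_i < u_j. -/
theorem stmt15 (n m : ℕ) (X Y : Fin n → ℝ) (x : Fin m → ℝ) (hx : StrictMono x)
    (hrange : ∀ i, ∃ j, X i = x j) (hsur : ∀ j, ∃ i, X i = x j)
    (β : ℝ) (hβ : β ∈ Set.Ioo (0 : ℝ) 1)
    (Frs : Fin m → Fin m → ℝ → ℝ)
    (hFrs : ∀ r s y, Frs r s y =
      ((Finset.univ.filter fun i => x r ≤ X i ∧ X i ≤ x s).card : ℝ)⁻¹ *
        ∑ i ∈ Finset.univ.filter (fun i => x r ≤ X i ∧ X i ≤ x s),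
          (if Y i ≤ y then (1 : ℝ) else 0))
    (ℓ u : Fin m → ℝ)
    (hℓ : ∀ j, ℓ j = (Finset.Iic j).sup' ⟨j, Finset.mem_Iic.mpr le_rfl⟩ fun r =>
      (Finset.Ici j).inf' ⟨j, Finset.mem_Ici.mpr le_rfl⟩ fun s =>
        sInf {y | β ≤ Frs r s y})
    (hu : ∀ j, u j = (Finset.Ici j).inf' ⟨j, Finset.mem_Ici.mpr le_rfl⟩ fun s =>
      (Finset.Iic j).sup' ⟨j, Finset.mem_Iic.mpr le_rfl⟩ fun r =>
        sInf {y | β < Frs r s y}) :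
    ∀ j : Fin m, ∀ i : Fin n, X i = x j → Y i ∉ Set.Ioo (ℓ j) (u j) := by
  intro j i0 hX0 hmem
  obtain ⟨hl, hu2⟩ := hmem
  have hxmono := hx.monotone
  -- nonempty windows
  have hWne : ∀ r s : Fin m, r ≤ s →
      (Finset.univ.filter fun i => x r ≤ X i ∧ X i ≤ x s).Nonempty := by
    intro r s hrs
    obtain ⟨i, hi⟩ := hsur r
    exact ⟨i, Finset.mem_filter.mpr ⟨Finset.mem_univ i,
      by rw [hi]; exact ⟨le_rfl, hxmono hrs⟩⟩⟩
  have hNpos : ∀ r s : Fin m, r ≤ s →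
      (0:ℝ) < ((Finset.univ.filter fun i => x r ≤ X i ∧ X i ≤ x s).card : ℝ) := by
    intro r s hrs
    exact_mod_cast Finset.card_pos.mpr (hWne r s hrs)
  -- the quantile sets are nonempty and bounded below
  have hSne : ∀ r s : Fin m, r ≤ s → {y | β ≤ Frs r s y}.Nonempty := by
    intro r s hrs
    refine ⟨(Finset.univ.filter fun i => x r ≤ X i ∧ X i ≤ x s).sup' (hWne r s hrs) Y, ?_⟩
    have hsum : (∑ i ∈ Finset.univ.filter (fun i => x r ≤ X i ∧ X i ≤ x s),
        (if Y i ≤ (Finset.univ.filter fun i => x r ≤ X i ∧ X i ≤ x s).sup' (hWne r s hrs) Y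
          then (1:ℝ) else 0))
        = ((Finset.univ.filter fun i => x r ≤ X i ∧ X i ≤ x s).card : ℝ) := by
      rw [Finset.sum_congr rfl (fun k hk => if_pos (Finset.le_sup' Y hk))]
      simp
    show β ≤ Frs r s _
    rw [hFrs, hsum, inv_mul_cancel₀ (ne_of_gt (hNpos r s hrs))]
    exact le_of_lt hβ.2
  have hSne' : ∀ r s : Fin m, r ≤ s → {y | β < Frs r s y}.Nonempty := by
    intro r s hrs
    refine ⟨(Finset.univ.filter fun i => x r ≤ X i ∧ X i ≤ x s).sup' (hWne r s hrs) Y, ?_⟩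
    have hsum : (∑ i ∈ Finset.univ.filter (fun i => x r ≤ X i ∧ X i ≤ x s),
        (if Y i ≤ (Finset.univ.filter fun i => x r ≤ X i ∧ X i ≤ x s).sup' (hWne r s hrs) Y
          then (1:ℝ) else 0))
        = ((Finset.univ.filter fun i => x r ≤ X i ∧ X i ≤ x s).card : ℝ) := by
      rw [Finset.sum_congr rfl (fun k hk => if_pos (Finset.le_sup' Y hk))]
      simp
    show β < Frs r s _
    rw [hFrs, hsum, inv_mul_cancel₀ (ne_of_gt (hNpos r s hrs))]
    exact hβ.2
  have hSbdd : ∀ r s : Fin m, r ≤ s → BddBelow {y | β ≤ Frs r s y} := by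
    intro r s hrs
    refine ⟨(Finset.univ.filter fun i => x r ≤ X i ∧ X i ≤ x s).inf' (hWne r s hrs) Y, ?_⟩
    intro z hz
    by_contra hc
    push_neg at hc
    have hzero : (∑ i ∈ Finset.univ.filter (fun i => x r ≤ X i ∧ X i ≤ x s),
        (if Y i ≤ z then (1:ℝ) else 0)) = 0 := by
      refine Finset.sum_eq_zero (fun k hk => ?_)
      rw [if_neg]
      exact not_le.mpr (lt_of_lt_of_le hc (Finset.inf'_le Y hk))
    have : β ≤ Frs r s z := hz
    rw [hFrs, hzero, mul_zero] at this
    exact absurd this (not_le.mpr hβ.1)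
  have hSbdd' : ∀ r s : Fin m, r ≤ s → BddBelow {y | β < Frs r s y} := by
    intro r s hrs
    have hsub : {y | β < Frs r s y} ⊆ {y | β ≤ Frs r s y} := fun y (hy : β < Frs r s y) => le_of_lt hy
    exact (hSbdd r s hrs).mono hsub
  -- splitting the windows at column j
  have hsplit_union : ∀ r s : Fin m, r ≤ j → j ≤ s →
      (Finset.univ.filter fun i => x r ≤ X i ∧ X i ≤ x j) ∪
        (Finset.univ.filter fun i => x j ≤ X i ∧ X i ≤ x s) =
        (Finset.univ.filter fun i => x r ≤ X i ∧ X i ≤ x s) := by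
    intro r s hrj hjs
    ext k
    simp only [Finset.mem_union, Finset.mem_filter, Finset.mem_univ, true_and]
    constructor
    · rintro (⟨h1, h2⟩ | ⟨h1, h2⟩)
      · exact ⟨h1, h2.trans (hxmono hjs)⟩
      · exact ⟨(hxmono hrj).trans h1, h2⟩
    · rintro ⟨h1, h2⟩
      rcases le_total (X k) (x j) with h | h
      · exact Or.inl ⟨h1, h⟩
      · exact Or.inr ⟨h, h2⟩
  have hsplit_inter : ∀ r s : Fin m, r ≤ j → j ≤ s →
      (Finset.univ.filter fun i => x r ≤ X i ∧ X i ≤ x j) ∩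
        (Finset.univ.filter fun i => x j ≤ X i ∧ X i ≤ x s) =
        (Finset.univ.filter fun i => x j ≤ X i ∧ X i ≤ x j) := by
    intro r s hrj hjs
    ext k
    simp only [Finset.mem_inter, Finset.mem_filter, Finset.mem_univ, true_and]
    constructor
    · rintro ⟨⟨h1, h2⟩, ⟨h3, h4⟩⟩
      exact ⟨h3, h2⟩
    · rintro ⟨h1, h2⟩
      exact ⟨⟨(hxmono hrj).trans h1, h2⟩, ⟨h1, h2.trans (hxmono hjs)⟩⟩
  -- the key quantity
  set D : Fin m → Fin m → ℝ := fun r s =>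
    (∑ k ∈ Finset.univ.filter (fun i => x r ≤ X i ∧ X i ≤ x s),
      (if Y k ≤ Y i0 then (1:ℝ) else 0)) -
      β * ((Finset.univ.filter fun i => x r ≤ X i ∧ X i ≤ x s).card : ℝ) with hD
  -- additivity of D
  have haddD : ∀ r s : Fin m, r ≤ j → j ≤ s → D r s + D j j = D r j + D j s := by
    intro r s hrj hjs
    have hun := hsplit_union r s hrj hjs
    have hin := hsplit_inter r s hrj hjs
    have hsum : (∑ k ∈ Finset.univ.filter (fun i => x r ≤ X i ∧ X i ≤ x s),
          (if Y k ≤ Y i0 then (1:ℝ) else 0)) +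
        (∑ k ∈ Finset.univ.filter (fun i => x j ≤ X i ∧ X i ≤ x j),
          (if Y k ≤ Y i0 then (1:ℝ) else 0)) =
        (∑ k ∈ Finset.univ.filter (fun i => x r ≤ X i ∧ X i ≤ x j),
          (if Y k ≤ Y i0 then (1:ℝ) else 0)) +
        (∑ k ∈ Finset.univ.filter (fun i => x j ≤ X i ∧ X i ≤ x s),
          (if Y k ≤ Y i0 then (1:ℝ) else 0)) := by
      rw [← hun, ← hin]
      exact Finset.sum_union_inter
    have hcard : ((Finset.univ.filter fun i => x r ≤ X i ∧ X i ≤ x s).card : ℝ) +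
        ((Finset.univ.filter fun i => x j ≤ X i ∧ X i ≤ x j).card : ℝ) =
        ((Finset.univ.filter fun i => x r ≤ X i ∧ X i ≤ x j).card : ℝ) +
        ((Finset.univ.filter fun i => x j ≤ X i ∧ X i ≤ x s).card : ℝ) := by
      rw [← hun, ← hin]
      exact_mod_cast Finset.card_union_add_card_inter _ _
    have hcard2 := congrArg (fun t : ℝ => β * t) hcard
    simp only [mul_add] at hcard2
    simp only [hD]
    linarith [hsum, hcard2]
  -- (A): for each r ≤ j there is s ≥ j with D r s > 0
  have hA : ∀ r : Fin m, r ≤ j → ∃ s : Fin m, j ≤ s ∧ 0 < D r s := by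
    intro r hrj
    rw [hℓ j] at hl
    have h1 := (Finset.sup'_lt_iff _).mp hl r (Finset.mem_Iic.mpr hrj)
    obtain ⟨s, hsmem, hs⟩ := (Finset.inf'_lt_iff _).mp h1
    have hjs : j ≤ s := Finset.mem_Ici.mp hsmem
    have hrs : r ≤ s := hrj.trans hjs
    obtain ⟨y, hyS, hyq⟩ := (csInf_lt_iff (hSbdd r s hrs) (hSne r s hrs)).mp hs
    have hy : β ≤ Frs r s y := hyS
    rw [hFrs] at hy
    have hN := hNpos r s hrs
    have hβN : β * ((Finset.univ.filter fun i => x r ≤ X i ∧ X i ≤ x s).card : ℝ) ≤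
        ∑ i ∈ Finset.univ.filter (fun i => x r ≤ X i ∧ X i ≤ x s),
          (if Y i ≤ y then (1:ℝ) else 0) := by
      have h2 := mul_le_mul_of_nonneg_left hy (le_of_lt hN)
      rw [← mul_assoc, mul_inv_cancel₀ (ne_of_gt hN), one_mul] at h2
      linarith
    have hi0mem : i0 ∈ Finset.univ.filter (fun i => x r ≤ X i ∧ X i ≤ x s) := by
      refine Finset.mem_filter.mpr ⟨Finset.mem_univ i0, ?_⟩
      rw [hX0]
      exact ⟨hxmono hrj, hxmono hjs⟩
    have hlt : (∑ i ∈ Finset.univ.filter (fun i => x r ≤ X i ∧ X i ≤ x s),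
          (if Y i ≤ y then (1:ℝ) else 0)) <
        ∑ i ∈ Finset.univ.filter (fun i => x r ≤ X i ∧ X i ≤ x s),
          (if Y i ≤ Y i0 then (1:ℝ) else 0) := by
      refine Finset.sum_lt_sum (fun k hk => ?_) ⟨i0, hi0mem, ?_⟩
      · split_ifs with h1 h2
        · exact le_rfl
        · exact absurd (h1.trans hyq.le) h2
        · norm_num
        · exact le_rfl
      · rw [if_neg (not_le.mpr hyq), if_pos le_rfl]
        norm_num
    refine ⟨s, hjs, ?_⟩
    simp only [hD]
    linarith
  -- (B): for each s ≥ j there is r ≤ j with D r s ≤ 0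
  have hB : ∀ s : Fin m, j ≤ s → ∃ r : Fin m, r ≤ j ∧ D r s ≤ 0 := by
    intro s hjs
    rw [hu j] at hu2
    have h1 := (Finset.lt_inf'_iff _).mp hu2 s (Finset.mem_Ici.mpr hjs)
    obtain ⟨r, hrmem, hr⟩ := (Finset.lt_sup'_iff _).mp h1
    have hrj : r ≤ j := Finset.mem_Iic.mp hrmem
    have hrs : r ≤ s := hrj.trans hjs
    have hnotmem : Y i0 ∉ {y | β < Frs r s y} := by
      intro hmem
      exact absurd (csInf_le (hSbdd' r s hrs) hmem) (not_le.mpr hr)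
    have hle : Frs r s (Y i0) ≤ β := not_lt.mp hnotmem
    rw [hFrs] at hle
    have hN := hNpos r s hrs
    have h2 := mul_le_mul_of_nonneg_left hle (le_of_lt hN)
    rw [← mul_assoc, mul_inv_cancel₀ (ne_of_gt hN), one_mul] at h2
    refine ⟨r, hrj, ?_⟩
    simp only [hD]
    linarith
  -- final max argument
  obtain ⟨s0, hs0mem, hs0max⟩ := (Finset.Ici j).exists_max_image (fun s => D j s)
    ⟨j, Finset.mem_Ici.mpr le_rfl⟩
  have hjs0 : j ≤ s0 := Finset.mem_Ici.mp hs0mem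
  obtain ⟨r1, hr1j, hDr1s0⟩ := hB s0 hjs0
  obtain ⟨s2, hjs2, hDr1s2⟩ := hA r1 hr1j
  have h1 := haddD r1 s0 hr1j hjs0
  have h2 := haddD r1 s2 hr1j hjs2
  have h3 := hs0max s2 (Finset.mem_Ici.mpr hjs2)
  linarith
end

section
/- Let x₁ < ... < x_m and weights w_j > 0; for each y let F̂_{x_j}(y) = min_{r ≤ j} max_{s ≥ j} 𝔽̂_{rs}(y) be the antitonic least-squares estimate, where 𝔽̂_{rs}(y) = w_{rs}^{-1} Σ_{k=r}^s w_k 𝔽̂_k(y). Then for every β ∈ (0,1) and every j: the minimal β-quantile of F̂_{x_j} equals the max-min of the minimal β-quantiles of the local empirical distributions, F̂_{x_j}^{-1}(β) = max_{r ≤ j} min_{s ≥ j} 𝔽̂_{rs}^{-1}(β); and the maximal β-quantile satisfies F̂_{x_j}^{-1}(β+) = min_{s ≥ j} max_{r ≤ j} 𝔽̂_{rs}^{-1}(β+). -/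
/-- A finite max-min/min-max swap lemma for strict inequalities. -/
theorem aux_swap {α : Type*} {R S : Finset α} (hR : R.Nonempty)
    (f g : α → ℝ) :
    (∀ r ∈ R, ∃ s ∈ S, f r < g s) ↔ (∃ s ∈ S, ∀ r ∈ R, f r < g s) := by
  constructor
  · intro h
    obtain ⟨r₀, hr₀, hmax⟩ := R.exists_max_image f hR
    obtain ⟨s, hs, hlt⟩ := h r₀ hr₀
    exact ⟨s, hs, fun r hr => lt_of_le_of_lt (hmax r hr) hlt⟩
  · rintro ⟨s, hs, h⟩ r hr
    exact ⟨s, hs, h r hr⟩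

/-- Quantiles of the antitonic least squares estimate are given by max-min / min-max
formulae of the quantiles of the local empirical distribution functions. -/
theorem stmt16 (n m : ℕ) (Y : Fin n → ℝ) (gp : Fin n → Fin m)
    (hg : ∀ j : Fin m, ∃ i, gp i = j)
    (w : Fin m → ℝ)
    (hw : ∀ j, w j = ((Finset.univ.filter fun i => gp i = j).card : ℝ))
    (Femp : Fin m → ℝ → ℝ)
    (hFemp : ∀ j y, Femp j y =
      (w j)⁻¹ * ∑ i ∈ Finset.univ.filter (fun i => gp i = j),
        (if Y i ≤ y then (1 : ℝ) else 0))
    (Frs : Fin m → Fin m → ℝ → ℝ)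
    (hFrs : ∀ r s y, Frs r s y =
      (∑ k ∈ Finset.Icc r s, w k)⁻¹ * ∑ k ∈ Finset.Icc r s, w k * Femp k y)
    (Fhat : Fin m → ℝ → ℝ)
    (hFhat : ∀ j y, Fhat j y =
      (Finset.Iic j).inf' ⟨j, Finset.mem_Iic.mpr le_rfl⟩ (fun r =>
        (Finset.Ici j).sup' ⟨j, Finset.mem_Ici.mpr le_rfl⟩ (fun s => Frs r s y)))
    (β : ℝ) (hβ : β ∈ Set.Ioo (0 : ℝ) 1) :
    ∀ j : Fin m,
      sInf {y | β ≤ Fhat j y} =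
        (Finset.Iic j).sup' ⟨j, Finset.mem_Iic.mpr le_rfl⟩ (fun r =>
          (Finset.Ici j).inf' ⟨j, Finset.mem_Ici.mpr le_rfl⟩ (fun s =>
            sInf {y | β ≤ Frs r s y})) ∧
      sInf {y | β < Fhat j y} =
        (Finset.Ici j).inf' ⟨j, Finset.mem_Ici.mpr le_rfl⟩ (fun s =>
          (Finset.Iic j).sup' ⟨j, Finset.mem_Iic.mpr le_rfl⟩ (fun r =>
            sInf {y | β < Frs r s y})) := by
  intro j
  obtain ⟨i₀, hi₀⟩ := hg j
  have hβ0 : (0:ℝ) < β := hβ.1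
  have hβ1 : β < 1 := hβ.2
  have hne : (Finset.univ : Finset (Fin n)).Nonempty := ⟨i₀, Finset.mem_univ _⟩
  set Ymin := Finset.univ.inf' hne Y with hYmin
  set Ymax := Finset.univ.sup' hne Y with hYmax
  -- positive weights
  have hwpos : ∀ k : Fin m, 0 < w k := by
    intro k
    rw [hw]
    obtain ⟨i, hi⟩ := hg k
    have hc : (Finset.univ.filter fun i => gp i = k).Nonempty :=
      ⟨i, by simp [hi]⟩
    exact_mod_cast Finset.card_pos.mpr hc
  -- Femp is monotone
  have hFempMono : ∀ k, Monotone (Femp k) := by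
    intro k a b hab
    rw [hFemp, hFemp]
    apply mul_le_mul_of_nonneg_left _ (inv_nonneg.mpr (hwpos k).le)
    apply Finset.sum_le_sum
    intro i _
    by_cases h : Y i ≤ a
    · simp [h, h.trans hab]
    · simp only [h, if_false]
      split <;> norm_num
  -- Femp = 1 above Ymax
  have hFempTop : ∀ k y, Ymax ≤ y → Femp k y = 1 := by
    intro k y hy
    rw [hFemp]
    have hsum : ∑ i ∈ Finset.univ.filter (fun i => gp i = k),
        (if Y i ≤ y then (1:ℝ) else 0) = w k := by
      rw [hw]
      have h1 : ∀ i ∈ Finset.univ.filter (fun i => gp i = k),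
          (if Y i ≤ y then (1:ℝ) else 0) = 1 := by
        intro i _
        have : Y i ≤ y := le_trans (Finset.le_sup' Y (Finset.mem_univ i)) hy
        simp [this]
      rw [Finset.sum_congr rfl h1, Finset.sum_const, nsmul_eq_mul, mul_one]
    rw [hsum, inv_mul_cancel₀ (hwpos k).ne']
  -- Femp = 0 below Ymin
  have hFempBot : ∀ k y, y < Ymin → Femp k y = 0 := by
    intro k y hy
    rw [hFemp]
    have hsum : ∑ i ∈ Finset.univ.filter (fun i => gp i = k),
        (if Y i ≤ y then (1:ℝ) else 0) = 0 := by
      apply Finset.sum_eq_zero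
      intro i _
      have : ¬ Y i ≤ y := by
        have : Ymin ≤ Y i := Finset.inf'_le Y (Finset.mem_univ i)
        intro h; exact absurd (h.trans_lt hy) (not_lt.mpr this)
      simp [this]
    rw [hsum, mul_zero]
  -- local right constancy of all Femp's
  have hstep : ∀ y : ℝ, ∃ ε > (0:ℝ), ∀ z, y ≤ z → z < y + ε → ∀ k, Femp k z = Femp k y := by
    intro y
    by_cases hcase : (Finset.univ.filter fun i => y < Y i).Nonempty
    · refine ⟨(Finset.univ.filter fun i => y < Y i).inf' hcase (fun i => Y i - y), ?_, ?_⟩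
      · rw [gt_iff_lt, Finset.lt_inf'_iff]
        intro i hi
        simp only [Finset.mem_filter] at hi
        linarith [hi.2]
      · intro z hz1 hz2 k
        rw [hFemp, hFemp]
        congr 1
        apply Finset.sum_congr rfl
        intro i _
        have : Y i ≤ z ↔ Y i ≤ y := by
          constructor
          · intro h
            by_contra hy
            push_neg at hy
            have hmem : i ∈ Finset.univ.filter fun i => y < Y i := by simp [hy]
            have : (Finset.univ.filter fun i => y < Y i).inf' hcase (fun i => Y i - y) ≤ Y i - y := Finset.inf'_le _ hmem
            linarith
          · intro h; exact h.trans hz1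
        simp [this]
    · refine ⟨1, one_pos, ?_⟩
      intro z hz1 hz2 k
      rw [hFemp, hFemp]
      congr 1
      apply Finset.sum_congr rfl
      intro i _
      have hYi : Y i ≤ y := by
        by_contra h
        push_neg at h
        exact hcase ⟨i, by simp [h]⟩
      simp [hYi, hYi.trans hz1]
  -- sums of weights are positive
  have hWpos : ∀ r s : Fin m, r ≤ s → 0 < ∑ k ∈ Finset.Icc r s, w k := by
    intro r s hrs
    apply Finset.sum_pos (fun k _ => hwpos k)
    exact ⟨r, Finset.mem_Icc.mpr ⟨le_rfl, hrs⟩⟩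
  -- Frs is monotone
  have hFrsMono : ∀ r s : Fin m, Monotone (Frs r s) := by
    intro r s a b hab
    rw [hFrs, hFrs]
    apply mul_le_mul_of_nonneg_left _ (inv_nonneg.mpr (Finset.sum_nonneg fun k _ => (hwpos k).le))
    apply Finset.sum_le_sum
    intro k _
    exact mul_le_mul_of_nonneg_left (hFempMono k hab) (hwpos k).le
  -- Frs = 1 above Ymax
  have hFrsTop : ∀ r s : Fin m, r ≤ s → ∀ y, Ymax ≤ y → Frs r s y = 1 := by
    intro r s hrs y hy
    rw [hFrs]
    have : ∑ k ∈ Finset.Icc r s, w k * Femp k y = ∑ k ∈ Finset.Icc r s, w k := by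
      apply Finset.sum_congr rfl
      intro k _
      rw [hFempTop k y hy, mul_one]
    rw [this, inv_mul_cancel₀ (hWpos r s hrs).ne']
  -- Frs = 0 below Ymin
  have hFrsBot : ∀ r s : Fin m, ∀ y, y < Ymin → Frs r s y = 0 := by
    intro r s y hy
    rw [hFrs]
    have : ∑ k ∈ Finset.Icc r s, w k * Femp k y = 0 := by
      apply Finset.sum_eq_zero
      intro k _
      rw [hFempBot k y hy, mul_zero]
    rw [this, mul_zero]
  -- the superlevel sets are closed right half-lines
  have hIciP : ∀ (P : ℝ → Prop), P 1 → ¬ P 0 → (∀ a b : ℝ, a ≤ b → P a → P b) →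
      ∀ r s : Fin m, r ≤ s → ∀ y : ℝ,
      (P (Frs r s y) ↔ sInf {y | P (Frs r s y)} ≤ y) := by
    intro P hP1 hP0 hPup r s hrs
    have hUne : Set.Nonempty {y | P (Frs r s y)} :=
      ⟨Ymax, by simp only [Set.mem_setOf_eq, hFrsTop r s hrs Ymax le_rfl]; exact hP1⟩
    have hUbdd : BddBelow {y | P (Frs r s y)} := by
      refine ⟨Ymin, fun y hy => ?_⟩
      by_contra hlt
      push_neg at hlt
      exact hP0 (hFrsBot r s y hlt ▸ hy)
    have hq : sInf {y | P (Frs r s y)} ∈ {y | P (Frs r s y)} := by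
      obtain ⟨ε, hε, hconst⟩ := hstep (sInf {y | P (Frs r s y)})
      obtain ⟨u, huU, hu⟩ := exists_lt_of_csInf_lt hUne
        (by linarith : sInf {y | P (Frs r s y)} < sInf {y | P (Frs r s y)} + ε)
      have h1 : sInf {y | P (Frs r s y)} ≤ u := csInf_le hUbdd huU
      have h2 : Frs r s u = Frs r s (sInf {y | P (Frs r s y)}) := by
        rw [hFrs, hFrs]
        congr 1
        apply Finset.sum_congr rfl
        intro k _
        rw [hconst u h1 hu k]
      simpa only [Set.mem_setOf_eq, h2] using huU
    intro y
    constructor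
    · exact fun hy => csInf_le hUbdd hy
    · intro hy
      exact hPup _ _ (hFrsMono r s hy) hq
  have hQ : ∀ r s : Fin m, r ≤ s → ∀ y,
      (β ≤ Frs r s y ↔ sInf {y | β ≤ Frs r s y} ≤ y) :=
    hIciP (fun v => β ≤ v) hβ1.le (not_le.mpr hβ0) (fun a b hab h => h.trans hab)
  have hP : ∀ r s : Fin m, r ≤ s → ∀ y,
      (β < Frs r s y ↔ sInf {y | β < Frs r s y} ≤ y) :=
    hIciP (fun v => β < v) hβ1 (lt_irrefl β ∘ (·.trans_le hβ0.le)) (fun a b hab h => h.trans_le hab)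
  -- the strict inequality swap via cumulative sums
  have hswap : ∀ y : ℝ,
      (∀ r ∈ Finset.Iic j, ∃ s ∈ Finset.Ici j, β < Frs r s y) ↔
      (∃ s ∈ Finset.Ici j, ∀ r ∈ Finset.Iic j, β < Frs r s y) := by
    intro y
    have hkey : ∀ r ∈ Finset.Iic j, ∀ s ∈ Finset.Ici j,
        (β < Frs r s y ↔
          (∑ k ∈ Finset.Iio r, w k * (Femp k y - β)) <
          (∑ k ∈ Finset.Iic s, w k * (Femp k y - β))) := by
      intro r hr s hs
      have hrs : r ≤ s := (Finset.mem_Iic.mp hr).trans (Finset.mem_Ici.mp hs)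
      have hsub : Finset.Iio r ⊆ Finset.Iic s := fun k hk =>
        Finset.mem_Iic.mpr (((Finset.mem_Iio.mp hk).le).trans hrs)
      have hsd : Finset.Iic s \ Finset.Iio r = Finset.Icc r s := by
        ext k
        simp only [Finset.mem_sdiff, Finset.mem_Iic, Finset.mem_Iio, Finset.mem_Icc, not_lt]
        tauto
      have hsplit : (∑ k ∈ Finset.Icc r s, w k * (Femp k y - β)) =
          (∑ k ∈ Finset.Iic s, w k * (Femp k y - β)) -
          (∑ k ∈ Finset.Iio r, w k * (Femp k y - β)) := by
        rw [eq_sub_iff_add_eq, ← hsd, Finset.sum_sdiff hsub]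
      have hW := hWpos r s hrs
      have hexp : (∑ k ∈ Finset.Icc r s, w k * (Femp k y - β)) =
          (∑ k ∈ Finset.Icc r s, w k * Femp k y) - β * ∑ k ∈ Finset.Icc r s, w k := by
        rw [Finset.mul_sum, ← Finset.sum_sub_distrib]
        apply Finset.sum_congr rfl
        intro k _
        ring
      rw [hFrs, inv_mul_eq_div, lt_div_iff₀ hW]
      constructor
      · intro h
        have : 0 < ∑ k ∈ Finset.Icc r s, w k * (Femp k y - β) := by
          rw [hexp]; linarith [mul_comm β (∑ k ∈ Finset.Icc r s, w k)]
        linarith [hsplit ▸ this]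
      · intro h
        have h0 : 0 < ∑ k ∈ Finset.Icc r s, w k * (Femp k y - β) := by
          rw [hsplit]; linarith
        rw [hexp] at h0
        linarith [mul_comm β (∑ k ∈ Finset.Icc r s, w k)]
    have hRne : (Finset.Iic j).Nonempty := ⟨j, Finset.mem_Iic.mpr le_rfl⟩
    constructor
    · intro h
      have h' : ∀ r ∈ Finset.Iic j, ∃ s ∈ Finset.Ici j,
          (∑ k ∈ Finset.Iio r, w k * (Femp k y - β)) <
          (∑ k ∈ Finset.Iic s, w k * (Femp k y - β)) := by
        intro r hr
        obtain ⟨s, hs, hlt⟩ := h r hr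
        exact ⟨s, hs, (hkey r hr s hs).mp hlt⟩
      obtain ⟨s, hs, h''⟩ := (aux_swap hRne _ _).mp h'
      exact ⟨s, hs, fun r hr => (hkey r hr s hs).mpr (h'' r hr)⟩
    · rintro ⟨s, hs, h⟩ r hr
      exact ⟨s, hs, h r hr⟩
  constructor
  · -- minimal quantile
    have hset : {y | β ≤ Fhat j y} = Set.Ici
        ((Finset.Iic j).sup' ⟨j, Finset.mem_Iic.mpr le_rfl⟩ (fun r =>
          (Finset.Ici j).inf' ⟨j, Finset.mem_Ici.mpr le_rfl⟩ (fun s =>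
            sInf {y | β ≤ Frs r s y}))) := by
      ext y
      simp only [Set.mem_setOf_eq, Set.mem_Ici]
      erw [hFhat, Finset.le_inf'_iff, Finset.sup'_le_iff]
      apply forall₂_congr
      intro r hr
      erw [Finset.le_sup'_iff, Finset.inf'_le_iff]
      exact exists_congr fun s => and_congr_right fun hs =>
        hQ r s ((Finset.mem_Iic.mp hr).trans (Finset.mem_Ici.mp hs)) y
    rw [hset, csInf_Ici]
  · -- maximal quantile
    have hset : {y | β < Fhat j y} = Set.Ici
        ((Finset.Ici j).inf' ⟨j, Finset.mem_Ici.mpr le_rfl⟩ (fun s =>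
          (Finset.Iic j).sup' ⟨j, Finset.mem_Iic.mpr le_rfl⟩ (fun r =>
            sInf {y | β < Frs r s y}))) := by
      ext y
      simp only [Set.mem_setOf_eq, Set.mem_Ici]
      erw [hFhat, Finset.lt_inf'_iff]
      have step1 : (∀ r ∈ Finset.Iic j,
          β < (Finset.Ici j).sup' ⟨j, Finset.mem_Ici.mpr le_rfl⟩ (fun s => Frs r s y)) ↔
          (∀ r ∈ Finset.Iic j, ∃ s ∈ Finset.Ici j, β < Frs r s y) := by
        apply forall₂_congr
        intro r hr
        exact Finset.lt_sup'_iff _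
      erw [step1, hswap y, Finset.inf'_le_iff]
      refine exists_congr fun s => and_congr_right fun hs => ?_
      erw [Finset.sup'_le_iff]
      apply forall₂_congr
      intro r hr
      exact hP r s ((Finset.mem_Iic.mp hr).trans (Finset.mem_Ici.mp hs)) y
    rw [hset, csInf_Ici]
end
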